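/- arXiv:1402.6224 — 4 statements merged into one kernel-verified Lean document; each statement's English description precedes it below -/
import Mathlib

section
/- Let Γ be a finite simplicial connected triangle-free graph with no separating vertices or edges, and let B be a set of essential vertices satisfying (B1) and (B2) as below. If y is an essential vertex of Γ and there exist three paths in Γ from y to vertices of B which pairwise intersect only at y, then y ∈ B. -/
open SimpleGraph

/-- The cycle graph on `n` vertices, realised on `ZMod n`. -/
def cycleG (n : ℕ) : SimpleGraph (ZMod n) := SimpleGraph.fromRel (fun a b => a = b + 1)

variable {V : Type}

/-- `x` and `y` can be joined by a walk in `G` avoiding the set `S` of vertices. -/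
def AvoidReach (G : SimpleGraph V) (S : Set V) (x y : V) : Prop :=
  ∃ p : G.Walk x y, ∀ v ∈ p.support, v ∉ S

/-- `G` has no separating vertex: removing any vertex leaves the rest connected. -/
def NoSepVertex (G : SimpleGraph V) : Prop :=
  ∀ c x y : V, x ≠ c → y ≠ c → AvoidReach G {c} x y

/-- `G` has no separating edge: removing any single edge (keeping its endpoints)
leaves the graph connected. -/
def NoSepEdge (G : SimpleGraph V) : Prop :=
  ∀ a b : V, G.Adj a b → (G.deleteEdges {s(a, b)}).Preconnected

/-- `{a, b}` is a cut pair of `G`: deleting both vertices disconnects the graph,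
with at least two components each containing a vertex. -/
def CutPair (G : SimpleGraph V) (a b : V) : Prop :=
  a ≠ b ∧ ∃ x y : V, x ∉ ({a, b} : Set V) ∧ y ∉ ({a, b} : Set V) ∧ ¬ AvoidReach G {a, b} x y

/-- Removing the two points `a, b` disconnects the geometric realisation `|Γ|`.
This happens either if the graph minus the two vertices is disconnected, or if
`a` and `b` are adjacent and some other vertex exists (the open edge `ab` is then
a separate component of `|Γ| ∖ {a,b}`). -/
def SeparatesReal (G : SimpleGraph V) (a b : V) : Prop :=
  a ≠ b ∧ ((G.Adj a b ∧ ∃ c : V, c ≠ a ∧ c ≠ b) ∨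
    ∃ x y : V, x ∉ ({a, b} : Set V) ∧ y ∉ ({a, b} : Set V) ∧ ¬ AvoidReach G {a, b} x y)

/-- A vertex is essential if it has valence at least `3`. -/
def Essential (G : SimpleGraph V) (v : V) : Prop := 3 ≤ (G.neighborSet v).ncard

/-- `Γ ∖ {a,b}` has at least three components (witnessed by three pairwise
non-reachable vertices). -/
def ThreeComponentsOff (G : SimpleGraph V) (a b : V) : Prop :=
  ∃ x y z : V, x ∉ ({a, b} : Set V) ∧ y ∉ ({a, b} : Set V) ∧ z ∉ ({a, b} : Set V) ∧
    ¬ AvoidReach G {a, b} x y ∧ ¬ AvoidReach G {a, b} y z ∧ ¬ AvoidReach G {a, b} x z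

/-- `G` contains no induced square (embedded 4-cycle with no chords). -/
def NoInducedSquare (G : SimpleGraph V) : Prop :=
  ¬ ∃ a b c d : V, a ≠ c ∧ b ≠ d ∧ G.Adj a b ∧ G.Adj b c ∧ G.Adj c d ∧ G.Adj d a ∧
    ¬ G.Adj a c ∧ ¬ G.Adj b d

/-- `G` is isomorphic to a cycle graph of length `n ≥ 5`. -/
def IsLongCycleGraph (G : SimpleGraph V) : Prop :=
  ∃ n : ℕ, 5 ≤ n ∧ Nonempty (G ≃g cycleG n)

/-- `G` is a single edge. -/
def IsSingleEdge (G : SimpleGraph V) : Prop :=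
  ∃ a b : V, a ≠ b ∧ G.Adj a b ∧ ∀ v : V, v = a ∨ v = b

/-- A subdivided copy of `K₄` inside `G`: four distinct branch vertices `b 0, …, b 3`
and six pairwise internally disjoint paths (branches) joining them. -/
structure SubdividedK4 (G : SimpleGraph V) where
  b : Fin 4 → V
  inj : Function.Injective b
  path : ∀ i j : Fin 4, i < j → G.Walk (b i) (b j)
  isPath : ∀ i j (h : i < j), (path i j h).IsPath
  endpts : ∀ i j (h : i < j) (k : Fin 4), b k ∈ (path i j h).support → k = i ∨ k = j
  disjoint : ∀ i j (h : i < j) i' j' (h' : i' < j'), (i, j) ≠ (i', j') →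
    ∀ v : V, v ∈ (path i j h).support → v ∈ (path i' j' h').support → v ∈ Set.range b

/-- The vertex set of a subdivided `K₄`. -/
def SubdividedK4.verts {G : SimpleGraph V} (K : SubdividedK4 G) : Set V :=
  {v | ∃ i j h, v ∈ (K.path i j h).support}

/-- All elements of `A` lie on a single branch of the subdivided `K₄`. -/
def SubdividedK4.OnSingleBranch {G : SimpleGraph V} (K : SubdividedK4 G) (A : Set V) : Prop :=
  ∃ i j h, ∀ a ∈ A, a ∈ (K.path i j h).support

/-- Condition (A1): every pair of distinct vertices of `A` separates `|Γ|`. -/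
def CondA1 (G : SimpleGraph V) (A : Set V) : Prop :=
  ∀ a ∈ A, ∀ b ∈ A, a ≠ b → SeparatesReal G a b

/-- Condition (A2): any subdivided `K₄` subgraph of `G` containing at least three
vertices of `A` has all vertices of `A` on a single branch. -/
def CondA2 (G : SimpleGraph V) (A : Set V) : Prop :=
  ∀ K : SubdividedK4 G, 3 ≤ (A ∩ K.verts).ncard → K.OnSingleBranch A

/-- Condition (A3): `A` is maximal among sets satisfying (A1) and (A2). -/
def CondA3 (G : SimpleGraph V) (A : Set V) : Prop :=
  ∀ A' : Set V, A ⊆ A' → CondA1 G A' → CondA2 G A' → A' = A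

/-- The special subgroup generated by `A` is infinite, i.e. `A` contains a pair of
non-adjacent vertices. -/
def InfiniteSpecial (G : SimpleGraph V) (A : Set V) : Prop :=
  ∃ a ∈ A, ∃ b ∈ A, a ≠ b ∧ ¬ G.Adj a b

/-- Condition (B1): for every pair `C = {c₁, c₂}` of essential vertices, `B ∖ C` is
contained in a single component of `Γ ∖ C`. -/
def CondB1 (G : SimpleGraph V) (B : Set V) : Prop :=
  ∀ c₁ c₂ : V, c₁ ≠ c₂ → Essential G c₁ → Essential G c₂ →
    ∀ x ∈ B, ∀ y ∈ B, x ∉ ({c₁, c₂} : Set V) → y ∉ ({c₁, c₂} : Set V) →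
      AvoidReach G {c₁, c₂} x y

/-- Condition (B2): `B` is maximal among sets of essential vertices satisfying (B1). -/
def CondB2 (G : SimpleGraph V) (B : Set V) : Prop :=
  ∀ B' : Set V, B ⊆ B' → (∀ b ∈ B', Essential G b) → CondB1 G B' → B' = B

/-- Condition (B3): `B` has at least four elements. -/
def CondB3 (B : Set V) : Prop := 4 ≤ B.ncard

/-- A branch of `G`: a path between two essential vertices with no essential
interior vertices. -/
def IsBranch (G : SimpleGraph V) {x y : V} (p : G.Walk x y) : Prop :=
  p.IsPath ∧ Essential G x ∧ Essential G y ∧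
    ∀ v ∈ p.support, v ≠ x → v ≠ y → ¬ Essential G v

/-- An induced generalised theta subgraph `Θ(n₁,n₂,n₃)` with `n₁,n₂,n₃ ≥ 1`:
two vertices joined by three internally disjoint paths, each of length at least two,
whose union is an induced subgraph of `G`. -/
def HasInducedTheta (G : SimpleGraph V) : Prop :=
  ∃ (a b : V) (p₁ p₂ p₃ : G.Walk a b),
    a ≠ b ∧ p₁.IsPath ∧ p₂.IsPath ∧ p₃.IsPath ∧
    2 ≤ p₁.length ∧ 2 ≤ p₂.length ∧ 2 ≤ p₃.length ∧
    (∀ v, v ∈ p₁.support → v ∈ p₂.support → v = a ∨ v = b) ∧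
    (∀ v, v ∈ p₁.support → v ∈ p₃.support → v = a ∨ v = b) ∧
    (∀ v, v ∈ p₂.support → v ∈ p₃.support → v = a ∨ v = b) ∧
    (∀ u v : V, (u ∈ p₁.support ∨ u ∈ p₂.support ∨ u ∈ p₃.support) →
      (v ∈ p₁.support ∨ v ∈ p₂.support ∨ v ∈ p₃.support) → G.Adj u v →
      s(u, v) ∈ p₁.edges ∨ s(u, v) ∈ p₂.edges ∨ s(u, v) ∈ p₃.edges)

/-- `b` is the next element of `A` after `a` in the positive direction of the
cyclic order given by the induced-cycle isomorphism `e`. -/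
def NextIn {G : SimpleGraph V} {C : Set V} {n : ℕ} (e : G.induce C ≃g cycleG n)
    (A : Set V) (a b : V) (ha : a ∈ C) (hb : b ∈ C) : Prop :=
  ∃ k : ℕ, 0 < k ∧ e ⟨b, hb⟩ = e ⟨a, ha⟩ + (k : ZMod n) ∧
    ∀ j : ℕ, 0 < j → j < k → ∀ c : C, (c : V) ∈ A → e c ≠ e ⟨a, ha⟩ + (j : ZMod n)

/-- `a` and `b` are consecutive in the cyclic order induced on `A` by the
induced-cycle isomorphism `e`. -/
def ConsecutiveIn {G : SimpleGraph V} {C : Set V} {n : ℕ} (e : G.induce C ≃g cycleG n)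
    (A : Set V) (a b : V) (ha : a ∈ C) (hb : b ∈ C) : Prop :=
  NextIn e A a b ha hb ∨ NextIn e A b a hb ha

lemma avoidReach_trans {G : SimpleGraph V} {S : Set V} {x y z : V}
    (h1 : AvoidReach G S x y) (h2 : AvoidReach G S y z) : AvoidReach G S x z := by
  obtain ⟨p, hp⟩ := h1
  obtain ⟨q, hq⟩ := h2
  exact ⟨p.append q, fun v hv => by
    rcases (SimpleGraph.Walk.mem_support_append_iff _ _).1 hv with h | h
    · exact hp v h
    · exact hq v h⟩

lemma avoidReach_symm {G : SimpleGraph V} {S : Set V} {x y : V}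
    (h : AvoidReach G S x y) : AvoidReach G S y x := by
  obtain ⟨p, hp⟩ := h
  exact ⟨p.reverse, fun v hv => hp v (by simpa using hv)⟩

/-- If an essential vertex `y` is joined to `B` by three paths which
pairwise intersect only at `y`, then `y ∈ B`, for `B` satisfying (B1) and (B2). -/
theorem three_paths_implies_mem (G : SimpleGraph V) [Fintype V]
    (hconn : G.Connected) (htf : G.CliqueFree 3)
    (hvtx : NoSepVertex G) (hedge : NoSepEdge G)
    (B : Set V) (hBess : ∀ b ∈ B, Essential G b)
    (hB1 : CondB1 G B) (hB2 : CondB2 G B)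
    (y : V) (hy : Essential G y)
    (b₁ b₂ b₃ : V) (hb₁ : b₁ ∈ B) (hb₂ : b₂ ∈ B) (hb₃ : b₃ ∈ B)
    (p₁ : G.Walk y b₁) (p₂ : G.Walk y b₂) (p₃ : G.Walk y b₃)
    (hp₁ : p₁.IsPath) (hp₂ : p₂.IsPath) (hp₃ : p₃.IsPath)
    (h12 : ∀ v, v ∈ p₁.support → v ∈ p₂.support → v = y)
    (h13 : ∀ v, v ∈ p₁.support → v ∈ p₃.support → v = y)
    (h23 : ∀ v, v ∈ p₂.support → v ∈ p₃.support → v = y) :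
    y ∈ B := by
  -- Key: from y we can reach some element of B avoiding any pair of vertices not containing y.
  have key : ∀ c₁ c₂ : V, y ∉ ({c₁, c₂} : Set V) →
      ∃ b' ∈ B, b' ∉ ({c₁, c₂} : Set V) ∧ AvoidReach G {c₁, c₂} y b' := by
    intro c₁ c₂ hyS
    by_cases h1 : c₁ ∉ p₁.support ∧ c₂ ∉ p₁.support
    · refine ⟨b₁, hb₁, ?_, ⟨p₁, ?_⟩⟩
      · rintro (rfl | rfl) <;> [exact h1.1 p₁.end_mem_support; exact h1.2 p₁.end_mem_support]
      · rintro v hv (rfl | rfl) <;> [exact h1.1 hv; exact h1.2 hv]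
    by_cases h2 : c₁ ∉ p₂.support ∧ c₂ ∉ p₂.support
    · refine ⟨b₂, hb₂, ?_, ⟨p₂, ?_⟩⟩
      · rintro (rfl | rfl) <;> [exact h2.1 p₂.end_mem_support; exact h2.2 p₂.end_mem_support]
      · rintro v hv (rfl | rfl) <;> [exact h2.1 hv; exact h2.2 hv]
    by_cases h3 : c₁ ∉ p₃.support ∧ c₂ ∉ p₃.support
    · refine ⟨b₃, hb₃, ?_, ⟨p₃, ?_⟩⟩
      · rintro (rfl | rfl) <;> [exact h3.1 p₃.end_mem_support; exact h3.2 p₃.end_mem_support]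
      · rintro v hv (rfl | rfl) <;> [exact h3.1 hv; exact h3.2 hv]
    exfalso
    push_neg at h1 h2 h3
    have hc₁ : y ≠ c₁ := fun h => hyS (by rw [h]; exact Set.mem_insert _ _)
    have hc₂ : y ≠ c₂ := fun h => hyS (by rw [h]; exact Set.mem_insert_of_mem _ rfl)
    by_cases a1 : c₁ ∈ p₁.support
    · by_cases a2 : c₁ ∈ p₂.support
      · exact hc₁ (h12 c₁ a1 a2).symm
      · by_cases a3 : c₁ ∈ p₃.support
        · exact hc₁ (h13 c₁ a1 a3).symm
        · exact hc₂ (h23 c₂ (h2 a2) (h3 a3)).symm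
    · by_cases a2 : c₁ ∈ p₂.support
      · by_cases a3 : c₁ ∈ p₃.support
        · exact hc₁ (h23 c₁ a2 a3).symm
        · exact hc₂ (h13 c₂ (h1 a1) (h3 a3)).symm
      · exact hc₂ (h12 c₂ (h1 a1) (h2 a2)).symm
  -- Now show B ∪ {y} satisfies the hypotheses of (B2).
  have hmax := hB2 (B ∪ {y}) Set.subset_union_left
    (by rintro b (hb | rfl); exacts [hBess b hb, hy])
    ?_
  · rw [← hmax]; exact Or.inr rfl
  · -- CondB1 for B ∪ {y}
    intro c₁ c₂ hne he₁ he₂ x hx z hz hxc hzc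
    have reachToB : ∀ w : V, w ∈ B ∪ {y} → w ∉ ({c₁, c₂} : Set V) →
        ∃ b' ∈ B, b' ∉ ({c₁, c₂} : Set V) ∧ AvoidReach G {c₁, c₂} w b' := by
      rintro w (hw | rfl) hwc
      · exact ⟨w, hw, hwc, ⟨SimpleGraph.Walk.nil, by rintro v hv; simp at hv; subst hv; exact hwc⟩⟩
      · exact key c₁ c₂ hwc
    obtain ⟨bx, hbx, hbxc, hrx⟩ := reachToB x hx hxc
    obtain ⟨bz, hbz, hbzc, hrz⟩ := reachToB z hz hzc
    exact avoidReach_trans hrx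
      (avoidReach_trans (hB1 c₁ c₂ hne he₁ he₂ bx hbx bz hbz hbxc hbzc)
        (avoidReach_symm hrz))
end

section
/- Let Γ be a finite simplicial connected triangle-free graph with no separating vertices or edges. Let A be a set of vertices with ⟨A⟩ infinite satisfying: (A1) every pair of vertices of A separates |Γ|; (A2) any subdivided-K₄ subgraph of Γ containing at least three vertices of A has all vertices of A on a single branch; (A3) A is maximal satisfying (A1) and (A2). Let B be a set of essential vertices satisfying (B1) (for every pair C of essential vertices, B∖C lies in one component of Γ∖C), (B2) maximality, and (B3) |B| ≥ 4. Then |A ∩ B| ≤ 2. -/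
open SimpleGraph

variable {V : Type}

section AuxSec
namespace Aux

variable {G : SimpleGraph V} {S : Set V} {x y z u v w : V}

lemma AR.symm (h : AvoidReach G S x y) : AvoidReach G S y x := by
  obtain ⟨p, hp⟩ := h
  exact ⟨p.reverse, fun v hv => hp v (by simpa [Walk.support_reverse] using hv)⟩

lemma AR.trans (h : AvoidReach G S x y) (h' : AvoidReach G S y z) : AvoidReach G S x z := by
  obtain ⟨p, hp⟩ := h; obtain ⟨q, hq⟩ := h'
  refine ⟨p.append q, fun v hv => ?_⟩
  rcases (Walk.mem_support_append_iff _ _).1 hv with h | h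
  · exact hp v h
  · exact hq v h

lemma AR.refl (h : x ∉ S) : AvoidReach G S x x :=
  ⟨Walk.nil, by simpa using h⟩

lemma AR.left_not (h : AvoidReach G S x y) : x ∉ S := by
  obtain ⟨p, hp⟩ := h; exact hp x p.start_mem_support

lemma AR.right_not (h : AvoidReach G S x y) : y ∉ S := by
  obtain ⟨p, hp⟩ := h; exact hp y p.end_mem_support

lemma AR.mono {S' : Set V} (hS : S' ⊆ S) (h : AvoidReach G S x y) : AvoidReach G S' x y := by
  obtain ⟨p, hp⟩ := h; exact ⟨p, fun v hv hv' => hp v hv (hS hv')⟩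

/-- Splitting a path's support at a vertex: the two halves share only that vertex. -/
lemma mem_take_drop [DecidableEq V] {p : G.Walk x y} (hp : p.IsPath) (h : u ∈ p.support)
    (hv1 : v ∈ (p.takeUntil u h).support) (hv2 : v ∈ (p.dropUntil u h).support) : v = u := by
  have hnd : p.support.Nodup := hp.support_nodup
  have hsp : p.support = (p.takeUntil u h).support ++ (p.dropUntil u h).support.tail := by
    conv_lhs => rw [← Walk.take_spec p h]
    exact Walk.support_append _ _
  rw [hsp] at hnd
  have hdisj := List.disjoint_of_nodup_append hnd
  rw [Walk.support_eq_cons (p.dropUntil u h)] at hv2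
  rcases List.mem_cons.mp hv2 with h' | h'
  · exact h'
  · exact absurd h' (hdisj hv1)

lemma end_not_mem_take [DecidableEq V] {p : G.Walk x y} (hp : p.IsPath) (h : u ∈ p.support)
    (hne : u ≠ y) : y ∉ (p.takeUntil u h).support := fun hy =>
  hne ((mem_take_drop hp h hy (Walk.end_mem_support _)).symm)

lemma start_not_mem_drop [DecidableEq V] {p : G.Walk x y} (hp : p.IsPath) (h : u ∈ p.support)
    (hne : u ≠ x) : x ∉ (p.dropUntil u h).support := fun hx =>
  hne ((mem_take_drop hp h (Walk.start_mem_support _) hx).symm)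

/-- Appending two paths that share only the junction vertex yields a path. -/
lemma IsPath.append' {p : G.Walk x y} {q : G.Walk y z} (hp : p.IsPath) (hq : q.IsPath)
    (hj : ∀ v, v ∈ p.support → v ∈ q.support → v = y) : (p.append q).IsPath := by
  rw [Walk.isPath_def, Walk.support_append]
  refine List.Nodup.append hp.support_nodup hq.support_nodup.tail (fun v hv hv' => ?_)
  have hvq : v ∈ q.support := List.mem_of_mem_tail hv'
  have : v = y := hj v hv hvq
  subst this
  have : q.support = v :: q.support.tail := Walk.support_eq_cons q
  have hnd := hq.support_nodup
  rw [this] at hnd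
  exact (List.nodup_cons.mp hnd).1 hv'

/-- First vertex on a walk satisfying `P`, together with the corresponding splitting. -/
lemma exists_first {x' y' : V} (p : G.Walk x' y') (P : V → Prop) :
    P y' → ∃ (u : V) (q : G.Walk x' u) (r : G.Walk u y'), P u ∧
      (∀ v ∈ q.support, v ≠ u → ¬ P v) ∧ q.append r = p := by
  induction p with
  | nil => intro hy; exact ⟨_, Walk.nil, Walk.nil, hy, by simp, rfl⟩
  | @cons a b' c' h p ih =>
    intro hy
    by_cases hP : P a
    · exact ⟨a, Walk.nil, Walk.cons h p, hP, by simp, rfl⟩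
    · obtain ⟨u, q, r, h1, h2, h3⟩ := ih hy
      refine ⟨u, Walk.cons h q, r, h1, ?_, by simp [h3]⟩
      intro v hv hvu
      rw [Walk.support_cons] at hv
      rcases List.mem_cons.mp hv with rfl | hv'
      · exact hP
      · exact h2 v hv' hvu

/-- From a walk avoiding `S`, reach any support vertex avoiding `S`. -/
lemma avoid_of_mem (p : G.Walk x y) (hp : ∀ v ∈ p.support, v ∉ S) (hv : v ∈ p.support) :
    AvoidReach G S x v := by
  classical
  exact ⟨p.takeUntil v hv, fun w hw => hp w (Walk.support_takeUntil_subset _ _ hw)⟩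

/-- From a path avoiding `S`, reach any interior vertex while additionally avoiding
the far endpoint. -/
lemma avoid_insert_end (p : G.Walk x y) (hp : p.IsPath) (hS : ∀ v ∈ p.support, v ∉ S)
    (hv : v ∈ p.support) (hvy : v ≠ y) : AvoidReach G (insert y S) x v := by
  classical
  refine ⟨p.takeUntil v hv, fun w hw => ?_⟩
  intro hmem
  rcases Set.mem_insert_iff.mp hmem with rfl | hws
  · exact end_not_mem_take hp hv hvy hw
  · exact hS w (Walk.support_takeUntil_subset _ _ hw) hws

lemma avoid_insert_start (p : G.Walk x y) (hp : p.IsPath) (hS : ∀ v ∈ p.support, v ∉ S)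
    (hv : v ∈ p.support) (hvx : v ≠ x) : AvoidReach G (insert x S) v y := by
  classical
  refine ⟨p.dropUntil v hv, fun w hw => ?_⟩
  intro hmem
  rcases Set.mem_insert_iff.mp hmem with rfl | hws
  · exact start_not_mem_drop hp hv hvx hw
  · exact hS w (Walk.support_dropUntil_subset _ _ hw) hws

end Aux

namespace Aux
variable {G : SimpleGraph V}

lemma mem_rev {x y v : V} {w : G.Walk x y} : v ∈ w.reverse.support ↔ v ∈ w.support := by
  simp [Walk.support_reverse]

lemma tripod {d a b c : V} (p : G.Walk d a) (q : G.Walk d b) (r : G.Walk d c)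
    (hp : p.IsPath) (hq : q.IsPath) (hr : r.IsPath)
    (haq : a ∉ q.support) (har : a ∉ r.support)
    (hbp : b ∉ p.support) (hbr : b ∉ r.support)
    (hcp : c ∉ p.support) (hcq : c ∉ q.support) :
    ∃ (t : V) (Ra : G.Walk t a) (Rb : G.Walk t b) (Rc : G.Walk t c),
      Ra.IsPath ∧ Rb.IsPath ∧ Rc.IsPath ∧ t ≠ a ∧ t ≠ b ∧ t ≠ c ∧
      (∀ v, v ∈ Ra.support → v ∈ Rb.support → v = t) ∧
      (∀ v, v ∈ Ra.support → v ∈ Rc.support → v = t) ∧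
      (∀ v, v ∈ Rb.support → v ∈ Rc.support → v = t) ∧
      (∀ v ∈ Ra.support, v ∈ p.support ∨ v ∈ q.support ∨ v ∈ r.support) ∧
      (∀ v ∈ Rb.support, v ∈ p.support ∨ v ∈ q.support ∨ v ∈ r.support) ∧
      (∀ v ∈ Rc.support, v ∈ p.support ∨ v ∈ q.support ∨ v ∈ r.support) := by
  classical
  obtain ⟨s, q1, q2, hsP, hq1first, hq1split⟩ :=
    exists_first q.reverse (fun v => v ∈ p.support) p.start_mem_support
  have hq1path : q1.IsPath := by
    have h := hq.reverse; rw [← hq1split] at h; exact h.of_append_left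
  have hq1sub : ∀ v ∈ q1.support, v ∈ q.support := by
    intro v hv
    have : v ∈ (q1.append q2).support := Walk.subset_support_append_left _ _ hv
    rw [hq1split] at this; exact mem_rev.mp this
  have hq1p : ∀ v, v ∈ q1.support → v ∈ p.support → v = s := by
    intro v hv hvp; by_contra h; exact hq1first v hv h hvp
  obtain ⟨u, r1, r2, huP, hr1first, hr1split⟩ :=
    exists_first r.reverse (fun v => v ∈ p.support ∨ v ∈ q1.support)
      (Or.inl p.start_mem_support)
  have hr1path : r1.IsPath := by
    have h := hr.reverse; rw [← hr1split] at h; exact h.of_append_left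
  have hr1sub : ∀ v ∈ r1.support, v ∈ r.support := by
    intro v hv
    have : v ∈ (r1.append r2).support := Walk.subset_support_append_left _ _ hv
    rw [hr1split] at this; exact mem_rev.mp this
  have hr1pq : ∀ v, v ∈ r1.support → (v ∈ p.support ∨ v ∈ q1.support) → v = u := by
    intro v hv hvp; by_contra h; exact hr1first v hv h hvp
  have hu_r : u ∈ r1.support := r1.end_mem_support
  have hs_q1 : s ∈ q1.support := q1.end_mem_support
  by_cases hup : u ∈ p.support
  · by_cases hud : u ∈ (p.dropUntil s hsP).support
    · -- case 2a : center u on the trunk after s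
      set p2 := p.dropUntil s hsP with hp2def
      have hp2 : p2.IsPath := hp.dropUntil hsP
      have hp2sub : ∀ v ∈ p2.support, v ∈ p.support :=
        fun v hv => Walk.support_dropUntil_subset _ _ hv
      refine ⟨u, p2.dropUntil u hud, ((p2.takeUntil u hud).reverse.append q1.reverse),
        r1.reverse, hp2.dropUntil hud, ?_, hr1path.reverse, ?_, ?_, ?_, ?_, ?_, ?_, ?_, ?_, ?_⟩
      · refine IsPath.append' (hp2.takeUntil hud).reverse hq1path.reverse ?_
        intro v hv hv'
        exact hq1p v (mem_rev.mp hv')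
          (hp2sub v (Walk.support_takeUntil_subset _ _ (mem_rev.mp hv)))
      · exact fun h => (har (h ▸ hr1sub u hu_r)).elim
      · exact fun h => (hbr (h ▸ hr1sub u hu_r)).elim
      · exact fun h => (hcp (h ▸ hup)).elim
      · -- Ra ∩ Rb
        intro v hva hvb
        rcases (Walk.mem_support_append_iff _ _).mp hvb with hvb | hvb
        · exact mem_take_drop hp2 hud (mem_rev.mp hvb) hva
        · have hvs : v = s := hq1p v (mem_rev.mp hvb)
            (hp2sub v (Walk.support_dropUntil_subset _ _ hva))
          by_cases hsu : u = s
          · exact hvs.trans hsu.symm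
          · have : s ∈ (p2.dropUntil u hud).support := by rwa [hvs] at hva
            exact absurd this (start_not_mem_drop hp2 hud hsu)
      · -- Ra ∩ Rc
        intro v hva hvc
        exact hr1pq v (mem_rev.mp hvc)
          (Or.inl (hp2sub v (Walk.support_dropUntil_subset _ _ hva)))
      · -- Rb ∩ Rc
        intro v hvb hvc
        rcases (Walk.mem_support_append_iff _ _).mp hvb with hvb | hvb
        · exact hr1pq v (mem_rev.mp hvc)
            (Or.inl (hp2sub v (Walk.support_takeUntil_subset _ _ (mem_rev.mp hvb))))
        · exact hr1pq v (mem_rev.mp hvc) (Or.inr (mem_rev.mp hvb))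
      · intro v hv
        exact Or.inl (hp2sub v (Walk.support_dropUntil_subset _ _ hv))
      · intro v hv
        rcases (Walk.mem_support_append_iff _ _).mp hv with hv | hv
        · exact Or.inl (hp2sub v (Walk.support_takeUntil_subset _ _ (mem_rev.mp hv)))
        · exact Or.inr (Or.inl (hq1sub v (mem_rev.mp hv)))
      · intro v hv
        exact Or.inr (Or.inr (hr1sub v (mem_rev.mp hv)))
    · -- case 2b : center s
      have hut : u ∈ (p.takeUntil s hsP).support := by
        have := hup
        rw [← Walk.take_spec p hsP, Walk.mem_support_append_iff] at this
        exact this.resolve_right hud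
      set p1 := p.takeUntil s hsP with hp1def
      have hp1 : p1.IsPath := hp.takeUntil hsP
      have hp1sub : ∀ v ∈ p1.support, v ∈ p.support :=
        fun v hv => Walk.support_takeUntil_subset _ _ hv
      refine ⟨s, p.dropUntil s hsP, q1.reverse,
        ((p1.dropUntil u hut).reverse.append r1.reverse),
        hp.dropUntil hsP, hq1path.reverse, ?_, ?_, ?_, ?_, ?_, ?_, ?_, ?_, ?_, ?_⟩
      · refine IsPath.append' (hp1.dropUntil hut).reverse hr1path.reverse ?_
        intro v hv hv'
        exact hr1pq v (mem_rev.mp hv')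
          (Or.inl (hp1sub v (Walk.support_dropUntil_subset _ _ (mem_rev.mp hv))))
      · exact fun h => (haq (h ▸ hq1sub s hs_q1)).elim
      · exact fun h => (hbp (h ▸ hsP)).elim
      · exact fun h => (hcp (h ▸ hsP)).elim
      · -- Ra ∩ Rb
        intro v hva hvb
        exact hq1p v (mem_rev.mp hvb) (Walk.support_dropUntil_subset _ _ hva)
      · -- Ra ∩ Rc
        intro v hva hvc
        rcases (Walk.mem_support_append_iff _ _).mp hvc with hvc | hvc
        · exact (mem_take_drop hp hsP
            (Walk.support_dropUntil_subset _ _ (mem_rev.mp hvc)) hva)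
        · have : v = u := hr1pq v (mem_rev.mp hvc)
            (Or.inl (Walk.support_dropUntil_subset _ _ hva))
          subst this
          exact absurd hva hud
      · -- Rb ∩ Rc
        intro v hvb hvc
        rcases (Walk.mem_support_append_iff _ _).mp hvc with hvc | hvc
        · exact hq1p v (mem_rev.mp hvb)
            (hp1sub v (Walk.support_dropUntil_subset _ _ (mem_rev.mp hvc)))
        · have hvu : v = u := hr1pq v (mem_rev.mp hvc) (Or.inr (mem_rev.mp hvb))
          subst hvu
          exact hq1p v (mem_rev.mp hvb) hup
      · intro v hv
        exact Or.inl (Walk.support_dropUntil_subset _ _ hv)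
      · intro v hv
        exact Or.inr (Or.inl (hq1sub v (mem_rev.mp hv)))
      · intro v hv
        rcases (Walk.mem_support_append_iff _ _).mp hv with hv | hv
        · exact Or.inl (hp1sub v (Walk.support_dropUntil_subset _ _ (mem_rev.mp hv)))
        · exact Or.inr (Or.inr (hr1sub v (mem_rev.mp hv)))
  · -- case 1 : center u on the b-leg
    have huq : u ∈ q1.support := huP.resolve_left hup
    refine ⟨u, ((q1.dropUntil u huq).append (p.dropUntil s hsP)),
      (q1.takeUntil u huq).reverse, r1.reverse,
      ?_, (hq1path.takeUntil huq).reverse, hr1path.reverse, ?_, ?_, ?_, ?_, ?_, ?_, ?_, ?_, ?_⟩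
    · refine IsPath.append' (hq1path.dropUntil huq) (hp.dropUntil hsP) ?_
      intro v hv hv'
      exact hq1p v (Walk.support_dropUntil_subset _ _ hv)
        (Walk.support_dropUntil_subset _ _ hv')
    · exact fun h => (har (h ▸ hr1sub u hu_r)).elim
    · exact fun h => (hbr (h ▸ hr1sub u hu_r)).elim
    · exact fun h => (hcq (h ▸ hq1sub u huq)).elim
    · -- Ra ∩ Rb
      intro v hva hvb
      rcases (Walk.mem_support_append_iff _ _).mp hva with hva | hva
      · exact (mem_take_drop hq1path huq (mem_rev.mp hvb) hva)
      · have hvs : v = s := hq1p v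
          (Walk.support_takeUntil_subset _ _ (mem_rev.mp hvb))
          (Walk.support_dropUntil_subset _ _ hva)
        have h2 : s ∈ (q1.takeUntil u huq).support := by
          have := mem_rev.mp hvb; rwa [hvs] at this
        have : s = u := mem_take_drop hq1path huq h2 (q1.dropUntil u huq).end_mem_support
        exact hvs.trans this
    · -- Ra ∩ Rc
      intro v hva hvc
      rcases (Walk.mem_support_append_iff _ _).mp hva with hva | hva
      · exact hr1pq v (mem_rev.mp hvc) (Or.inr (Walk.support_dropUntil_subset _ _ hva))
      · exact hr1pq v (mem_rev.mp hvc) (Or.inl (Walk.support_dropUntil_subset _ _ hva))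
    · -- Rb ∩ Rc
      intro v hvb hvc
      exact hr1pq v (mem_rev.mp hvc)
        (Or.inr (Walk.support_takeUntil_subset _ _ (mem_rev.mp hvb)))
    · intro v hv
      rcases (Walk.mem_support_append_iff _ _).mp hv with hv | hv
      · exact Or.inr (Or.inl (hq1sub v (Walk.support_dropUntil_subset _ _ hv)))
      · exact Or.inl (Walk.support_dropUntil_subset _ _ hv)
    · intro v hv
      exact Or.inr (Or.inl (hq1sub v (Walk.support_takeUntil_subset _ _ (mem_rev.mp hv))))
    · intro v hv
      exact Or.inr (Or.inr (hr1sub v (mem_rev.mp hv)))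

end Aux

namespace Aux
variable {G : SimpleGraph V}

lemma pair_swap {x y a b : V} (h : AvoidReach G {y, x} a b) : AvoidReach G {x, y} a b := by
  rwa [Set.pair_comm] at h

lemma branch_of_cut (hns : NoSepVertex G) {x y u : V} (hxy : x ≠ y) (hux : u ≠ x)
    (huy : u ≠ y) :
    ∃ π : G.Walk x y, π.IsPath ∧ ∀ v ∈ π.support, v ≠ x → v ≠ y →
      (AvoidReach G {x, y} v u ∧
       ∀ w, w ≠ x → w ≠ y → ¬ AvoidReach G {x, y} u w →
         AvoidReach G {x, w} v y ∧ AvoidReach G {y, w} v x) := by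
  classical
  obtain ⟨ω0, hω0⟩ := hns y u x huy hxy
  obtain ⟨ω0', hω0'⟩ := hns x u y hux (Ne.symm hxy)
  set ω := ω0.bypass with hωdef
  set ω' := ω0'.bypass with hω'def
  have hωP : ω.IsPath := Walk.bypass_isPath _
  have hω'P : ω'.IsPath := Walk.bypass_isPath _
  have hωy : ∀ v ∈ ω.support, v ≠ y := fun v hv =>
    fun h => hω0 v (Walk.support_bypass_subset _ hv) (by simp [h])
  have hω'x : ∀ v ∈ ω'.support, v ≠ x := fun v hv =>
    fun h => hω0' v (Walk.support_bypass_subset _ hv) (by simp [h])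
  -- reach from u to any non-final vertex of ω avoiding both x and y
  have Hω : ∀ v ∈ ω.support, v ≠ x → AvoidReach G {x, y} u v := by
    intro v hv hvx
    exact avoid_insert_end ω hωP (fun z hz => by simpa using hωy z hz) hv hvx
  have Hω' : ∀ v ∈ ω'.support, v ≠ y → AvoidReach G {x, y} u v := by
    intro v hv hvy
    exact pair_swap
      (avoid_insert_end ω' hω'P (fun z hz => by simpa using hω'x z hz) hv hvy)
  set χ := ω.reverse.append ω' with hχdef
  refine ⟨χ.bypass, Walk.bypass_isPath _, ?_⟩
  intro v hv hvx hvy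
  have hvχ : v ∈ χ.support := Walk.support_bypass_subset _ hv
  rw [hχdef, Walk.mem_support_append_iff] at hvχ
  have hvχ' : v ∈ ω.support ∨ v ∈ ω'.support := by
    rcases hvχ with h | h
    · exact Or.inl (mem_rev.mp h)
    · exact Or.inr h
  have fact1 : AvoidReach G {x, y} v u := by
    rcases hvχ' with h | h
    · exact AR.symm (Hω v h hvx)
    · exact AR.symm (Hω' v h hvy)
  refine ⟨fact1, ?_⟩
  intro w hwx hwy hwreach
  have hwω : w ∉ ω.support := fun hw => hwreach (Hω w hw hwx)
  have hwω' : w ∉ ω'.support := fun hw => hwreach (Hω' w hw hwy)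
  rcases hvχ' with h | h
  · constructor
    · -- v → u → y avoiding x, w
      refine ⟨(ω.takeUntil v h).reverse.append ω', ?_⟩
      intro z hz
      rw [Walk.mem_support_append_iff] at hz
      rcases hz with hz | hz
      · have hz' := mem_rev.mp hz
        have hzx : z ≠ x := fun hzx => (end_not_mem_take hωP h hvx) (hzx ▸ hz')
        have hzw : z ≠ w := fun hzw => hwω (hzw ▸ (Walk.support_takeUntil_subset _ _ hz'))
        simp [hzx, hzw]
      · have hzx := hω'x z hz
        have hzw : z ≠ w := fun hzw => hwω' (hzw ▸ hz)
        simp [hzx, hzw]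
    · -- v → x along ω avoiding y, w
      refine ⟨ω.dropUntil v h, ?_⟩
      intro z hz
      have hz' := Walk.support_dropUntil_subset _ _ hz
      have hzy := hωy z hz'
      have hzw : z ≠ w := fun hzw => hwω (hzw ▸ hz')
      simp [hzy, hzw]
  · constructor
    · -- v → y along ω' avoiding x, w
      refine ⟨ω'.dropUntil v h, ?_⟩
      intro z hz
      have hz' := Walk.support_dropUntil_subset _ _ hz
      have hzx := hω'x z hz'
      have hzw : z ≠ w := fun hzw => hwω' (hzw ▸ hz')
      simp [hzx, hzw]
    · -- v → u → x avoiding y, w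
      refine ⟨(ω'.takeUntil v h).reverse.append ω, ?_⟩
      intro z hz
      rw [Walk.mem_support_append_iff] at hz
      rcases hz with hz | hz
      · have hz' := mem_rev.mp hz
        have hzy : z ≠ y := fun hzy => (end_not_mem_take hω'P h hvy) (hzy ▸ hz')
        have hzw : z ≠ w := fun hzw => hwω' (hzw ▸ (Walk.support_takeUntil_subset _ _ hz'))
        simp [hzy, hzw]
      · have hzy := hωy z hz
        have hzw : z ≠ w := fun hzw => hwω (hzw ▸ hz)
        simp [hzy, hzw]

end Aux

namespace Aux
variable {G : SimpleGraph V}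

def mk4 (a b c t : V)
    (hab : a ≠ b) (hac : a ≠ c) (hat : a ≠ t) (hbc : b ≠ c) (hbt : b ≠ t) (hct : c ≠ t)
    (p01 : G.Walk a b) (p02 : G.Walk a c) (p03 : G.Walk a t)
    (p12 : G.Walk b c) (p13 : G.Walk b t) (p23 : G.Walk c t)
    (h01 : p01.IsPath) (h02 : p02.IsPath) (h03 : p03.IsPath)
    (h12 : p12.IsPath) (h13 : p13.IsPath) (h23 : p23.IsPath)
    (e01c : c ∉ p01.support) (e01t : t ∉ p01.support)
    (e02b : b ∉ p02.support) (e02t : t ∉ p02.support)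
    (e03b : b ∉ p03.support) (e03c : c ∉ p03.support)
    (e12a : a ∉ p12.support) (e12t : t ∉ p12.support)
    (e13a : a ∉ p13.support) (e13c : c ∉ p13.support)
    (e23a : a ∉ p23.support) (e23b : b ∉ p23.support)
    (R : Set V) (hR : R = {a, b, c, t})
    (d1 : ∀ v, v ∈ p01.support → v ∈ p02.support → v ∈ R)
    (d2 : ∀ v, v ∈ p01.support → v ∈ p03.support → v ∈ R)
    (d3 : ∀ v, v ∈ p01.support → v ∈ p12.support → v ∈ R)
    (d4 : ∀ v, v ∈ p01.support → v ∈ p13.support → v ∈ R)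
    (d5 : ∀ v, v ∈ p01.support → v ∈ p23.support → v ∈ R)
    (d6 : ∀ v, v ∈ p02.support → v ∈ p03.support → v ∈ R)
    (d7 : ∀ v, v ∈ p02.support → v ∈ p12.support → v ∈ R)
    (d8 : ∀ v, v ∈ p02.support → v ∈ p13.support → v ∈ R)
    (d9 : ∀ v, v ∈ p02.support → v ∈ p23.support → v ∈ R)
    (d10 : ∀ v, v ∈ p03.support → v ∈ p12.support → v ∈ R)
    (d11 : ∀ v, v ∈ p03.support → v ∈ p13.support → v ∈ R)
    (d12 : ∀ v, v ∈ p03.support → v ∈ p23.support → v ∈ R)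
    (d13 : ∀ v, v ∈ p12.support → v ∈ p13.support → v ∈ R)
    (d14 : ∀ v, v ∈ p12.support → v ∈ p23.support → v ∈ R)
    (d15 : ∀ v, v ∈ p13.support → v ∈ p23.support → v ∈ R) :
    SubdividedK4 G where
  b := ![a, b, c, t]
  inj := by
    intro i j hij
    fin_cases i <;> fin_cases j <;>
      simp only [Matrix.cons_val_zero, Matrix.cons_val_one, Matrix.head_cons,
        Matrix.cons_val_two, Matrix.tail_cons, Matrix.cons_val_three,
        Matrix.cons_val_fin_one] at hij <;>
      first
        | rfl
        | exact absurd hij (by tauto)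
  path := fun i j h =>
    match i, j, h with
    | ⟨0,_⟩, ⟨1,_⟩, _ => p01
    | ⟨0,_⟩, ⟨2,_⟩, _ => p02
    | ⟨0,_⟩, ⟨3,_⟩, _ => p03
    | ⟨1,_⟩, ⟨2,_⟩, _ => p12
    | ⟨1,_⟩, ⟨3,_⟩, _ => p13
    | ⟨2,_⟩, ⟨3,_⟩, _ => p23
    | ⟨0,_⟩, ⟨0,_⟩, h => absurd h (by simp [Fin.mk_lt_mk])
    | ⟨1,_⟩, ⟨0,_⟩, h => absurd h (by simp [Fin.mk_lt_mk])
    | ⟨1,_⟩, ⟨1,_⟩, h => absurd h (by simp [Fin.mk_lt_mk])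
    | ⟨2,_⟩, ⟨0,_⟩, h => absurd h (by simp [Fin.mk_lt_mk])
    | ⟨2,_⟩, ⟨1,_⟩, h => absurd h (by simp [Fin.mk_lt_mk])
    | ⟨2,_⟩, ⟨2,_⟩, h => absurd h (by simp [Fin.mk_lt_mk])
    | ⟨3,_⟩, ⟨0,_⟩, h => absurd h (by simp [Fin.mk_lt_mk])
    | ⟨3,_⟩, ⟨1,_⟩, h => absurd h (by simp [Fin.mk_lt_mk])
    | ⟨3,_⟩, ⟨2,_⟩, h => absurd h (by simp [Fin.mk_lt_mk])
    | ⟨3,_⟩, ⟨3,_⟩, h => absurd h (by simp [Fin.mk_lt_mk])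
    | ⟨n+4, hn⟩, _, _ => absurd hn (by omega)
    | _, ⟨n+4, hn⟩, _ => absurd hn (by omega)
  isPath := by
    intro i j h
    fin_cases i <;> fin_cases j <;>
      first
        | exact absurd h (by decide)
        | exact h01 | exact h02 | exact h03 | exact h12 | exact h13 | exact h23
  endpts := by
    intro i j h k hk
    fin_cases i <;> fin_cases j <;>
      first
        | exact absurd h (by decide)
        | (fin_cases k <;>
            first
              | exact Or.inl rfl
              | exact Or.inr rfl
              | exact absurd hk e01c | exact absurd hk e01t
              | exact absurd hk e02b | exact absurd hk e02t
              | exact absurd hk e03b | exact absurd hk e03c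
              | exact absurd hk e12a | exact absurd hk e12t
              | exact absurd hk e13a | exact absurd hk e13c
              | exact absurd hk e23a | exact absurd hk e23b)
  disjoint := by
    intro i j h i' j' h' hne v hv hv'
    have hrange : R ⊆ Set.range ![a, b, c, t] := by
      rw [hR]
      intro z hz
      rcases hz with rfl | rfl | rfl | rfl
      · exact ⟨0, rfl⟩
      · exact ⟨1, rfl⟩
      · exact ⟨2, rfl⟩
      · exact ⟨3, rfl⟩
    fin_cases i <;> fin_cases j <;>
      first
        | exact absurd h (by decide)
        | (fin_cases i' <;> fin_cases j' <;>
            first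
              | exact absurd h' (by decide)
              | exact absurd rfl hne
              | exact hrange (d1 v hv hv') | exact hrange (d1 v hv' hv)
              | exact hrange (d2 v hv hv') | exact hrange (d2 v hv' hv)
              | exact hrange (d3 v hv hv') | exact hrange (d3 v hv' hv)
              | exact hrange (d4 v hv hv') | exact hrange (d4 v hv' hv)
              | exact hrange (d5 v hv hv') | exact hrange (d5 v hv' hv)
              | exact hrange (d6 v hv hv') | exact hrange (d6 v hv' hv)
              | exact hrange (d7 v hv hv') | exact hrange (d7 v hv' hv)
              | exact hrange (d8 v hv hv') | exact hrange (d8 v hv' hv)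
              | exact hrange (d9 v hv hv') | exact hrange (d9 v hv' hv)
              | exact hrange (d10 v hv hv') | exact hrange (d10 v hv' hv)
              | exact hrange (d11 v hv hv') | exact hrange (d11 v hv' hv)
              | exact hrange (d12 v hv hv') | exact hrange (d12 v hv' hv)
              | exact hrange (d13 v hv hv') | exact hrange (d13 v hv' hv)
              | exact hrange (d14 v hv hv') | exact hrange (d14 v hv' hv)
              | exact hrange (d15 v hv hv') | exact hrange (d15 v hv' hv))

end Aux
end AuxSec


namespace Aux

variable {G : SimpleGraph V}

lemma notin2 {x u v : V} (h1 : x ≠ u) (h2 : x ≠ v) : x ∉ ({u, v} : Set V) := by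
  simp [h1, h2]

lemma main_contra (G : SimpleGraph V) [Fintype V] (hvtx : NoSepVertex G)
    (A : Set V) (hA1 : CondA1 G A) (hA2 : CondA2 G A)
    (B : Set V) (hBess : ∀ b ∈ B, Essential G b) (hB1 : CondB1 G B)
    {a b c d : V} (haA : a ∈ A) (hbA : b ∈ A) (hcA : c ∈ A)
    (haB : a ∈ B) (hbB : b ∈ B) (hcB : c ∈ B) (hdB : d ∈ B)
    (hab : a ≠ b) (hac : a ≠ c) (hbc : b ≠ c)
    (hda : d ≠ a) (hdb : d ≠ b) (hdc : d ≠ c)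
    (hnadj : ¬ G.Adj a b) : False := by
  classical
  have hEa := hBess a haB
  have hEb := hBess b hbB
  have hEc := hBess c hcB
  -- B1 connections
  have Rcd_ab : AvoidReach G {a, b} c d :=
    hB1 a b hab hEa hEb c hcB d hdB (notin2 (Ne.symm hac) (Ne.symm hbc)) (notin2 hda hdb)
  have Rbd_ac : AvoidReach G {a, c} b d :=
    hB1 a c hac hEa hEc b hbB d hdB (notin2 (Ne.symm hab) hbc) (notin2 hda hdc)
  have Rad_bc : AvoidReach G {b, c} a d :=
    hB1 b c hbc hEb hEc a haB d hdB (notin2 hab hac) (notin2 hdb hdc)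
  -- the cut pair {a, b}
  obtain ⟨-, hsepab⟩ := hA1 a haA b hbA hab
  rcases hsepab with ⟨hadj, -⟩ | ⟨x, y, hx, hy, hxy⟩
  · exact hnadj hadj
  obtain ⟨u, hu_nab, hu_nc⟩ : ∃ u, u ∉ ({a, b} : Set V) ∧ ¬ AvoidReach G {a, b} u c := by
    by_cases hxc : AvoidReach G {a, b} x c
    · exact ⟨y, hy, fun h => hxy (AR.trans hxc (AR.symm h))⟩
    · exact ⟨x, hx, hxc⟩
  have hu_nd : ¬ AvoidReach G {a, b} u d := fun h => hu_nc (AR.trans h (AR.symm Rcd_ab))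
  have hu_a : u ≠ a := fun h => hu_nab (by simp [h])
  have hu_b : u ≠ b := fun h => hu_nab (by simp [h])
  obtain ⟨πab, hπabP, hπabI⟩ := branch_of_cut hvtx hab hu_a hu_b
  have πabFacts : ∀ v ∈ πab.support, v ≠ a → v ≠ b →
      ¬ AvoidReach G {a, b} v c ∧ ¬ AvoidReach G {a, b} v d ∧
      AvoidReach G {a, c} v b ∧ AvoidReach G {b, c} v a := by
    intro v hv h1 h2
    obtain ⟨f1, f2⟩ := hπabI v hv h1 h2
    obtain ⟨g1, g2⟩ := f2 c (Ne.symm hac) (Ne.symm hbc) hu_nc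
    exact ⟨fun h => hu_nc (AR.trans (AR.symm f1) h),
      fun h => hu_nd (AR.trans (AR.symm f1) h), g1, g2⟩
  -- the pair {a, c}
  obtain ⟨πac, hπacP, πacFacts⟩ : ∃ π : G.Walk a c, π.IsPath ∧
      ∀ v ∈ π.support, v ≠ a → v ≠ c →
        ¬ AvoidReach G {a, c} v b ∧ ¬ AvoidReach G {a, c} v d ∧
        AvoidReach G {a, b} v c ∧ AvoidReach G {b, c} v a := by
    by_cases hadj_ac : G.Adj a c
    · refine ⟨Walk.cons hadj_ac Walk.nil, by simp [hac], ?_⟩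
      intro v hv h1 h2
      simp only [Walk.support_cons, Walk.support_nil, List.mem_cons,
        List.mem_singleton] at hv
      rcases hv with rfl | rfl | hv
      · exact absurd rfl h1
      · exact absurd rfl h2
      · exact absurd hv List.not_mem_nil
    · obtain ⟨-, hsepac⟩ := hA1 a haA c hcA hac
      rcases hsepac with ⟨hadj, -⟩ | ⟨x', y', hx', hy', hxy'⟩
      · exact absurd hadj hadj_ac
      obtain ⟨u', hu'_nac, hu'_nb⟩ : ∃ u', u' ∉ ({a, c} : Set V) ∧
          ¬ AvoidReach G {a, c} u' b := by
        by_cases hxb : AvoidReach G {a, c} x' b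
        · exact ⟨y', hy', fun h => hxy' (AR.trans hxb (AR.symm h))⟩
        · exact ⟨x', hx', hxb⟩
      have hu'_nd : ¬ AvoidReach G {a, c} u' d := fun h =>
        hu'_nb (AR.trans h (AR.symm Rbd_ac))
      have hu'_a : u' ≠ a := fun h => hu'_nac (by simp [h])
      have hu'_c : u' ≠ c := fun h => hu'_nac (by simp [h])
      obtain ⟨π, hπP, hπI⟩ := branch_of_cut hvtx hac hu'_a hu'_c
      refine ⟨π, hπP, ?_⟩
      intro v hv h1 h2
      obtain ⟨f1, f2⟩ := hπI v hv h1 h2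
      obtain ⟨g1, g2⟩ := f2 b (Ne.symm hab) hbc hu'_nb
      exact ⟨fun h => hu'_nb (AR.trans (AR.symm f1) h),
        fun h => hu'_nd (AR.trans (AR.symm f1) h), g1, pair_swap g2⟩
  -- the pair {b, c}
  obtain ⟨πbc, hπbcP, πbcFacts⟩ : ∃ π : G.Walk b c, π.IsPath ∧
      ∀ v ∈ π.support, v ≠ b → v ≠ c →
        ¬ AvoidReach G {b, c} v a ∧ ¬ AvoidReach G {b, c} v d ∧
        AvoidReach G {a, b} v c ∧ AvoidReach G {a, c} v b := by
    by_cases hadj_bc : G.Adj b c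
    · refine ⟨Walk.cons hadj_bc Walk.nil, by simp [hbc], ?_⟩
      intro v hv h1 h2
      simp only [Walk.support_cons, Walk.support_nil, List.mem_cons,
        List.mem_singleton] at hv
      rcases hv with rfl | rfl | hv
      · exact absurd rfl h1
      · exact absurd rfl h2
      · exact absurd hv List.not_mem_nil
    · obtain ⟨-, hsepbc⟩ := hA1 b hbA c hcA hbc
      rcases hsepbc with ⟨hadj, -⟩ | ⟨x', y', hx', hy', hxy'⟩
      · exact absurd hadj hadj_bc
      obtain ⟨u'', hu''_nbc, hu''_na⟩ : ∃ u'', u'' ∉ ({b, c} : Set V) ∧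
          ¬ AvoidReach G {b, c} u'' a := by
        by_cases hxa : AvoidReach G {b, c} x' a
        · exact ⟨y', hy', fun h => hxy' (AR.trans hxa (AR.symm h))⟩
        · exact ⟨x', hx', hxa⟩
      have hu''_nd : ¬ AvoidReach G {b, c} u'' d := fun h =>
        hu''_na (AR.trans h (AR.symm Rad_bc))
      have hu''_b : u'' ≠ b := fun h => hu''_nbc (by simp [h])
      have hu''_c : u'' ≠ c := fun h => hu''_nbc (by simp [h])
      obtain ⟨π, hπP, hπI⟩ := branch_of_cut hvtx hbc hu''_b hu''_c
      refine ⟨π, hπP, ?_⟩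
      intro v hv h1 h2
      obtain ⟨f1, f2⟩ := hπI v hv h1 h2
      obtain ⟨g1, g2⟩ := f2 a hab hac hu''_na
      exact ⟨fun h => hu''_na (AR.trans (AR.symm f1) h),
        fun h => hu''_nd (AR.trans (AR.symm f1) h), pair_swap g1, pair_swap g2⟩
  -- the three legs from d
  obtain ⟨wa, hwa⟩ := AR.symm Rad_bc
  obtain ⟨wb, hwb⟩ := AR.symm Rbd_ac
  obtain ⟨wc, hwc⟩ := AR.symm Rcd_ab
  set Qa := wa.bypass with hQa_def
  set Qb := wb.bypass with hQb_def
  set Qc := wc.bypass with hQc_def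
  have hQaP : Qa.IsPath := Walk.bypass_isPath _
  have hQbP : Qb.IsPath := Walk.bypass_isPath _
  have hQcP : Qc.IsPath := Walk.bypass_isPath _
  have hQa_av : ∀ v ∈ Qa.support, v ∉ ({b, c} : Set V) :=
    fun v hv => hwa v (Walk.support_bypass_subset _ hv)
  have hQb_av : ∀ v ∈ Qb.support, v ∉ ({a, c} : Set V) :=
    fun v hv => hwb v (Walk.support_bypass_subset _ hv)
  have hQc_av : ∀ v ∈ Qc.support, v ∉ ({a, b} : Set V) :=
    fun v hv => hwc v (Walk.support_bypass_subset _ hv)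
  obtain ⟨t, Ra, Rb, Rc, hRaP, hRbP, hRcP, hta, htb, htc, iab, iac, ibc,
      subRa, subRb, subRc⟩ :=
    tripod Qa Qb Qc hQaP hQbP hQcP
      (fun h => hQb_av a h (by simp)) (fun h => hQc_av a h (by simp))
      (fun h => hQa_av b h (by simp)) (fun h => hQc_av b h (by simp))
      (fun h => hQa_av c h (by simp)) (fun h => hQb_av c h (by simp))
  have legmem : ∀ {v : V}, v ∈ Ra.support ∨ v ∈ Rb.support ∨ v ∈ Rc.support →
      v ∈ Qa.support ∨ v ∈ Qb.support ∨ v ∈ Qc.support := by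
    rintro v (h | h | h)
    · exact subRa v h
    · exact subRb v h
    · exact subRc v h
  -- facts about leg vertices
  have legFacts : ∀ v, (v ∈ Qa.support ∨ v ∈ Qb.support ∨ v ∈ Qc.support) →
      v ≠ a → v ≠ b → v ≠ c →
      AvoidReach G {a, b} v d ∧ AvoidReach G {a, c} v d ∧ AvoidReach G {b, c} v d := by
    intro v hv hva hvb hvc
    rcases hv with hv | hv | hv
    · have h1 : AvoidReach G (insert a {b, c}) d v :=
        avoid_insert_end Qa hQaP hQa_av hv hva
      refine ⟨AR.symm (AR.mono ?_ h1), AR.symm (AR.mono ?_ h1),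
        AR.symm (avoid_of_mem Qa hQa_av hv)⟩
      · intro z hz; rcases hz with rfl | rfl <;> simp
      · intro z hz; rcases hz with rfl | rfl <;> simp
    · have h1 : AvoidReach G (insert b {a, c}) d v :=
        avoid_insert_end Qb hQbP hQb_av hv hvb
      refine ⟨AR.symm (AR.mono ?_ h1), AR.symm (avoid_of_mem Qb hQb_av hv),
        AR.symm (AR.mono ?_ h1)⟩
      · intro z hz; rcases hz with rfl | rfl <;> simp
      · intro z hz; rcases hz with rfl | rfl <;> simp
    · have h1 : AvoidReach G (insert c {a, b}) d v :=
        avoid_insert_end Qc hQcP hQc_av hv hvc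
      refine ⟨AR.symm (avoid_of_mem Qc hQc_av hv), AR.symm (AR.mono ?_ h1),
        AR.symm (AR.mono ?_ h1)⟩
      · intro z hz; rcases hz with rfl | rfl <;> simp
      · intro z hz; rcases hz with rfl | rfl <;> simp
  have ht_legs : t ∈ Qa.support ∨ t ∈ Qb.support ∨ t ∈ Qc.support :=
    legmem (Or.inl Ra.start_mem_support)
  have tlegFacts := legFacts t ht_legs hta htb htc
  have inR : ∀ {v : V}, v = a ∨ v = b ∨ v = c ∨ v = t → v ∈ ({a, b, c, t} : Set V) := by
    rintro v (rfl | rfl | rfl | rfl) <;> simp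
  -- vertex exclusions
  have e01c : c ∉ πab.support := fun h =>
    AR.left_not ((πabFacts c h (Ne.symm hac) (Ne.symm hbc)).2.2.1) (by simp)
  have e01t : t ∉ πab.support := fun h =>
    (πabFacts t h hta htb).2.1 tlegFacts.1
  have e02b : b ∉ πac.support := fun h =>
    (πacFacts b h (Ne.symm hab) hbc).1 (AR.refl (notin2 (Ne.symm hab) hbc))
  have e02t : t ∉ πac.support := fun h =>
    (πacFacts t h hta htc).2.1 tlegFacts.2.1
  have e12a : a ∉ πbc.support := fun h =>
    (πbcFacts a h hab hac).1 (AR.refl (notin2 hab hac))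
  have e12t : t ∉ πbc.support := fun h =>
    (πbcFacts t h htb htc).2.1 tlegFacts.2.2
  have e03b : b ∉ Ra.reverse.support := fun h =>
    htb (iab b (mem_rev.mp h) Rb.end_mem_support).symm
  have e03c : c ∉ Ra.reverse.support := fun h =>
    htc (iac c (mem_rev.mp h) Rc.end_mem_support).symm
  have e13a : a ∉ Rb.reverse.support := fun h =>
    hta (iab a Ra.end_mem_support (mem_rev.mp h)).symm
  have e13c : c ∉ Rb.reverse.support := fun h =>
    htc (ibc c (mem_rev.mp h) Rc.end_mem_support).symm
  have e23a : a ∉ Rc.reverse.support := fun h =>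
    hta (iac a Ra.end_mem_support (mem_rev.mp h)).symm
  have e23b : b ∉ Rc.reverse.support := fun h =>
    htb (ibc b Rb.end_mem_support (mem_rev.mp h)).symm
  -- pairwise intersections
  have D1 : ∀ v, v ∈ πab.support → v ∈ πac.support → v ∈ ({a, b, c, t} : Set V) := by
    intro v h h'
    by_cases hva : v = a; · exact inR (Or.inl hva)
    by_cases hvb : v = b; · exact inR (Or.inr (Or.inl hvb))
    by_cases hvc : v = c; · exact inR (Or.inr (Or.inr (Or.inl hvc)))
    exact absurd (πabFacts v h hva hvb).2.2.1 (πacFacts v h' hva hvc).1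
  have D3 : ∀ v, v ∈ πab.support → v ∈ πbc.support → v ∈ ({a, b, c, t} : Set V) := by
    intro v h h'
    by_cases hva : v = a; · exact inR (Or.inl hva)
    by_cases hvb : v = b; · exact inR (Or.inr (Or.inl hvb))
    by_cases hvc : v = c; · exact inR (Or.inr (Or.inr (Or.inl hvc)))
    exact absurd (πabFacts v h hva hvb).2.2.2 (πbcFacts v h' hvb hvc).1
  have D7 : ∀ v, v ∈ πac.support → v ∈ πbc.support → v ∈ ({a, b, c, t} : Set V) := by
    intro v h h'
    by_cases hva : v = a; · exact inR (Or.inl hva)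
    by_cases hvb : v = b; · exact inR (Or.inr (Or.inl hvb))
    by_cases hvc : v = c; · exact inR (Or.inr (Or.inr (Or.inl hvc)))
    exact absurd (πacFacts v h hva hvc).2.2.2 (πbcFacts v h' hvb hvc).1
  have Dab_leg : ∀ v, v ∈ πab.support →
      (v ∈ Qa.support ∨ v ∈ Qb.support ∨ v ∈ Qc.support) → v ∈ ({a, b, c, t} : Set V) := by
    intro v h h'
    by_cases hva : v = a; · exact inR (Or.inl hva)
    by_cases hvb : v = b; · exact inR (Or.inr (Or.inl hvb))
    by_cases hvc : v = c; · exact inR (Or.inr (Or.inr (Or.inl hvc)))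
    exact absurd (legFacts v h' hva hvb hvc).1 (πabFacts v h hva hvb).2.1
  have Dac_leg : ∀ v, v ∈ πac.support →
      (v ∈ Qa.support ∨ v ∈ Qb.support ∨ v ∈ Qc.support) → v ∈ ({a, b, c, t} : Set V) := by
    intro v h h'
    by_cases hva : v = a; · exact inR (Or.inl hva)
    by_cases hvb : v = b; · exact inR (Or.inr (Or.inl hvb))
    by_cases hvc : v = c; · exact inR (Or.inr (Or.inr (Or.inl hvc)))
    exact absurd (legFacts v h' hva hvb hvc).2.1 (πacFacts v h hva hvc).2.1
  have Dbc_leg : ∀ v, v ∈ πbc.support →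
      (v ∈ Qa.support ∨ v ∈ Qb.support ∨ v ∈ Qc.support) → v ∈ ({a, b, c, t} : Set V) := by
    intro v h h'
    by_cases hva : v = a; · exact inR (Or.inl hva)
    by_cases hvb : v = b; · exact inR (Or.inr (Or.inl hvb))
    by_cases hvc : v = c; · exact inR (Or.inr (Or.inr (Or.inl hvc)))
    exact absurd (legFacts v h' hva hvb hvc).2.2 (πbcFacts v h hvb hvc).2.1
  -- build the subdivided K4
  set K : SubdividedK4 G := mk4 a b c t hab hac (Ne.symm hta) hbc (Ne.symm htb)
    (Ne.symm htc) πab πac Ra.reverse πbc Rb.reverse Rc.reverse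
    hπabP hπacP hRaP.reverse hπbcP hRbP.reverse hRcP.reverse
    e01c e01t e02b e02t e03b e03c e12a e12t e13a e13c e23a e23b
    ({a, b, c, t} : Set V) rfl
    D1
    (fun v h h' => Dab_leg v h (legmem (Or.inl (mem_rev.mp h'))))
    D3
    (fun v h h' => Dab_leg v h (legmem (Or.inr (Or.inl (mem_rev.mp h')))))
    (fun v h h' => Dab_leg v h (legmem (Or.inr (Or.inr (mem_rev.mp h')))))
    (fun v h h' => Dac_leg v h (legmem (Or.inl (mem_rev.mp h'))))
    D7
    (fun v h h' => Dac_leg v h (legmem (Or.inr (Or.inl (mem_rev.mp h')))))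
    (fun v h h' => Dac_leg v h (legmem (Or.inr (Or.inr (mem_rev.mp h')))))
    (fun v h h' => Dbc_leg v h' (legmem (Or.inl (mem_rev.mp h))))
    (fun v h h' => inR (Or.inr (Or.inr (Or.inr (iab v (mem_rev.mp h) (mem_rev.mp h'))))))
    (fun v h h' => inR (Or.inr (Or.inr (Or.inr (iac v (mem_rev.mp h) (mem_rev.mp h'))))))
    (fun v h h' => Dbc_leg v h (legmem (Or.inr (Or.inl (mem_rev.mp h')))))
    (fun v h h' => Dbc_leg v h (legmem (Or.inr (Or.inr (mem_rev.mp h')))))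
    (fun v h h' => inR (Or.inr (Or.inr (Or.inr (ibc v (mem_rev.mp h) (mem_rev.mp h'))))))
    with hKdef
  have haV : a ∈ K.verts := ⟨0, 1, by decide, πab.start_mem_support⟩
  have hbV : b ∈ K.verts := ⟨0, 1, by decide, πab.end_mem_support⟩
  have hcV : c ∈ K.verts := ⟨0, 2, by decide, πac.end_mem_support⟩
  have hsub : ({a, b, c} : Set V) ⊆ A ∩ K.verts := by
    rintro z (rfl | rfl | rfl)
    · exact ⟨haA, haV⟩
    · exact ⟨hbA, hbV⟩
    · exact ⟨hcA, hcV⟩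
  have h3 : 3 ≤ (A ∩ K.verts).ncard := by
    have h3' : ({a, b, c} : Set V).ncard = 3 :=
      Set.ncard_eq_three.mpr ⟨a, b, c, hab, hac, hbc, rfl⟩
    calc (3 : ℕ) = ({a, b, c} : Set V).ncard := h3'.symm
      _ ≤ (A ∩ K.verts).ncard := Set.ncard_le_ncard hsub (Set.toFinite _)
  obtain ⟨i, j, hij, hall⟩ := hA2 K h3
  have h0 : (0 : Fin 4) = i ∨ (0 : Fin 4) = j := K.endpts i j hij 0 (hall a haA)
  have h1 : (1 : Fin 4) = i ∨ (1 : Fin 4) = j := K.endpts i j hij 1 (hall b hbA)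
  have h2 : (2 : Fin 4) = i ∨ (2 : Fin 4) = j := K.endpts i j hij 2 (hall c hcA)
  have v0 : i.val = 0 ∨ j.val = 0 := by
    rcases h0 with h | h
    · exact Or.inl (by rw [← h]; rfl)
    · exact Or.inr (by rw [← h]; rfl)
  have v1 : i.val = 1 ∨ j.val = 1 := by
    rcases h1 with h | h
    · exact Or.inl (by rw [← h]; rfl)
    · exact Or.inr (by rw [← h]; rfl)
  have v2 : i.val = 2 ∨ j.val = 2 := by
    rcases h2 with h | h
    · exact Or.inl (by rw [← h]; rfl)
    · exact Or.inr (by rw [← h]; rfl)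
  rcases v0 with h | h <;> rcases v1 with h' | h' <;> rcases v2 with h'' | h'' <;> omega

end Aux


/-- If `A` satisfies (A1)–(A3) with `⟨A⟩` infinite and `B` satisfies
(B1)–(B3), then `A` and `B` share at most two vertices. -/
theorem condA_inter_condB_small (G : SimpleGraph V) [Fintype V]
    (hconn : G.Connected) (htf : G.CliqueFree 3)
    (hvtx : NoSepVertex G) (hedge : NoSepEdge G)
    (A : Set V) (hAinf : InfiniteSpecial G A)
    (hA1 : CondA1 G A) (hA2 : CondA2 G A) (hA3 : CondA3 G A)
    (B : Set V) (hBess : ∀ b ∈ B, Essential G b)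
    (hB1 : CondB1 G B) (hB2 : CondB2 G B) (hB3 : CondB3 B) :
    (A ∩ B).ncard ≤ 2 := by
  classical
  by_contra hcon
  push_neg at hcon
  obtain ⟨a, haAB, b, hbAB, c, hcAB, hab, hac, hbc⟩ :=
    (Set.two_lt_ncard (Set.toFinite _)).mp hcon
  obtain ⟨d, hdB, hda, hdb, hdc⟩ : ∃ d ∈ B, d ≠ a ∧ d ≠ b ∧ d ≠ c := by
    by_contra hno
    push_neg at hno
    have hsub : B ⊆ ({a, b, c} : Set V) := by
      intro z hz
      by_cases h1 : z = a
      · exact Or.inl h1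
      by_cases h2 : z = b
      · exact Or.inr (Or.inl h2)
      exact Or.inr (Or.inr (hno z hz h1 h2))
    have h4 := hB3
    have hle : B.ncard ≤ ({a, b, c} : Set V).ncard :=
      Set.ncard_le_ncard hsub (Set.toFinite _)
    have h3' : ({a, b, c} : Set V).ncard = 3 :=
      Set.ncard_eq_three.mpr ⟨a, b, c, hab, hac, hbc, rfl⟩
    rw [CondB3] at h4
    omega
  have hpair : ¬ G.Adj a b ∨ ¬ G.Adj a c ∨ ¬ G.Adj b c := by
    by_contra hcc
    push_neg at hcc
    exact htf _ (SimpleGraph.is3Clique_triple_iff.mpr ⟨hcc.1, hcc.2.1, hcc.2.2⟩)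
  rcases hpair with h | h | h
  · exact (Aux.main_contra G hvtx A hA1 hA2 B hBess hB1 haAB.1 hbAB.1 hcAB.1
      haAB.2 hbAB.2 hcAB.2 hdB hab hac hbc hda hdb hdc h).elim
  · exact (Aux.main_contra G hvtx A hA1 hA2 B hBess hB1 haAB.1 hcAB.1 hbAB.1
      haAB.2 hcAB.2 hbAB.2 hdB hac hab (Ne.symm hbc) hda hdc hdb h).elim
  · exact (Aux.main_contra G hvtx A hA1 hA2 B hBess hB1 hbAB.1 hcAB.1 haAB.1
      hbAB.2 hcAB.2 haAB.2 hdB hbc (Ne.symm hab) (Ne.symm hac) hdb hdc hda h).elim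
end

section
/- Let Γ be a finite simplicial connected triangle-free graph with no separating vertices or edges, not a cycle of length ≥ 5, and having a cut pair. Let A be a set of vertices satisfying conditions (A1), (A2), (A3) with ⟨A⟩ infinite. If a ∈ A is an interior vertex of a branch β of Γ (a path between two essential vertices with no essential interior vertices), then A contains every vertex of β, including its two essential endpoints. -/
open SimpleGraph

variable {V : Type}

namespace CAB
open SimpleGraph Walk
set_option linter.unusedSectionVars false

variable {V : Type} {G : SimpleGraph V}

lemma avoid_symm {S : Set V} {u v : V} (h : AvoidReach G S u v) : AvoidReach G S v u := by
  obtain ⟨W, hW⟩ := h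
  exact ⟨W.reverse, by simpa [Walk.support_reverse] using hW⟩

lemma avoid_trans {S : Set V} {u v w : V} (h1 : AvoidReach G S u v) (h2 : AvoidReach G S v w) :
    AvoidReach G S u w := by
  obtain ⟨W1, hW1⟩ := h1; obtain ⟨W2, hW2⟩ := h2
  refine ⟨W1.append W2, fun z hz => ?_⟩
  rcases (Walk.mem_support_append_iff _ _).1 hz with h | h
  · exact hW1 z h
  · exact hW2 z h

lemma avoid_nil {S : Set V} {u : V} (hu : u ∉ S) : AvoidReach G S u u :=
  ⟨Walk.nil, by simpa using hu⟩

lemma avoid_edge {S : Set V} {u v : V} (h : G.Adj u v) (hu : u ∉ S) (hv : v ∉ S) :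
    AvoidReach G S u v := by
  refine ⟨Walk.cons h Walk.nil, ?_⟩
  intro z hz
  simp only [Walk.support_cons, Walk.support_nil, List.mem_cons, List.mem_singleton] at hz
  rcases hz with rfl | rfl | h'
  · exact hu
  · exact hv
  · simp at h'

/-- Split a walk at the first occurrence of `a`, obtaining the predecessor. -/
lemma exists_prefix_to_nbr {a s t : V} (W : G.Walk s t) (ha : a ∈ W.support) (hsa : s ≠ a) :
    ∃ (w : V) (W₁ : G.Walk s w), G.Adj w a ∧ a ∉ W₁.support ∧ ∀ z ∈ W₁.support, z ∈ W.support := by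
  induction W with
  | nil =>
    simp only [Walk.support_nil, List.mem_singleton] at ha
    exact absurd ha.symm hsa
  | @cons u v t h W' ih =>
    by_cases hva : v = a
    · subst hva
      exact ⟨u, Walk.nil, h, by simpa using (Ne.symm hsa), by simp⟩
    · have ha' : a ∈ W'.support := by
        rcases (by simpa using ha : a = u ∨ a ∈ W'.support) with h' | h'
        · exact absurd h'.symm hsa
        · exact h'
      obtain ⟨w, W₁, hadj, hnot, hsub⟩ := ih ha' (fun hh => hva hh)
      refine ⟨w, Walk.cons h W₁, hadj, ?_, ?_⟩
      · simp only [Walk.support_cons, List.mem_cons, not_or]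
        exact ⟨Ne.symm hsa, hnot⟩
      · intro z hz
        simp only [Walk.support_cons, List.mem_cons] at hz ⊢
        rcases hz with rfl | hz
        · exact Or.inl rfl
        · exact Or.inr (hsub z hz)

/-- Split a path at an interior vertex `a`, obtaining both neighbours and both halves. -/
lemma path_split {s t a : V} {W : G.Walk s t} (hW : W.IsPath) (ha : a ∈ W.support)
    (hsa : s ≠ a) (hta : t ≠ a) :
    ∃ (w₁ w₂ : V) (W₁ : G.Walk s w₁) (W₂ : G.Walk w₂ t),
      G.Adj a w₁ ∧ G.Adj a w₂ ∧ w₁ ≠ w₂ ∧ W₁.IsPath ∧ W₂.IsPath ∧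
      a ∉ W₁.support ∧ a ∉ W₂.support ∧
      (∀ z ∈ W₁.support, z ∈ W.support) ∧ (∀ z ∈ W₂.support, z ∈ W.support) ∧
      (∀ z ∈ W₁.support, z ∉ W₂.support) := by
  induction W with
  | nil =>
    simp only [Walk.support_nil, List.mem_singleton] at ha
    exact absurd ha.symm hsa
  | @cons u v t h W' ih =>
    by_cases hva : v = a
    · subst hva
      -- W' : G.Walk a t, a ≠ t so W' is a cons
      cases W' with
      | nil => exact absurd rfl hta
      | @cons _ v₂ _ h' W'' =>
        refine ⟨u, v₂, Walk.nil, W'', h.symm, h', ?_, ?_, ?_, ?_, ?_, ?_, ?_, ?_⟩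
        · -- u ≠ v₂
          intro he
          have : u ∈ (Walk.cons h' W'').support := by
            rw [he]
            simp only [Walk.support_cons, List.mem_cons]
            exact Or.inr (Walk.start_mem_support W'')
          exact ((Walk.cons_isPath_iff _ _).1 hW).2 this
        · simp
        · exact (((Walk.cons_isPath_iff _ _).1 hW).1.of_cons)
        · simpa using Ne.symm hsa
        · have := (Walk.cons_isPath_iff _ _).1 ((Walk.cons_isPath_iff _ _).1 hW).1
          exact this.2
        · intro z hz; simp at hz; simp [hz]
        · intro z hz
          simp only [Walk.support_cons, List.mem_cons]
          exact Or.inr (Or.inr hz)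
        · intro z hz
          simp only [Walk.support_nil, List.mem_singleton] at hz
          subst hz
          intro hmem
          exact ((Walk.cons_isPath_iff _ _).1 hW).2
            (by simpa using Or.inr hmem)
    · have ha' : a ∈ W'.support := by
        rcases (by simpa using ha : a = u ∨ a ∈ W'.support) with h' | h'
        · exact absurd h'.symm hsa
        · exact h'
      obtain ⟨w₁, w₂, W₁, W₂, hadj1, hadj2, hne, hp1, hp2, hn1, hn2, hs1, hs2, hdisj⟩ :=
        ih ((Walk.cons_isPath_iff _ _).1 hW).1 ha' (fun hh => hva hh) hta
      refine ⟨w₁, w₂, Walk.cons h W₁, W₂, hadj1, hadj2, hne, ?_, hp2, ?_, hn2, ?_, ?_, ?_⟩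
      · rw [Walk.cons_isPath_iff]
        refine ⟨hp1, fun hu => ?_⟩
        exact ((Walk.cons_isPath_iff _ _).1 hW).2 (hs1 u hu)
      · simp only [Walk.support_cons, List.mem_cons, not_or]
        exact ⟨Ne.symm hsa, hn1⟩
      · intro z hz
        simp only [Walk.support_cons, List.mem_cons] at hz ⊢
        rcases hz with rfl | hz
        · exact Or.inl rfl
        · exact Or.inr (hs1 z hz)
      · intro z hz
        simp only [Walk.support_cons, List.mem_cons]
        exact Or.inr (hs2 z hz)
      · intro z hz
        simp only [Walk.support_cons, List.mem_cons] at hz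
        rcases hz with rfl | hz
        · intro hmem
          exact ((Walk.cons_isPath_iff _ _).1 hW).2 (hs2 z hmem)
        · exact hdisj z hz

/-- The trapping lemma: a walk starting in a set `S` all of whose members have all
their neighbours in `S ∪ {c, d}`, and avoiding `c` and `d`, stays in `S`. -/
lemma trap {S : Set V} {c d : V} (hS : ∀ v ∈ S, ∀ w, G.Adj v w → w ∈ S ∨ w = c ∨ w = d)
    {u z : V} (W : G.Walk u z) (hu : u ∈ S)
    (hav : ∀ v ∈ W.support, v ≠ c ∧ v ≠ d) : z ∈ S := by
  induction W with
  | nil => exact hu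
  | @cons u v w h W' ih =>
    have hv : v ∈ S := by
      rcases hS u hu v h with h' | h' | h'
      · exact h'
      · exact absurd h' (hav v (by simp [Walk.start_mem_support])).1
      · exact absurd h' (hav v (by simp [Walk.start_mem_support])).2
    exact ih hv (fun z hz => hav z (by simp [hz]))

end CAB
namespace CAB
open SimpleGraph Walk
set_option linter.unusedSectionVars false

variable {V : Type} {G : SimpleGraph V}

lemma nonessential_nbrs [Fintype V] {v : V} (hv : ¬ Essential G v) {u₁ u₂ : V}
    (h1 : G.Adj v u₁) (h2 : G.Adj v u₂) (h12 : u₁ ≠ u₂) :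
    G.neighborSet v = {u₁, u₂} := by
  have hsub : ({u₁, u₂} : Set V) ⊆ G.neighborSet v := by
    intro z hz
    rcases hz with rfl | rfl
    · exact h1
    · exact h2
  have hcard : (G.neighborSet v).ncard ≤ 2 := by
    unfold Essential at hv; omega
  have h2card : ({u₁, u₂} : Set V).ncard = 2 := Set.ncard_pair h12
  exact (Set.eq_of_subset_of_ncard_le hsub (by rw [h2card]; exact hcard) (Set.toFinite _)).symm

lemma nonessential_nbr_cases [Fintype V] {v : V} (hv : ¬ Essential G v) {u₁ u₂ : V}
    (h1 : G.Adj v u₁) (h2 : G.Adj v u₂) (h12 : u₁ ≠ u₂) {w : V} (hw : G.Adj v w) :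
    w = u₁ ∨ w = u₂ := by
  have := nonessential_nbrs hv h1 h2 h12
  have hmem : w ∈ G.neighborSet v := hw
  rw [this] at hmem
  exact hmem

lemma essential_third {v : V} (hv : Essential G v) (e f : V) :
    ∃ z, G.Adj v z ∧ z ≠ e ∧ z ≠ f := by
  by_contra hcon
  push_neg at hcon
  have hsub : G.neighborSet v ⊆ {e, f} := by
    intro z hz
    by_cases hze : z = e
    · exact Or.inl hze
    · exact Or.inr (hcon z hz hze)
  have : (G.neighborSet v).ncard ≤ 2 := by
    calc (G.neighborSet v).ncard ≤ ({e, f} : Set V).ncard :=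
          Set.ncard_le_ncard hsub (Set.toFinite _)
      _ ≤ 2 := by
          calc ({e, f} : Set V).ncard ≤ ({f} : Set V).ncard + 1 := Set.ncard_insert_le _ _
            _ = 2 := by rw [Set.ncard_singleton]
  unfold Essential at hv
  omega

/-- Every neighbour of a non-essential interior vertex of a path lies on the path. -/
lemma internal_nbrs_mem [Fintype V] {c d : V} {q : G.Walk c d} (hq : q.IsPath) {z : V}
    (hz : z ∈ q.support) (hzc : z ≠ c) (hzd : z ≠ d) (hness : ¬ Essential G z)
    {w : V} (hw : G.Adj z w) : w ∈ q.support := by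
  obtain ⟨w₁, w₂, W₁, W₂, hadj1, hadj2, hne, _, _, _, _, hs1, hs2, _⟩ :=
    path_split hq hz (Ne.symm hzc) (Ne.symm hzd)
  rcases nonessential_nbr_cases hness hadj1 hadj2 hne hw with rfl | rfl
  · exact hs1 w (Walk.end_mem_support _)
  · exact hs2 w (Walk.start_mem_support _)

/-- From the start of a path to any other support vertex there is a sub-path. -/
lemma hseg_from_start {x y : V} {p : G.Walk x y} (hp : p.IsPath) {w : V}
    (hw : w ∈ p.support) (hwx : w ≠ x) :
    ∃ q : G.Walk x w, q.IsPath ∧ (∀ z ∈ q.support, z ∈ p.support) ∧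
      (y ∈ q.support → y = w) := by
  induction p with
  | nil =>
    simp only [Walk.support_nil, List.mem_singleton] at hw
    exact absurd hw hwx
  | @cons u v t h p' ih =>
    have hyu : t ≠ u := by
      intro he
      exact ((Walk.cons_isPath_iff _ _).1 hp).2 (he ▸ Walk.end_mem_support p')
    by_cases hvw : v = w
    · subst hvw
      refine ⟨Walk.cons h Walk.nil, ?_, ?_, ?_⟩
      · rw [Walk.cons_isPath_iff]
        exact ⟨Walk.IsPath.nil, by simpa using Ne.symm hwx⟩
      · intro z hz
        simp only [Walk.support_cons, Walk.support_nil, List.mem_cons,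
          List.mem_singleton] at hz
        rcases hz with rfl | rfl | h'
        · simp
        · simp [Walk.start_mem_support]
        · simp at h'
      · intro hy
        simp only [Walk.support_cons, Walk.support_nil, List.mem_cons,
          List.mem_singleton] at hy
        rcases hy with rfl | rfl | h'
        · exact absurd rfl hyu
        · rfl
        · simp at h'
    · have hw' : w ∈ p'.support := by
        rcases (by simpa using hw : w = u ∨ w ∈ p'.support) with h' | h'
        · exact absurd h' hwx
        · exact h'
      obtain ⟨q', hq'p, hq's, hq'y⟩ := ih ((Walk.cons_isPath_iff _ _).1 hp).1 hw'
        (fun hh => hvw hh.symm)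
      refine ⟨Walk.cons h q', ?_, ?_, ?_⟩
      · rw [Walk.cons_isPath_iff]
        exact ⟨hq'p, fun hu => ((Walk.cons_isPath_iff _ _).1 hp).2 (hq's u hu)⟩
      · intro z hz
        simp only [Walk.support_cons, List.mem_cons] at hz ⊢
        rcases hz with rfl | hz
        · exact Or.inl rfl
        · exact Or.inr (hq's z hz)
      · intro hy
        simp only [Walk.support_cons, List.mem_cons] at hy
        rcases hy with rfl | hy
        · exact absurd rfl hyu
        · exact hq'y hy

/-- Between any two support vertices of a path there is a sub-path staying on the
support and meeting the endpoints only if they coincide with the ends. -/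
lemma hseg {x y : V} {p : G.Walk x y} (hp : p.IsPath) {v w : V}
    (hv : v ∈ p.support) (hw : w ∈ p.support) (hvw : v ≠ w) :
    ∃ q : G.Walk v w, q.IsPath ∧ (∀ z ∈ q.support, z ∈ p.support) ∧
      (x ∈ q.support → x = v ∨ x = w) ∧ (y ∈ q.support → y = v ∨ y = w) := by
  induction p with
  | nil =>
    simp only [Walk.support_nil, List.mem_singleton] at hv hw
    exact absurd (hv.trans hw.symm) hvw
  | @cons u v' t h p' ih =>
    by_cases hvx : v = u
    · subst hvx
      obtain ⟨q, hqp, hqs, hqy⟩ := hseg_from_start hp hw (fun hh => hvw hh.symm)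
      exact ⟨q, hqp, hqs, fun _ => Or.inl rfl, fun hy => Or.inr (hqy hy)⟩
    · by_cases hwx : w = u
      · subst hwx
        obtain ⟨q, hqp, hqs, hqy⟩ := hseg_from_start hp hv hvx
        refine ⟨q.reverse, hqp.reverse, ?_, fun _ => Or.inr rfl, ?_⟩
        · intro z hz
          rw [Walk.support_reverse, List.mem_reverse] at hz
          exact hqs z hz
        · intro hy
          rw [Walk.support_reverse, List.mem_reverse] at hy
          exact Or.inl (hqy hy)
      · have hv' : v ∈ p'.support := by
          rcases (by simpa using hv : v = u ∨ v ∈ p'.support) with h' | h'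
          · exact absurd h' hvx
          · exact h'
        have hw' : w ∈ p'.support := by
          rcases (by simpa using hw : w = u ∨ w ∈ p'.support) with h' | h'
          · exact absurd h' hwx
          · exact h'
        obtain ⟨q, hqp, hqs, _, hqy⟩ := ih ((Walk.cons_isPath_iff _ _).1 hp).1 hv' hw'
        refine ⟨q, hqp, ?_, ?_, hqy⟩
        · intro z hz
          simp only [Walk.support_cons, List.mem_cons]
          exact Or.inr (hqs z hz)
        · intro hx
          exact absurd (hqs u hx) ((Walk.cons_isPath_iff _ _).1 hp).2
  
lemma sep_symm {u v : V} (h : SeparatesReal G u v) : SeparatesReal G v u := by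
  obtain ⟨hne, h⟩ := h
  refine ⟨hne.symm, ?_⟩
  rcases h with ⟨hadj, c, hc1, hc2⟩ | ⟨s, t, hs, ht, hsep⟩
  · exact Or.inl ⟨hadj.symm, c, hc2, hc1⟩
  · refine Or.inr ⟨s, t, ?_, ?_, ?_⟩
    · rwa [Set.pair_comm]
    · rwa [Set.pair_comm]
    · rwa [Set.pair_comm]

lemma isBranch_reverse {x y : V} {p : G.Walk x y} (h : IsBranch G p) :
    IsBranch G p.reverse := by
  obtain ⟨hp, hx, hy, hint⟩ := h
  refine ⟨hp.reverse, hy, hx, ?_⟩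
  intro v hv hv1 hv2
  rw [Walk.support_reverse, List.mem_reverse] at hv
  exact hint v hv hv2 hv1

end CAB
namespace CAB
open SimpleGraph Walk
set_option linter.unusedSectionVars false

variable {V : Type} {G : SimpleGraph V}

lemma not_mem_pair {z a b : V} : z ∉ ({a, b} : Set V) ↔ z ≠ a ∧ z ≠ b := by
  simp only [Set.mem_insert_iff, Set.mem_singleton_iff, not_or]

/-- From a pair-separation, each side reaches a neighbour of `a`. -/
lemma reach_nbr (hvtx : NoSepVertex G) {a b s t : V}
    (hs : s ∉ ({a, b} : Set V)) (ht : t ∉ ({a, b} : Set V))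
    (hsep : ¬ AvoidReach G {a, b} s t) :
    ∃ w, G.Adj a w ∧ AvoidReach G {a, b} s w := by
  have hsb : s ≠ b := (not_mem_pair.1 hs).2
  have htb : t ≠ b := (not_mem_pair.1 ht).2
  have hsa : s ≠ a := (not_mem_pair.1 hs).1
  obtain ⟨W, hW⟩ := hvtx b s t hsb htb
  have haW : a ∈ W.support := by
    by_contra hcon
    refine hsep ⟨W, fun v hv => ?_⟩
    rw [not_mem_pair]
    exact ⟨fun h => hcon (h ▸ hv), by simpa using hW v hv⟩
  obtain ⟨w, W₁, hadj, hnot, hsub⟩ := exists_prefix_to_nbr W haW hsa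
  refine ⟨w, hadj.symm, W₁, fun v hv => ?_⟩
  rw [not_mem_pair]
  exact ⟨fun h => hnot (h ▸ hv), by simpa using hW v (hsub v hv)⟩

lemma reach_nbr' (hvtx : NoSepVertex G) {a b s t : V}
    (hs : s ∉ ({a, b} : Set V)) (ht : t ∉ ({a, b} : Set V))
    (hsep : ¬ AvoidReach G {a, b} s t) :
    ∃ w, G.Adj b w ∧ AvoidReach G {a, b} s w := by
  rw [Set.pair_comm] at hs ht hsep
  obtain ⟨w, hadj, hr⟩ := reach_nbr hvtx hs ht hsep
  rw [Set.pair_comm] at hr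
  exact ⟨w, hadj, hr⟩

section Branch
variable [Fintype V] {x y a : V} {p : G.Walk x y}

lemma branch_ne (hbr : IsBranch G p) (hasupp : a ∈ p.support) (hax : a ≠ x) : x ≠ y := by
  intro he
  subst he
  cases p with
  | nil =>
    simp only [Walk.support_nil, List.mem_singleton] at hasupp
    exact hax hasupp
  | cons h p' =>
    exact ((Walk.cons_isPath_iff _ _).1 hbr.1).2 (Walk.end_mem_support p')

lemma branch_bundle (hbr : IsBranch G p) (hasupp : a ∈ p.support) (hax : a ≠ x)
    (hay : a ≠ y) :
    ∃ (u₁ u₂ : V) (W₁ : G.Walk x u₁) (W₂ : G.Walk u₂ y),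
      G.Adj a u₁ ∧ G.Adj a u₂ ∧ u₁ ≠ u₂ ∧ G.neighborSet a = {u₁, u₂} ∧
      W₁.IsPath ∧ W₂.IsPath ∧ a ∉ W₁.support ∧ a ∉ W₂.support ∧
      (∀ z ∈ W₁.support, z ∈ p.support) ∧ (∀ z ∈ W₂.support, z ∈ p.support) ∧
      (∀ z ∈ W₁.support, z ∉ W₂.support) := by
  obtain ⟨w₁, w₂, W₁, W₂, hadj1, hadj2, hne, hp1, hp2, hn1, hn2, hs1, hs2, hdisj⟩ :=
    path_split hbr.1 hasupp (Ne.symm hax) (Ne.symm hay)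
  exact ⟨w₁, w₂, W₁, W₂, hadj1, hadj2, hne,
    nonessential_nbrs (hbr.2.2.2 a hasupp hax hay) hadj1 hadj2 hne,
    hp1, hp2, hn1, hn2, hs1, hs2, hdisj⟩

lemma key_of_sep (hvtx : NoSepVertex G) (hbr : IsBranch G p) (hasupp : a ∈ p.support)
    (hax : a ≠ x) (hay : a ≠ y) {b s t : V}
    (hs : s ∉ ({a, b} : Set V)) (ht : t ∉ ({a, b} : Set V))
    (hsep : ¬ AvoidReach G {a, b} s t) :
    ∀ w w', G.Adj a w → G.Adj a w' → w ≠ w' → ¬ AvoidReach G {a, b} w w' := by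
  obtain ⟨w₁, hw₁, hr₁⟩ := reach_nbr hvtx hs ht hsep
  obtain ⟨w₂, hw₂, hr₂⟩ := reach_nbr hvtx ht hs (fun h => hsep (avoid_symm h))
  have hness := hbr.2.2.2 a hasupp hax hay
  have hw12 : w₁ ≠ w₂ := by
    rintro rfl
    exact hsep (avoid_trans hr₁ (avoid_symm hr₂))
  have hkey12 : ¬ AvoidReach G {a, b} w₁ w₂ := fun h =>
    hsep (avoid_trans hr₁ (avoid_trans h (avoid_symm hr₂)))
  intro w w' hw hw' hne hr
  rcases nonessential_nbr_cases hness hw₁ hw₂ hw12 hw with rfl | rfl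
  · rcases nonessential_nbr_cases hness hw₁ hw₂ hw12 hw' with rfl | rfl
    · exact hne rfl
    · exact hkey12 hr
  · rcases nonessential_nbr_cases hness hw₁ hw₂ hw12 hw' with rfl | rfl
    · exact hkey12 (avoid_symm hr)
    · exact hne rfl

lemma chain_avoid {b u' e : V} (hb : b ∉ p.support) {W : G.Walk u' e}
    (hn : a ∉ W.support) (hs : ∀ z ∈ W.support, z ∈ p.support) :
    AvoidReach G {a, b} u' e := by
  refine ⟨W, fun v hv => ?_⟩
  rw [not_mem_pair]
  exact ⟨fun h => hn (h ▸ hv), fun h => hb (h ▸ hs v hv)⟩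

lemma sep_xy {b : V} (hb : b ∉ p.support)
    (hkey : ∀ w w', G.Adj a w → G.Adj a w' → w ≠ w' → ¬ AvoidReach G {a, b} w w')
    {u₁ u₂ : V} (h1 : G.Adj a u₁) (h2 : G.Adj a u₂) (h12 : u₁ ≠ u₂)
    {W₁ : G.Walk x u₁} {W₂ : G.Walk u₂ y} (hn1 : a ∉ W₁.support) (hn2 : a ∉ W₂.support)
    (hs1 : ∀ z ∈ W₁.support, z ∈ p.support) (hs2 : ∀ z ∈ W₂.support, z ∈ p.support) :
    ¬ AvoidReach G {a, b} x y := by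
  intro hr
  have c1 : AvoidReach G {a, b} u₁ x := by
    refine avoid_symm (chain_avoid hb hn1 hs1)
  have c2 : AvoidReach G {a, b} y u₂ := avoid_symm (chain_avoid hb hn2 hs2)
  exact hkey u₁ u₂ h1 h2 h12 (avoid_trans c1 (avoid_trans hr c2))

lemma exists_off_branch (hbr : IsBranch G p) (hasupp : a ∈ p.support) (hax : a ≠ x) :
    ∃ z, G.Adj x z ∧ z ∉ p.support := by
  cases p with
  | nil =>
    simp only [Walk.support_nil, List.mem_singleton] at hasupp
    exact absurd hasupp hax
  | @cons _ sn _ h p₂ =>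
    have hxp₂ : x ∉ p₂.support := ((Walk.cons_isPath_iff _ _).1 hbr.1).2
    have hp₂ : p₂.IsPath := ((Walk.cons_isPath_iff _ _).1 hbr.1).1
    have claim : ∀ z', G.Adj x z' → z' ∈ (Walk.cons h p₂).support → z' = sn ∨ z' = y := by
      intro z' hz' hzs
      have hzx : z' ≠ x := hz'.ne'
      have hz₂ : z' ∈ p₂.support := by
        rcases (by simpa using hzs : z' = x ∨ z' ∈ p₂.support) with h' | h'
        · exact absurd h' hzx
        · exact h'
      by_cases hzy : z' = y
      · exact Or.inr hzy
      by_cases hzsn : z' = sn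
      · exact Or.inl hzsn
      have hness : ¬ Essential G z' := hbr.2.2.2 z' hzs hzx hzy
      obtain ⟨w₁, w₂, W₁, W₂, hadj1, hadj2, hne, _, _, _, _, hs1, hs2, _⟩ :=
        path_split hp₂ hz₂ (Ne.symm hzsn) (Ne.symm hzy)
      rcases nonessential_nbr_cases hness hadj1 hadj2 hne hz'.symm with rfl | rfl
      · exact absurd (hs1 _ (Walk.end_mem_support _)) hxp₂
      · exact absurd (hs2 _ (Walk.start_mem_support _)) hxp₂
    obtain ⟨z, hz, hz1, hz2⟩ := essential_third hbr.2.1 sn y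
    refine ⟨z, hz, fun hzs => ?_⟩
    rcases claim z hz hzs with h' | h'
    · exact hz1 h'
    · exact hz2 h'

end Branch
end CAB
namespace CAB
open SimpleGraph Walk
set_option linter.unusedSectionVars false

variable {V : Type} {G : SimpleGraph V}

section Branch2
variable [Fintype V] [DecidableEq V] {x y a : V} {p : G.Walk x y}

lemma interior_sep (hvtx : NoSepVertex G) (hbr : IsBranch G p) (hasupp : a ∈ p.support)
    (hax : a ≠ x) (hay : a ≠ y) {b : V} (hb : b ∉ p.support)
    (hkey : ∀ w w', G.Adj a w → G.Adj a w' → w ≠ w' → ¬ AvoidReach G {a, b} w w')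
    {v : V} (hvsupp : v ∈ p.support) (hvx : v ≠ x) (hvy : v ≠ y) :
    ¬ AvoidReach G {v, b} x y := by
  obtain ⟨u₁, u₂, W₁, W₂, h1, h2, h12, hN, hp1, hp2, hn1, hn2, hs1, hs2, hdisj⟩ :=
    branch_bundle hbr hasupp hax hay
  have hxy : ¬ AvoidReach G {a, b} x y := sep_xy hb hkey h1 h2 h12 hn1 hn2 hs1 hs2
  by_cases hva : v = a
  · subst hva; exact hxy
  obtain ⟨q, hqp, hqsub, hqx, hqy⟩ := hseg hbr.1 hasupp hvsupp (fun h => hva h.symm)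
  have hxq : x ∉ q.support := by
    intro hx
    rcases hqx hx with h' | h'
    · exact hax h'.symm
    · exact hvx h'.symm
  have hyq : y ∉ q.support := by
    intro hy
    rcases hqy hy with h' | h'
    · exact hay h'.symm
    · exact hvy h'.symm
  intro hreach
  obtain ⟨R0, hR0⟩ := hreach
  have hRp : R0.bypass.IsPath := R0.bypass_isPath
  have hR : ∀ z ∈ R0.bypass.support, z ≠ v ∧ z ≠ b := fun z hz =>
    not_mem_pair.1 (hR0 z (R0.support_bypass_subset hz))
  by_cases haR : a ∈ R0.bypass.support
  · obtain ⟨w₁, w₂, R₁, R₂, hradj1, hradj2, hrne, hrp1, hrp2, hrn1, hrn2, hrs1, hrs2, hrdisj⟩ :=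
      path_split hRp haR (Ne.symm hax) (Ne.symm hay)
    cases q with
    | nil => exact hva rfl
    | @cons _ m _ hqadj q₂ =>
      have hness := hbr.2.2.2 a hasupp hax hay
      have hmN : m = w₁ ∨ m = w₂ := nonessential_nbr_cases hness hradj1 hradj2 hrne hqadj
      by_cases hmv : m = v
      · have hw₁v : w₁ ≠ v := (hR w₁ (hrs1 _ (Walk.end_mem_support _))).1
        have hw₂v : w₂ ≠ v := (hR w₂ (hrs2 _ (Walk.start_mem_support _))).1
        rcases hmN with h' | h'
        · exact hw₁v (h'.symm.trans hmv)
        · exact hw₂v (h'.symm.trans hmv)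
      · set S : Set V := {z | z ∈ (Walk.cons hqadj q₂).support ∧ z ≠ a ∧ z ≠ v} with hSdef
        have hmS : m ∈ S := ⟨by simp, hqadj.ne', hmv⟩
        have hclosed : ∀ z ∈ S, ∀ w, G.Adj z w → w ∈ S ∨ w = a ∨ w = v := by
          rintro z ⟨hzq, hza, hzv⟩ w hw
          have hzx : z ≠ x := fun h => hxq (h ▸ hzq)
          have hzy : z ≠ y := fun h => hyq (h ▸ hzq)
          have hzness : ¬ Essential G z := hbr.2.2.2 z (hqsub z hzq) hzx hzy
          have hwq : w ∈ (Walk.cons hqadj q₂).support :=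
            internal_nbrs_mem hqp hzq hza hzv hzness hw
          by_cases hwa : w = a
          · exact Or.inr (Or.inl hwa)
          by_cases hwv : w = v
          · exact Or.inr (Or.inr hwv)
          · exact Or.inl ⟨hwq, hwa, hwv⟩
        rcases hmN with rfl | rfl
        · have hxS : x ∈ S := by
            refine trap hclosed R₁.reverse hmS (fun z hz => ?_)
            rw [Walk.support_reverse, List.mem_reverse] at hz
            exact ⟨fun h => hrn1 (h ▸ hz), (hR z (hrs1 z hz)).1⟩
          exact hxq hxS.1
        · have hyS : y ∈ S := by
            refine trap hclosed R₂ hmS (fun z hz => ?_)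
            exact ⟨fun h => hrn2 (h ▸ hz), (hR z (hrs2 z hz)).1⟩
          exact hyq hyS.1
  · refine hxy ⟨R0.bypass, fun z hz => ?_⟩
    rw [not_mem_pair]
    exact ⟨fun h => haR (h ▸ hz), (hR z hz).2⟩

lemma endpoint_sep (hvtx : NoSepVertex G) (hbr : IsBranch G p) (hasupp : a ∈ p.support)
    (hax : a ≠ x) (hay : a ≠ y) {b : V} (hb : b ∉ p.support)
    (hkey : ∀ w w', G.Adj a w → G.Adj a w' → w ≠ w' → ¬ AvoidReach G {a, b} w w') :
    SeparatesReal G x b := by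
  have hxb : x ≠ b := fun h => hb (h ▸ Walk.start_mem_support p)
  by_cases hadj : G.Adj x b
  · obtain ⟨c, hc, hc1, hc2⟩ := essential_third hbr.2.1 x b
    exact ⟨hxb, Or.inl ⟨hadj, c, hc.ne', hc2⟩⟩
  obtain ⟨u₁, u₂, W₁, W₂, h1, h2, h12, hN, hp1, hp2, hn1, hn2, hs1, hs2, hdisj⟩ :=
    branch_bundle hbr hasupp hax hay
  have hxy : ¬ AvoidReach G {a, b} x y := sep_xy hb hkey h1 h2 h12 hn1 hn2 hs1 hs2
  obtain ⟨z, hz, hzp⟩ := exists_off_branch hbr hasupp hax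
  have hzb : z ≠ b := fun h => hadj (h ▸ hz)
  have hza : z ≠ a := fun h => hzp (h ▸ hasupp)
  have hxy0 : x ≠ y := branch_ne hbr hasupp hax
  have hness := hbr.2.2.2 a hasupp hax hay
  refine ⟨hxb, Or.inr ⟨z, y, ?_, ?_, ?_⟩⟩
  · rw [not_mem_pair]; exact ⟨hz.ne', hzb⟩
  · rw [not_mem_pair]
    exact ⟨Ne.symm hxy0, fun h => hb (h ▸ Walk.end_mem_support p)⟩
  intro hreach
  obtain ⟨R0, hR0⟩ := hreach
  have hRp : R0.bypass.IsPath := R0.bypass_isPath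
  have hR : ∀ w' ∈ R0.bypass.support, w' ≠ x ∧ w' ≠ b := fun w' hw' =>
    not_mem_pair.1 (hR0 w' (R0.support_bypass_subset hw'))
  have exz : AvoidReach G {a, b} x z := by
    refine avoid_edge hz ?_ ?_ <;> rw [not_mem_pair]
    · exact ⟨Ne.symm hax, hxb⟩
    · exact ⟨hza, hzb⟩
  by_cases haR : a ∈ R0.bypass.support
  · obtain ⟨w₁, w₂, R₁, R₂, hradj1, hradj2, hrne, hrp1, hrp2, hrn1, hrn2, hrs1, hrs2, hrdisj⟩ :=
      path_split hRp haR hza (Ne.symm hay)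
    rcases nonessential_nbr_cases hness hradj1 hradj2 hrne h2 with he | he
    · -- u₂ = w₁ : chain u₁ ~ x ~ z ~ w₁ = u₂
      have cz : AvoidReach G {a, b} z u₂ := by
        rw [he]
        refine ⟨R₁, fun w' hw' => ?_⟩
        rw [not_mem_pair]
        exact ⟨fun h => hrn1 (h ▸ hw'), (hR w' (hrs1 w' hw')).2⟩
      have c1 : AvoidReach G {a, b} u₁ x := avoid_symm (chain_avoid hb hn1 hs1)
      exact hkey u₁ u₂ h1 h2 h12 (avoid_trans c1 (avoid_trans exz cz))
    · -- u₂ = w₂, hence u₁ = w₁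
      have hu₁ : u₁ = w₁ := by
        rcases nonessential_nbr_cases hness hradj1 hradj2 hrne h1 with he' | he'
        · exact he'
        · exact absurd (he'.trans he.symm) h12
      subst hu₁
      have hu₁R : u₁ ∈ R0.bypass.support := hrs1 _ (Walk.end_mem_support R₁)
      have hu₁x : u₁ ≠ x := (hR u₁ hu₁R).1
      -- trap in the segment W₁ between x and a
      have hyW₁ : y ∉ W₁.support := fun hy => hdisj y hy (Walk.end_mem_support W₂)
      set S : Set V := {z' | z' ∈ W₁.support ∧ z' ≠ x} with hSdef
      have hclosed : ∀ z' ∈ S, ∀ w, G.Adj z' w → w ∈ S ∨ w = x ∨ w = a := by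
        rintro z' ⟨hz'W, hz'x⟩ w hw
        have hz'p : z' ∈ p.support := hs1 z' hz'W
        have hz'y : z' ≠ y := fun h => hyW₁ (h ▸ hz'W)
        have hz'a : z' ≠ a := fun h => hn1 (h ▸ hz'W)
        have hz'ness : ¬ Essential G z' := hbr.2.2.2 z' hz'p hz'x hz'y
        by_cases hz'u : z' = u₁
        · subst hz'u
          obtain ⟨pen, W₁', hpadj, hpnot, hpsub⟩ :=
            exists_prefix_to_nbr W₁ (Walk.end_mem_support W₁) (Ne.symm hz'x)
          have hpenW : pen ∈ W₁.support := hpsub _ (Walk.end_mem_support _)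
          have hpen_a : pen ≠ a := fun h => hn1 (h ▸ hpenW)
          rcases nonessential_nbr_cases hz'ness h1.symm hpadj.symm
            (fun h => hpen_a h.symm) hw with rfl | rfl
          · exact Or.inr (Or.inr rfl)
          · by_cases hwx : w = x
            · exact Or.inr (Or.inl hwx)
            · exact Or.inl ⟨hpenW, hwx⟩
        · have hwW : w ∈ W₁.support :=
            internal_nbrs_mem hp1 hz'W hz'x hz'u hz'ness hw
          by_cases hwx : w = x
          · exact Or.inr (Or.inl hwx)
          · exact Or.inl ⟨hwW, hwx⟩
      have hzS : z ∈ S := by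
        refine trap hclosed R₁.reverse ⟨Walk.end_mem_support W₁, hu₁x⟩ (fun w' hw' => ?_)
        rw [Walk.support_reverse, List.mem_reverse] at hw'
        exact ⟨(hR w' (hrs1 w' hw')).1, fun h => hrn1 (h ▸ hw')⟩
      exact hzp (hs1 z hzS.1)
  · -- a ∉ R : x ~ z ~ y avoiding {a,b}
    have czy : AvoidReach G {a, b} z y := by
      refine ⟨R0.bypass, fun w' hw' => ?_⟩
      rw [not_mem_pair]
      exact ⟨fun h => haR (h ▸ hw'), (hR w' hw').2⟩
    exact hxy (avoid_trans exz czy)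

lemma support_pair_sep (hbr : IsBranch G p) (hasupp : a ∈ p.support) (hax : a ≠ x)
    (hay : a ≠ y) {v w : V} (hv : v ∈ p.support)
    (hw : w ∈ p.support) (hvw : v ≠ w) : SeparatesReal G v w := by
  by_cases hadj : G.Adj v w
  · obtain ⟨c, hc, hc1, hc2⟩ := essential_third hbr.2.1 v w
    exact ⟨hvw, Or.inl ⟨hadj, c, hc1, hc2⟩⟩
  · obtain ⟨q, hqp, hqsub, hqx, hqy⟩ := hseg hbr.1 hv hw hvw
    obtain ⟨z, hz, hzp⟩ := exists_off_branch hbr hasupp hax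
    cases q with
    | nil => exact absurd rfl hvw
    | @cons _ m _ hqadj q₂ =>
      have hmv : m ≠ v := hqadj.ne'
      have hmw : m ≠ w := fun h => hadj (h ▸ hqadj)
      set S : Set V := {z' | z' ∈ (Walk.cons hqadj q₂).support ∧ z' ≠ v ∧ z' ≠ w}
        with hSdef
      have hmS : m ∈ S := ⟨by simp, hmv, hmw⟩
      have hclosed : ∀ z' ∈ S, ∀ u, G.Adj z' u → u ∈ S ∨ u = v ∨ u = w := by
        rintro z' ⟨hz'q, hz'v, hz'w⟩ u hu
        have hz'x : z' ≠ x := by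
          intro h
          subst h
          rcases hqx hz'q with h' | h'
          · exact hz'v h'
          · exact hz'w h'
        have hz'y : z' ≠ y := by
          intro h
          subst h
          rcases hqy hz'q with h' | h'
          · exact hz'v h'
          · exact hz'w h'
        have hz'ness : ¬ Essential G z' := hbr.2.2.2 z' (hqsub z' hz'q) hz'x hz'y
        have huq : u ∈ (Walk.cons hqadj q₂).support :=
          internal_nbrs_mem hqp hz'q hz'v hz'w hz'ness hu
        by_cases huv : u = v
        · exact Or.inr (Or.inl huv)
        by_cases huw : u = w
        · exact Or.inr (Or.inr huw)
        · exact Or.inl ⟨huq, huv, huw⟩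
      refine ⟨hvw, Or.inr ⟨m, z, ?_, ?_, ?_⟩⟩
      · rw [not_mem_pair]; exact ⟨hmv, hmw⟩
      · rw [not_mem_pair]
        exact ⟨fun h => hzp (h ▸ hv), fun h => hzp (h ▸ hw)⟩
      · rintro ⟨R0, hR0⟩
        have hzS : z ∈ S :=
          trap hclosed R0 hmS (fun z' hz' => not_mem_pair.1 (hR0 z' hz'))
        exact hzp (hqsub z hzS.1)

end Branch2
end CAB
namespace CAB
open SimpleGraph Walk
set_option linter.unusedSectionVars false
set_option linter.unusedVariables false

variable {V : Type} {G : SimpleGraph V}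

section Branch3
variable [Fintype V] [DecidableEq V] {x y a : V} {p : G.Walk x y}

lemma partner_key (hvtx : NoSepVertex G) (hbr : IsBranch G p) (hasupp : a ∈ p.support)
    (hax : a ≠ x) (hay : a ≠ y) {A : Set V} (hA1 : CondA1 G A) (haA : a ∈ A)
    {b : V} (hbA : b ∈ A) (hb : b ∉ p.support) :
    ∀ w w', G.Adj a w → G.Adj a w' → w ≠ w' → ¬ AvoidReach G {a, b} w w' := by
  have hab : a ≠ b := fun h => hb (h ▸ hasupp)
  obtain ⟨-, hsep⟩ := hA1 a haA b hbA hab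
  rcases hsep with ⟨hadj, -⟩ | ⟨s, t, hs, ht, hsep⟩
  · obtain ⟨u₁, u₂, W₁, W₂, h1, h2, h12, hN, _, _, _, _, hs1, hs2, _⟩ :=
      branch_bundle hbr hasupp hax hay
    rcases nonessential_nbr_cases (hbr.2.2.2 a hasupp hax hay) h1 h2 h12 hadj with rfl | rfl
    · exact absurd (hs1 _ (Walk.end_mem_support W₁)) hb
    · exact absurd (hs2 _ (Walk.start_mem_support W₂)) hb
  · exact key_of_sep hvtx hbr hasupp hax hay hs ht hsep

lemma condA1' (hvtx : NoSepVertex G) (hbr : IsBranch G p) (hasupp : a ∈ p.support)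
    (hax : a ≠ x) (hay : a ≠ y) {A : Set V} (hA1 : CondA1 G A) (haA : a ∈ A) :
    CondA1 G (A ∪ {z | z ∈ p.support}) := by
  have hmixed : ∀ v ∈ p.support, ∀ b ∈ A, b ∉ p.support → SeparatesReal G v b := by
    intro v hv b hbA hb
    have hkey := partner_key hvtx hbr hasupp hax hay hA1 haA hbA hb
    by_cases hvx : v = x
    · subst hvx; exact endpoint_sep hvtx hbr hasupp hax hay hb hkey
    by_cases hvy : v = y
    · subst hvy
      have hbr' := isBranch_reverse hbr
      have hasupp' : a ∈ p.reverse.support := by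
        rw [Walk.support_reverse, List.mem_reverse]; exact hasupp
      have hb' : b ∉ p.reverse.support := by
        rw [Walk.support_reverse, List.mem_reverse]; exact hb
      exact endpoint_sep hvtx hbr' hasupp' hay hax hb' hkey
    · have hvb : v ≠ b := fun h => hb (h ▸ hv)
      by_cases hadj : G.Adj v b
      · obtain ⟨c, hc, hc1, hc2⟩ := essential_third hbr.2.1 v b
        exact ⟨hvb, Or.inl ⟨hadj, c, hc1, hc2⟩⟩
      · refine ⟨hvb, Or.inr ⟨x, y, ?_, ?_,
          interior_sep hvtx hbr hasupp hax hay hb hkey hv hvx hvy⟩⟩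
        · rw [not_mem_pair]
          exact ⟨fun h => hvx h.symm, fun h => hb (h ▸ Walk.start_mem_support p)⟩
        · rw [not_mem_pair]
          exact ⟨fun h => hvy h.symm, fun h => hb (h ▸ Walk.end_mem_support p)⟩
  rintro v hv w hw hvw
  rcases hv with hvA | hvs <;> rcases hw with hwA | hws
  · exact hA1 v hvA w hwA hvw
  · by_cases hvsupp : v ∈ p.support
    · exact support_pair_sep hbr hasupp hax hay hvsupp hws hvw
    · exact sep_symm (hmixed w hws v hvA hvsupp)
  · by_cases hwsupp : w ∈ p.support
    · exact support_pair_sep hbr hasupp hax hay hvs hwsupp hvw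
    · exact hmixed v hvs w hwA hwsupp
  · exact support_pair_sep hbr hasupp hax hay hvs hws hvw

end Branch3
end CAB
namespace CAB
open SimpleGraph Walk
set_option linter.unusedSectionVars false
set_option linter.unusedVariables false

variable {V : Type} {G : SimpleGraph V}

section K4
variable [Fintype V] [DecidableEq V]

/-- A walk between two branch vertices of a subdivided `K₄`. -/
def kwalk (K : SubdividedK4 G) (m j : Fin 4) (hmj : m ≠ j) : G.Walk (K.b m) (K.b j) :=
  if h : m < j then K.path m j h else (K.path j m (hmj.lt_or_gt.resolve_left h)).reverse

lemma kwalk_mem {K : SubdividedK4 G} {m j : Fin 4} {hmj : m ≠ j} {z : V} :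
    z ∈ (kwalk K m j hmj).support ↔
      (∃ h : m < j, z ∈ (K.path m j h).support) ∨
      (∃ h : j < m, z ∈ (K.path j m h).support) := by
  unfold kwalk
  split_ifs with h
  · constructor
    · exact fun hz => Or.inl ⟨h, hz⟩
    · rintro (⟨_, hz⟩ | ⟨h', hz⟩)
      · exact hz
      · exact absurd h (asymm h')
  · rw [Walk.support_reverse, List.mem_reverse]
    constructor
    · exact fun hz => Or.inr ⟨hmj.lt_or_gt.resolve_left h, hz⟩
    · rintro (⟨h', hz⟩ | ⟨_, hz⟩)
      · exact absurd h' h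
      · exact hz

lemma kwalk_isPath {K : SubdividedK4 G} {m j : Fin 4} {hmj : m ≠ j} :
    (kwalk K m j hmj).IsPath := by
  unfold kwalk
  split_ifs with h
  · exact K.isPath m j h
  · exact (K.isPath _ _ _).reverse

lemma kwalk_verts {K : SubdividedK4 G} {m j : Fin 4} {hmj : m ≠ j} :
    ∀ z ∈ (kwalk K m j hmj).support, z ∈ K.verts := by
  intro z hz
  rcases kwalk_mem.1 hz with ⟨h', hz'⟩ | ⟨h', hz'⟩
  · exact ⟨m, j, h', hz'⟩
  · exact ⟨j, m, h', hz'⟩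

lemma kwalk_inter {K : SubdividedK4 G} {α β γ δ : Fin 4} {hαβ : α ≠ β} {hγδ : γ ≠ δ}
    (hdiff : ¬((α = γ ∧ β = δ) ∨ (α = δ ∧ β = γ))) {z : V}
    (h1 : z ∈ (kwalk K α β hαβ).support) (h2 : z ∈ (kwalk K γ δ hγδ).support) :
    ∃ i, z = K.b i ∧ (i = α ∨ i = β) ∧ (i = γ ∨ i = δ) := by
  rw [kwalk_mem] at h1 h2
  rcases h1 with ⟨ha, hz1⟩ | ⟨ha, hz1⟩ <;> rcases h2 with ⟨hc, hz2⟩ | ⟨hc, hz2⟩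
  · have hrange := K.disjoint α β ha γ δ hc
      (by rw [Ne, Prod.mk.injEq]; exact fun he => hdiff (Or.inl he)) z hz1 hz2
    obtain ⟨i, hi⟩ := hrange
    refine ⟨i, hi.symm, ?_, ?_⟩
    · exact K.endpts α β ha i (by rw [hi]; exact hz1)
    · exact K.endpts γ δ hc i (by rw [hi]; exact hz2)
  · have hrange := K.disjoint α β ha δ γ hc
      (by rw [Ne, Prod.mk.injEq]; exact fun he => hdiff (Or.inr he)) z hz1 hz2
    obtain ⟨i, hi⟩ := hrange
    refine ⟨i, hi.symm, ?_, ?_⟩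
    · exact K.endpts α β ha i (by rw [hi]; exact hz1)
    · exact (K.endpts δ γ hc i (by rw [hi]; exact hz2)).symm
  · have hrange := K.disjoint β α ha γ δ hc
      (by rw [Ne, Prod.mk.injEq]; exact fun he => hdiff (Or.inr ⟨he.2, he.1⟩)) z hz1 hz2
    obtain ⟨i, hi⟩ := hrange
    refine ⟨i, hi.symm, ?_, ?_⟩
    · exact (K.endpts β α ha i (by rw [hi]; exact hz1)).symm
    · exact K.endpts γ δ hc i (by rw [hi]; exact hz2)
  · have hrange := K.disjoint β α ha δ γ hc
      (by rw [Ne, Prod.mk.injEq]; exact fun he => hdiff (Or.inl ⟨he.2, he.1⟩)) z hz1 hz2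
    obtain ⟨i, hi⟩ := hrange
    refine ⟨i, hi.symm, ?_, ?_⟩
    · exact (K.endpts β α ha i (by rw [hi]; exact hz1)).symm
    · exact (K.endpts δ γ hc i (by rw [hi]; exact hz2)).symm

lemma corner_nbr (K : SubdividedK4 G) (m j : Fin 4) (hmj : m ≠ j) :
    ∃ w, G.Adj (K.b m) w ∧ w ∈ (kwalk K m j hmj).support ∧
      (∀ k, w = K.b k → k = j) := by
  have hne : K.b m ≠ K.b j := fun he => hmj (K.inj he)
  have hnil : ¬ (kwalk K m j hmj).Nil := Walk.not_nil_of_ne hne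
  have hlen : 1 ≤ (kwalk K m j hmj).length := by
    by_contra hcon
    exact hnil (Walk.nil_iff_length_eq.2 (by omega))
  refine ⟨(kwalk K m j hmj).getVert 1, Walk.adj_snd hnil, ?_, ?_⟩
  · rw [Walk.mem_support_iff_exists_getVert]
    exact ⟨1, rfl, hlen⟩
  · intro k hk
    have hmem : (kwalk K m j hmj).getVert 1 ∈ (kwalk K m j hmj).support := by
      rw [Walk.mem_support_iff_exists_getVert]
      exact ⟨1, rfl, hlen⟩
    rcases kwalk_mem.1 hmem with ⟨h', hz'⟩ | ⟨h', hz'⟩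
    · rcases K.endpts m j h' k (by rw [← hk]; exact hz') with rfl | rfl
      · exact absurd (show G.Adj (K.b k) (K.b k) by have h2 : G.Adj (K.b k) ((kwalk K k j hmj).getVert 1) := Walk.adj_snd hnil; rw [hk] at h2; exact h2) (G.irrefl)
      · rfl
    · rcases K.endpts j m h' k (by rw [← hk]; exact hz') with rfl | rfl
      · rfl
      · exact absurd (show G.Adj (K.b k) (K.b k) by have h2 : G.Adj (K.b k) ((kwalk K k j hmj).getVert 1) := Walk.adj_snd hnil; rw [hk] at h2; exact h2) (G.irrefl)

lemma corner_essential (K : SubdividedK4 G) (m : Fin 4) : Essential G (K.b m) := by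
  have hex : ∀ m : Fin 4, ∃ j₁ j₂ j₃ : Fin 4, m ≠ j₁ ∧ m ≠ j₂ ∧ m ≠ j₃ ∧
      j₁ ≠ j₂ ∧ j₁ ≠ j₃ ∧ j₂ ≠ j₃ := by decide
  obtain ⟨j₁, j₂, j₃, hm1, hm2, hm3, h12, h13, h23⟩ := hex m
  obtain ⟨w₁, hw₁, hm₁, hk₁⟩ := corner_nbr K m j₁ hm1
  obtain ⟨w₂, hw₂, hm₂, hk₂⟩ := corner_nbr K m j₂ hm2
  obtain ⟨w₃, hw₃, hm₃, hk₃⟩ := corner_nbr K m j₃ hm3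
  have hdist : ∀ (ja jb : Fin 4) (hja : m ≠ ja) (hjb : m ≠ jb), ja ≠ jb →
      ∀ wa wb, wa ∈ (kwalk K m ja hja).support → wb ∈ (kwalk K m jb hjb).support →
      (∀ k, wa = K.b k → k = ja) → (∀ k, wb = K.b k → k = jb) → wa ≠ wb := by
    intro ja jb hja hjb hab wa wb hwa hwb hka hkb he
    subst he
    obtain ⟨i, hi, _, _⟩ := kwalk_inter
      (by rintro (⟨-, he2⟩ | ⟨he1, -⟩)
          · exact hab he2
          · exact hjb he1) hwa hwb
    exact hab (((hka i hi).symm).trans (hkb i hi))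
  have hw12 : w₁ ≠ w₂ := hdist j₁ j₂ hm1 hm2 h12 w₁ w₂ hm₁ hm₂ hk₁ hk₂
  have hw13 : w₁ ≠ w₃ := hdist j₁ j₃ hm1 hm3 h13 w₁ w₃ hm₁ hm₃ hk₁ hk₃
  have hw23 : w₂ ≠ w₃ := hdist j₂ j₃ hm2 hm3 h23 w₂ w₃ hm₂ hm₃ hk₂ hk₃
  have hsub : ({w₁, w₂, w₃} : Set V) ⊆ G.neighborSet (K.b m) := by
    intro z hz
    rcases hz with rfl | rfl | rfl
    · exact hw₁
    · exact hw₂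
    · exact hw₃
  have hcard : ({w₁, w₂, w₃} : Set V).ncard = 3 := by
    rw [Set.ncard_insert_of_notMem (by simp [hw12, hw13]), Set.ncard_pair hw23]
  unfold Essential
  calc (3 : ℕ) = ({w₁, w₂, w₃} : Set V).ncard := hcard.symm
    _ ≤ (G.neighborSet (K.b m)).ncard := Set.ncard_le_ncard hsub (Set.toFinite _)

end K4
end CAB
namespace CAB
open SimpleGraph Walk
set_option linter.unusedSectionVars false
set_option linter.unusedVariables false

variable {V : Type} {G : SimpleGraph V}

lemma walk_split_avoid [DecidableEq V] {s t v c : V} {W : G.Walk s t} (hW : W.IsPath)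
    (hv : v ∈ W.support) (hcv : c ≠ v) :
    (∃ q : G.Walk v s, (∀ z ∈ q.support, z ∈ W.support) ∧ c ∉ q.support) ∨
    (∃ q : G.Walk v t, (∀ z ∈ q.support, z ∈ W.support) ∧ c ∉ q.support) := by
  induction W with
  | nil =>
    simp only [Walk.support_nil, List.mem_singleton] at hv
    subst hv
    exact Or.inl ⟨Walk.nil, by simp, by simpa using hcv⟩
  | @cons u u₂ t h W' ih =>
    by_cases hvu : v = u
    · subst hvu
      exact Or.inl ⟨Walk.nil, by simp, by simpa using hcv⟩
    · have hv' : v ∈ W'.support := by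
        rcases (by simpa using hv : v = u ∨ v ∈ W'.support) with h' | h'
        · exact absurd h' hvu
        · exact h'
      by_cases hcu : c = u
      · right
        refine ⟨W'.dropUntil v hv', fun z hz => ?_, fun hc => ?_⟩
        · simp only [Walk.support_cons, List.mem_cons]
          exact Or.inr (Walk.support_dropUntil_subset _ _ hz)
        · exact ((Walk.cons_isPath_iff _ _).1 hW).2
            (hcu ▸ Walk.support_dropUntil_subset _ hv' hc)
      · rcases ih ((Walk.cons_isPath_iff _ _).1 hW).1 hv' with ⟨q, hqs, hqc⟩ | ⟨q, hqs, hqc⟩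
        · left
          refine ⟨q.concat h.symm, fun z hz => ?_, fun hc => ?_⟩
          · rw [Walk.support_concat, List.mem_append] at hz
            simp only [Walk.support_cons, List.mem_cons]
            rcases hz with hz | hz
            · exact Or.inr (hqs z hz)
            · simp only [List.mem_singleton] at hz
              exact Or.inl hz
          · rw [Walk.support_concat, List.mem_append] at hc
            rcases hc with hc | hc
            · exact hqc hc
            · simp only [List.mem_singleton] at hc
              exact hcu hc
        · right
          refine ⟨q, fun z hz => ?_, hqc⟩
          simp only [Walk.support_cons, List.mem_cons]
          exact Or.inr (hqs z hz)

section K4b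
variable [Fintype V] [DecidableEq V]

lemma corner_route (K : SubdividedK4 G) {m n : Fin 4} (hmn : m ≠ n) {c : V}
    (hcm : c ≠ K.b m) (hcn : c ≠ K.b n) :
    ∃ W : G.Walk (K.b m) (K.b n), (∀ z ∈ W.support, z ∈ K.verts) ∧ c ∉ W.support := by
  by_cases hc : c ∈ (kwalk K m n hmn).support
  · obtain ⟨k, hkm, hkn⟩ : ∃ k : Fin 4, k ≠ m ∧ k ≠ n := by
      have : ∀ m n : Fin 4, ∃ k, k ≠ m ∧ k ≠ n := by decide
      exact this m n
    refine ⟨(kwalk K m k (Ne.symm hkm)).append (kwalk K k n hkn), fun z hz => ?_, fun hcW => ?_⟩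
    · rw [Walk.mem_support_append_iff] at hz
      rcases hz with hz | hz
      · exact kwalk_verts z hz
      · exact kwalk_verts z hz
    · rw [Walk.mem_support_append_iff] at hcW
      rcases hcW with h' | h'
      · obtain ⟨i, hi, hi1, hi2⟩ := kwalk_inter
          (by rintro (⟨-, he2⟩ | ⟨he1, -⟩)
              · exact hkn he2.symm
              · exact hkm he1.symm) hc h'
        rcases hi1 with rfl | rfl
        · exact hcm hi
        · rcases hi2 with he | he
          · exact hmn he.symm
          · exact hkn he.symm
      · obtain ⟨i, hi, hi1, hi2⟩ := kwalk_inter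
          (by rintro (⟨he1, -⟩ | ⟨-, he2⟩)
              · exact hkm he1.symm
              · exact hkn he2.symm) hc h'
        rcases hi1 with rfl | rfl
        · rcases hi2 with he | he
          · exact hkm he.symm
          · exact hmn he
        · exact hcn hi
  · exact ⟨kwalk K m n hmn, kwalk_verts, hc⟩

lemma corner_detour (K : SubdividedK4 G) {m n : Fin 4} (hmn : m ≠ n) {a c : V}
    (ha : a ∈ (kwalk K m n hmn).support) (haK : ∀ i, a ≠ K.b i)
    (hcm : c ≠ K.b m) (hcn : c ≠ K.b n) :
    ∃ W : G.Walk (K.b m) (K.b n), (∀ z ∈ W.support, z ∈ K.verts) ∧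
      c ∉ W.support ∧ a ∉ W.support := by
  obtain ⟨k, l, hkm, hkn, hlm, hln, hkl⟩ :
      ∃ k l : Fin 4, k ≠ m ∧ k ≠ n ∧ l ≠ m ∧ l ≠ n ∧ k ≠ l := by
    have : ∀ m n : Fin 4, m ≠ n → ∃ k l : Fin 4, k ≠ m ∧ k ≠ n ∧ l ≠ m ∧ l ≠ n ∧ k ≠ l := by
      decide
    exact this m n hmn
  -- `a` is on no kwalk other than the one from `m` to `n`
  have hano : ∀ (α β : Fin 4) (hαβ : α ≠ β),
      ¬((α = m ∧ β = n) ∨ (α = n ∧ β = m)) → a ∉ (kwalk K α β hαβ).support := by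
    intro α β hαβ hd haw
    obtain ⟨i, hi, _, _⟩ := kwalk_inter
      (by rintro (⟨he1, he2⟩ | ⟨he1, he2⟩)
          · exact hd (Or.inl ⟨he1, he2⟩)
          · exact hd (Or.inr ⟨he1, he2⟩)) haw ha
    exact haK i hi
  have hWk : ∀ z ∈ ((kwalk K m k (Ne.symm hkm)).append (kwalk K k n hkn)).support,
      z ∈ K.verts := by
    intro z hz
    rw [Walk.mem_support_append_iff] at hz
    rcases hz with hz | hz <;> exact kwalk_verts z hz
  have hWl : ∀ z ∈ ((kwalk K m l (Ne.symm hlm)).append (kwalk K l n hln)).support,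
      z ∈ K.verts := by
    intro z hz
    rw [Walk.mem_support_append_iff] at hz
    rcases hz with hz | hz <;> exact kwalk_verts z hz
  have haWk : a ∉ ((kwalk K m k (Ne.symm hkm)).append (kwalk K k n hkn)).support := by
    rw [Walk.mem_support_append_iff]
    rintro (h' | h')
    · exact hano m k (Ne.symm hkm)
        (by rintro (⟨-, he⟩ | ⟨he, -⟩)
            · exact hkn he
            · exact hmn he) h'
    · exact hano k n hkn
        (by rintro (⟨he, -⟩ | ⟨-, he⟩)
            · exact hkm he
            · exact hmn he.symm) h'
  have haWl : a ∉ ((kwalk K m l (Ne.symm hlm)).append (kwalk K l n hln)).support := by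
    rw [Walk.mem_support_append_iff]
    rintro (h' | h')
    · exact hano m l (Ne.symm hlm)
        (by rintro (⟨-, he⟩ | ⟨he, -⟩)
            · exact hln he
            · exact hmn he) h'
    · exact hano l n hln
        (by rintro (⟨he, -⟩ | ⟨-, he⟩)
            · exact hlm he
            · exact hmn he.symm) h'
  by_cases hck : c ∈ ((kwalk K m k (Ne.symm hkm)).append (kwalk K k n hkn)).support
  · refine ⟨(kwalk K m l (Ne.symm hlm)).append (kwalk K l n hln), hWl, fun hcl => ?_, haWl⟩
    rw [Walk.mem_support_append_iff] at hck hcl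
    have key : ∀ (α β γ δ : Fin 4) (hαβ : α ≠ β) (hγδ : γ ≠ δ),
        ¬((α = γ ∧ β = δ) ∨ (α = δ ∧ β = γ)) →
        c ∈ (kwalk K α β hαβ).support → c ∈ (kwalk K γ δ hγδ).support →
        ∃ i, c = K.b i ∧ (i = α ∨ i = β) ∧ (i = γ ∨ i = δ) := fun _ _ _ _ _ _ hd h1 h2 =>
      kwalk_inter hd h1 h2
    rcases hck with h1 | h1 <;> rcases hcl with h2 | h2
    · obtain ⟨i, hi, hi1, hi2⟩ := key m k m l (Ne.symm hkm) (Ne.symm hlm)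
        (by rintro (⟨-, he⟩ | ⟨he, -⟩)
            · exact hkl he
            · exact hlm he.symm) h1 h2
      rcases hi1 with rfl | rfl
      · exact hcm hi
      · rcases hi2 with he | he
        · exact hkm he
        · exact hkl he
    · obtain ⟨i, hi, hi1, hi2⟩ := key m k l n (Ne.symm hkm) hln
        (by rintro (⟨he, -⟩ | ⟨he, -⟩)
            · exact hlm he.symm
            · exact hmn he) h1 h2
      rcases hi1 with rfl | rfl
      · rcases hi2 with he | he
        · exact hlm he.symm
        · exact hmn he
      · rcases hi2 with he | he
        · exact hkl he
        · exact hkn he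
    · obtain ⟨i, hi, hi1, hi2⟩ := key k n m l hkn (Ne.symm hlm)
        (by rintro (⟨he, -⟩ | ⟨he, -⟩)
            · exact hkm he
            · exact hkl he) h1 h2
      rcases hi1 with rfl | rfl
      · rcases hi2 with he | he
        · exact hkm he
        · exact hkl he
      · rcases hi2 with he | he
        · exact hmn he.symm
        · exact hln he.symm
    · obtain ⟨i, hi, hi1, hi2⟩ := key k n l n hkn hln
        (by rintro (⟨he, -⟩ | ⟨he, -⟩)
            · exact hkl he
            · exact hkn he) h1 h2
      rcases hi1 with rfl | rfl
      · rcases hi2 with he | he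
        · exact hkl he
        · exact hkn he
      · exact hcn hi
  · exact ⟨(kwalk K m k (Ne.symm hkm)).append (kwalk K k n hkn), hWk, hck, haWk⟩

end K4b
end CAB
namespace CAB
open SimpleGraph Walk
set_option linter.unusedSectionVars false
set_option linter.unusedVariables false

variable {V : Type} {G : SimpleGraph V}

section K4c
variable [Fintype V] [DecidableEq V]

lemma kreach (K : SubdividedK4 G) {s t : V} (hs : s ∈ K.verts) (ht : t ∈ K.verts) {c : V}
    (hcs : c ≠ s) (hct : c ≠ t) :
    ∃ W : G.Walk s t, (∀ z ∈ W.support, z ∈ K.verts) ∧ c ∉ W.support := by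
  have hstep : ∀ {u : V}, u ∈ K.verts → c ≠ u → ∃ (m : Fin 4) (q : G.Walk u (K.b m)),
      (∀ z ∈ q.support, z ∈ K.verts) ∧ c ∉ q.support := by
    rintro u ⟨i, j, hij, hu⟩ hcu
    rcases walk_split_avoid (K.isPath i j hij) hu hcu with ⟨q, hqs, hqc⟩ | ⟨q, hqs, hqc⟩
    · exact ⟨i, q, fun z hz => ⟨i, j, hij, hqs z hz⟩, hqc⟩
    · exact ⟨j, q, fun z hz => ⟨i, j, hij, hqs z hz⟩, hqc⟩
  obtain ⟨m, qs, hqsK, hqsc⟩ := hstep hs hcs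
  obtain ⟨n, qt, hqtK, hqtc⟩ := hstep ht hct
  by_cases hmn : m = n
  · subst hmn
    refine ⟨qs.append qt.reverse, fun z hz => ?_, fun hc => ?_⟩
    · rw [Walk.mem_support_append_iff] at hz
      rcases hz with hz | hz
      · exact hqsK z hz
      · rw [Walk.support_reverse, List.mem_reverse] at hz
        exact hqtK z hz
    · rw [Walk.mem_support_append_iff] at hc
      rcases hc with hc | hc
      · exact hqsc hc
      · rw [Walk.support_reverse, List.mem_reverse] at hc
        exact hqtc hc
  · have hcm : c ≠ K.b m := fun h => hqsc (h ▸ Walk.end_mem_support qs)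
    have hcn : c ≠ K.b n := fun h => hqtc (h ▸ Walk.end_mem_support qt)
    obtain ⟨R, hRs, hRc⟩ := corner_route K hmn hcm hcn
    refine ⟨qs.append (R.append qt.reverse), fun z hz => ?_, fun hc => ?_⟩
    · rw [Walk.mem_support_append_iff] at hz
      rcases hz with hz | hz
      · exact hqsK z hz
      · rw [Walk.mem_support_append_iff] at hz
        rcases hz with hz | hz
        · exact hRs z hz
        · rw [Walk.support_reverse, List.mem_reverse] at hz
          exact hqtK z hz
    · rw [Walk.mem_support_append_iff] at hc
      rcases hc with hc | hc
      · exact hqsc hc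
      · rw [Walk.mem_support_append_iff] at hc
        rcases hc with hc | hc
        · exact hRc hc
        · rw [Walk.support_reverse, List.mem_reverse] at hc
          exact hqtc hc

lemma walk_follow {T : Set V} {v : V} :
    ∀ {s : V} (q : G.Walk s v), q.IsPath → s ∈ T →
      (∀ z ∈ q.support, z ≠ v → ∀ w, G.Adj z w → z ∈ T → w ∈ T) → v ∈ T := by
  intro s q
  induction q with
  | nil => exact fun _ hs _ => hs
  | @cons u u₂ w hadj q'' ih =>
    intro hqp hs hcond
    have huv : u ≠ w := by
      intro he
      exact ((Walk.cons_isPath_iff _ _).1 hqp).2 (he ▸ Walk.end_mem_support q'')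
    have hu2 : u₂ ∈ T := hcond u (by simp) huv u₂ hadj hs
    exact ih ((Walk.cons_isPath_iff _ _).1 hqp).1 hu2
      (fun z hz hzv w' hw' hzT => hcond z (by simp [hz]) hzv w' hw' hzT)

lemma absorb {x y : V} {p : G.Walk x y} (hbr : IsBranch G p) {K : SubdividedK4 G}
    {i j : Fin 4} {hij : i < j} {w₀ : V} (hw₀p : w₀ ∈ p.support) (hw₀x : w₀ ≠ x)
    (hw₀y : w₀ ≠ y) (hw₀P : w₀ ∈ (K.path i j hij).support) :
    ∀ v ∈ p.support, v ∈ (K.path i j hij).support := by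
  have hstep : ∀ z ∈ p.support, z ≠ x → z ≠ y → z ∈ (K.path i j hij).support →
      ∀ w, G.Adj z w → w ∈ (K.path i j hij).support := by
    intro z hz hzx hzy hzP w hw
    have hness := hbr.2.2.2 z hz hzx hzy
    have hzi : z ≠ K.b i := fun he => hness (he ▸ corner_essential K i)
    have hzj : z ≠ K.b j := fun he => hness (he ▸ corner_essential K j)
    exact internal_nbrs_mem (K.isPath i j hij) hzP hzi hzj hness hw
  intro v hv
  by_cases hvw : v = w₀
  · subst hvw; exact hw₀P
  obtain ⟨q, hqp, hqsub, hqx, hqy⟩ := hseg hbr.1 hw₀p hv (fun h' => hvw h'.symm)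
  have hcond0 : ∀ z ∈ q.support, z ≠ v → z ≠ x ∧ z ≠ y := by
    intro z hz hzv
    constructor
    · intro he
      subst he
      rcases hqx hz with h' | h'
      · exact hw₀x h'.symm
      · exact hzv h'
    · intro he
      subst he
      rcases hqy hz with h' | h'
      · exact hw₀y h'.symm
      · exact hzv h'
  exact walk_follow (T := {z | z ∈ (K.path i j hij).support}) q hqp hw₀P (fun z hz hzv w hw hzT =>
    hstep z (hqsub z hz) (hcond0 z hz hzv).1 (hcond0 z hz hzv).2 hzT w hw)

end K4c
end CAB
namespace CAB
open SimpleGraph Walk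
set_option linter.unusedSectionVars false
set_option linter.unusedVariables false

variable {V : Type} {G : SimpleGraph V}

section K4d
variable [Fintype V] [DecidableEq V] {x y a : V} {p : G.Walk x y}

lemma off_to_P (hbr : IsBranch G p) (hasupp : a ∈ p.support) (hax : a ≠ x) (hay : a ≠ y)
    {K : SubdividedK4 G} {i j : Fin 4} {hij : i < j}
    (hPsub : ∀ z ∈ p.support, z ∈ (K.path i j hij).support)
    {c : V} (hc : c ∉ p.support)
    (hkey : ∀ w w', G.Adj a w → G.Adj a w' → w ≠ w' → ¬ AvoidReach G {a, c} w w') :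
    c ∈ (K.path i j hij).support := by
  by_contra hcP
  have hness := hbr.2.2.2 a hasupp hax hay
  have haK : ∀ k, a ≠ K.b k := fun k he => hness (he ▸ corner_essential K k)
  have haP : a ∈ (K.path i j hij).support := hPsub a hasupp
  have hijne : i ≠ j := ne_of_lt hij
  obtain ⟨w₁, w₂, P₁, P₂, hradj1, hradj2, hrne, _, _, hrn1, hrn2, hrs1, hrs2, _⟩ :=
    path_split (K.isPath i j hij) haP (haK i).symm (haK j).symm
  have hcbi : c ≠ K.b i := fun he => hcP (by rw [he]; exact Walk.start_mem_support _)
  have hcbj : c ≠ K.b j := fun he => hcP (by rw [he]; exact Walk.end_mem_support _)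
  have hamem : a ∈ (kwalk K i j hijne).support := by
    rw [kwalk_mem]; exact Or.inl ⟨hij, haP⟩
  obtain ⟨R, hRK, hRc, hRa⟩ := corner_detour K hijne hamem haK hcbi hcbj
  have c1 : AvoidReach G {a, c} w₁ (K.b i) := by
    refine avoid_symm ⟨P₁, fun z hz => ?_⟩
    rw [not_mem_pair]
    exact ⟨fun h => hrn1 (h ▸ hz), fun h => hcP (h ▸ hrs1 z hz)⟩
  have c2 : AvoidReach G {a, c} (K.b i) (K.b j) := by
    refine ⟨R, fun z hz => ?_⟩
    rw [not_mem_pair]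
    exact ⟨fun h => hRa (h ▸ hz), fun h => hRc (h ▸ hz)⟩
  have c3 : AvoidReach G {a, c} (K.b j) w₂ := by
    refine avoid_symm ⟨P₂, fun z hz => ?_⟩
    rw [not_mem_pair]
    exact ⟨fun h => hrn2 (h ▸ hz), fun h => hcP (h ▸ hrs2 z hz)⟩
  exact hkey w₁ w₂ hradj1 hradj2 hrne (avoid_trans c1 (avoid_trans c2 c3))

lemma case3b (hbr : IsBranch G p) (hasupp : a ∈ p.support) (hax : a ≠ x) (hay : a ≠ y)
    {K : SubdividedK4 G} (hxK : x ∈ K.verts) (hyK : y ∈ K.verts) (haK : a ∉ K.verts)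
    {c : V} (hc : c ∉ p.support)
    (hkey : ∀ w w', G.Adj a w → G.Adj a w' → w ≠ w' → ¬ AvoidReach G {a, c} w w') :
    False := by
  obtain ⟨u₁, u₂, W₁, W₂, h1, h2, h12, hN, _, _, hn1, hn2, hs1, hs2, _⟩ :=
    branch_bundle hbr hasupp hax hay
  have hxy : ¬ AvoidReach G {a, c} x y := sep_xy hc hkey h1 h2 h12 hn1 hn2 hs1 hs2
  have hcx : c ≠ x := fun h => hc (h ▸ Walk.start_mem_support p)
  have hcy : c ≠ y := fun h => hc (h ▸ Walk.end_mem_support p)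
  obtain ⟨W, hWK, hWc⟩ := kreach K hxK hyK hcx hcy
  refine hxy ⟨W, fun z hz => ?_⟩
  rw [not_mem_pair]
  exact ⟨fun h => haK (h ▸ hWK z hz), fun h => hWc (h ▸ hz)⟩

lemma case3a (hvtx : NoSepVertex G) (hbr : IsBranch G p) (hasupp : a ∈ p.support)
    (hax : a ≠ x) (hay : a ≠ y) {K : SubdividedK4 G} (haK : a ∉ K.verts)
    {c₁ c₂ : V} (hc₁K : c₁ ∈ K.verts) (hc₂K : c₂ ∈ K.verts)
    (hc₁ : c₁ ∉ p.support) (hc₂ : c₂ ∉ p.support) (hc₁₂ : c₁ ≠ c₂)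
    (hside : x ∈ K.verts ∨ y ∈ K.verts)
    (hkey₁ : ∀ w w', G.Adj a w → G.Adj a w' → w ≠ w' → ¬ AvoidReach G {a, c₁} w w')
    (hkey₂ : ∀ w w', G.Adj a w → G.Adj a w' → w ≠ w' → ¬ AvoidReach G {a, c₂} w w') :
    False := by
  obtain ⟨u₁, u₂, W₁, W₂, h1, h2, h12, hN, _, _, hn1, hn2, hs1, hs2, _⟩ :=
    branch_bundle hbr hasupp hax hay
  have hu₁p : u₁ ∈ p.support := hs1 _ (Walk.end_mem_support W₁)
  have hu₂p : u₂ ∈ p.support := hs2 _ (Walk.start_mem_support W₂)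
  have F1 : ¬ AvoidReach G {a, c₁} u₁ u₂ := hkey₁ u₁ u₂ h1 h2 h12
  have F2 : ¬ AvoidReach G {a, c₂} u₁ u₂ := hkey₂ u₁ u₂ h1 h2 h12
  have hu₁m : u₁ ∉ ({a, c₁} : Set V) :=
    not_mem_pair.2 ⟨h1.ne', fun h => hc₁ (h ▸ hu₁p)⟩
  have hu₂m : u₂ ∉ ({a, c₁} : Set V) :=
    not_mem_pair.2 ⟨h2.ne', fun h => hc₁ (h ▸ hu₂p)⟩
  have hc₁x : c₁ ≠ x := fun h => hc₁ (h ▸ Walk.start_mem_support p)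
  have hc₂x : c₂ ≠ x := fun h => hc₂ (h ▸ Walk.start_mem_support p)
  have hc₁y : c₁ ≠ y := fun h => hc₁ (h ▸ Walk.end_mem_support p)
  have hc₂y : c₂ ≠ y := fun h => hc₂ (h ▸ Walk.end_mem_support p)
  have hc₁a : c₁ ≠ a := fun h => hc₁ (h ▸ hasupp)
  have hc₂a : c₂ ≠ a := fun h => hc₂ (h ▸ hasupp)
  have hness := hbr.2.2.2 a hasupp hax hay
  have hKreach : ∀ (e : V), e ∈ K.verts → ∀ (f : V), f ∈ K.verts → ∀ (c : V),
      c ≠ e → c ≠ f → AvoidReach G {a, c} e f := by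
    intro e he f hf c hce hcf
    obtain ⟨W, hWK, hWc⟩ := kreach K he hf hce hcf
    refine ⟨W, fun z hz => ?_⟩
    rw [not_mem_pair]
    exact ⟨fun h => haK (h ▸ hWK z hz), fun h => hWc (h ▸ hz)⟩
  rcases hside with hxK | hyK
  · -- x ∈ K.verts; use the u₂-side neighbour of c₁
    obtain ⟨w₁, hw₁adj, hr⟩ := reach_nbr' hvtx hu₂m hu₁m (fun hh => F1 (avoid_symm hh))
    obtain ⟨P₁, hP₁⟩ := hr
    by_cases hc₂P : c₂ ∈ P₁.support
    · have r1 : AvoidReach G {a, c₁} u₁ x := avoid_symm (chain_avoid hc₁ hn1 hs1)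
      have r2 : AvoidReach G {a, c₁} x c₂ := hKreach x hxK c₂ hc₂K c₁ hc₁x hc₁₂
      have r3 : AvoidReach G {a, c₁} c₂ u₂ :=
        avoid_symm ⟨P₁.takeUntil c₂ hc₂P, fun z hz =>
          hP₁ z (Walk.support_takeUntil_subset _ _ hz)⟩
      exact F1 (avoid_trans r1 (avoid_trans r2 r3))
    · have hw₁c₂ : w₁ ≠ c₂ := fun h => hc₂P (h ▸ Walk.end_mem_support P₁)
      have hw₁a : w₁ ≠ a := by
        intro h
        have hadj : G.Adj a c₁ := (h ▸ hw₁adj).symm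
        rcases nonessential_nbr_cases hness h1 h2 h12 hadj with rfl | rfl
        · exact hc₁ hu₁p
        · exact hc₁ hu₂p
      have r1 : AvoidReach G {a, c₂} u₁ x := avoid_symm (chain_avoid hc₂ hn1 hs1)
      have r2 : AvoidReach G {a, c₂} x c₁ := hKreach x hxK c₁ hc₁K c₂ hc₂x (Ne.symm hc₁₂)
      have r3 : AvoidReach G {a, c₂} c₁ w₁ := by
        refine avoid_edge hw₁adj ?_ ?_ <;> rw [not_mem_pair]
        · exact ⟨hc₁a, hc₁₂⟩
        · exact ⟨hw₁a, hw₁c₂⟩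
      have r4 : AvoidReach G {a, c₂} w₁ u₂ := by
        refine avoid_symm ⟨P₁, fun z hz => ?_⟩
        rw [not_mem_pair]
        exact ⟨(not_mem_pair.1 (hP₁ z hz)).1, fun h => hc₂P (h ▸ hz)⟩
      exact F2 (avoid_trans r1 (avoid_trans r2 (avoid_trans r3 r4)))
  · -- y ∈ K.verts; mirror using the u₁-side neighbour of c₁
    obtain ⟨w₁, hw₁adj, hr⟩ := reach_nbr' hvtx hu₁m hu₂m F1
    obtain ⟨P₁, hP₁⟩ := hr
    by_cases hc₂P : c₂ ∈ P₁.support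
    · have r1 : AvoidReach G {a, c₁} u₂ y := chain_avoid hc₁ hn2 hs2
      have r2 : AvoidReach G {a, c₁} y c₂ := hKreach y hyK c₂ hc₂K c₁ hc₁y hc₁₂
      have r3 : AvoidReach G {a, c₁} c₂ u₁ :=
        avoid_symm ⟨P₁.takeUntil c₂ hc₂P, fun z hz =>
          hP₁ z (Walk.support_takeUntil_subset _ _ hz)⟩
      exact F1 (avoid_symm (avoid_trans r1 (avoid_trans r2 r3)))
    · have hw₁c₂ : w₁ ≠ c₂ := fun h => hc₂P (h ▸ Walk.end_mem_support P₁)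
      have hw₁a : w₁ ≠ a := by
        intro h
        have hadj : G.Adj a c₁ := (h ▸ hw₁adj).symm
        rcases nonessential_nbr_cases hness h1 h2 h12 hadj with rfl | rfl
        · exact hc₁ hu₁p
        · exact hc₁ hu₂p
      have r1 : AvoidReach G {a, c₂} u₂ y := chain_avoid hc₂ hn2 hs2
      have r2 : AvoidReach G {a, c₂} y c₁ := hKreach y hyK c₁ hc₁K c₂ hc₂y (Ne.symm hc₁₂)
      have r3 : AvoidReach G {a, c₂} c₁ w₁ := by
        refine avoid_edge hw₁adj ?_ ?_ <;> rw [not_mem_pair]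
        · exact ⟨hc₁a, hc₁₂⟩
        · exact ⟨hw₁a, hw₁c₂⟩
      have r4 : AvoidReach G {a, c₂} w₁ u₁ := by
        refine avoid_symm ⟨P₁, fun z hz => ?_⟩
        rw [not_mem_pair]
        exact ⟨(not_mem_pair.1 (hP₁ z hz)).1, fun h => hc₂P (h ▸ hz)⟩
      exact F2 (avoid_symm (avoid_trans r1 (avoid_trans r2 (avoid_trans r3 r4))))

end K4d
end CAB
namespace CAB
open SimpleGraph Walk
set_option linter.unusedSectionVars false
set_option linter.unusedVariables false

variable {V : Type} {G : SimpleGraph V}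

section Final
variable [Fintype V] [DecidableEq V] {x y a : V} {p : G.Walk x y}

lemma condA2' (hvtx : NoSepVertex G) (hbr : IsBranch G p) (hasupp : a ∈ p.support)
    (hax : a ≠ x) (hay : a ≠ y) {A : Set V} (hA1 : CondA1 G A) (haA : a ∈ A)
    (hA2 : CondA2 G A) : CondA2 G (A ∪ {z | z ∈ p.support}) := by
  intro K hcard
  have hkeyfun : ∀ c ∈ A, c ∉ p.support → ∀ w w', G.Adj a w → G.Adj a w' → w ≠ w' →
      ¬ AvoidReach G {a, c} w w' := fun c hcA hc =>
    partner_key hvtx hbr hasupp hax hay hA1 haA hcA hc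
  by_cases hint : ∃ v ∈ p.support, v ≠ x ∧ v ≠ y ∧ v ∈ K.verts
  · obtain ⟨v₀, hv₀p, hv₀x, hv₀y, i, j, hij, hv₀P⟩ := hint
    have habs : ∀ v ∈ p.support, v ∈ (K.path i j hij).support :=
      absorb hbr hv₀p hv₀x hv₀y hv₀P
    refine ⟨i, j, hij, ?_⟩
    rintro e (heA | hes)
    · by_cases hesupp : e ∈ p.support
      · exact habs e hesupp
      · exact off_to_P hbr hasupp hax hay habs hesupp (hkeyfun e heA hesupp)
    · exact habs e hes
  · exfalso
    push_neg at hint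
    have haK : a ∉ K.verts := hint a hasupp hax hay
    by_cases hA2card : 3 ≤ (A ∩ K.verts).ncard
    · obtain ⟨i, j, hij, hall⟩ := hA2 K hA2card
      exact haK ⟨i, j, hij, hall a haA⟩
    · set C : Set V := (A ∩ K.verts) \ {x, y} with hC
      have hCprops : ∀ c ∈ C, c ∈ A ∧ c ∈ K.verts ∧ c ∉ p.support := by
        rintro c ⟨⟨hcA, hcK⟩, hcxy⟩
        rw [not_mem_pair] at hcxy
        exact ⟨hcA, hcK, fun hcs => hint c hcs hcxy.1 hcxy.2 hcK⟩
      have hsub : (A ∪ {z | z ∈ p.support}) ∩ K.verts ⊆ C ∪ ({x, y} ∩ K.verts) := by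
        rintro e ⟨heA', heK⟩
        rcases heA' with heA | hes
        · by_cases hexy : e ∈ ({x, y} : Set V)
          · exact Or.inr ⟨hexy, heK⟩
          · exact Or.inl ⟨⟨heA, heK⟩, hexy⟩
        · have hexy : e ∈ ({x, y} : Set V) := by
            by_contra hexy
            rw [not_mem_pair] at hexy
            exact hint e hes hexy.1 hexy.2 heK
          exact Or.inr ⟨hexy, heK⟩
      have hCA : C ⊆ A ∩ K.verts := Set.diff_subset
      have hCcard2 : C.ncard ≤ 2 := by
        have := Set.ncard_le_ncard hCA (Set.toFinite _)
        omega
      have hxyKcard : (({x, y} : Set V) ∩ K.verts).ncard ≤ 2 := by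
        calc (({x, y} : Set V) ∩ K.verts).ncard ≤ ({x, y} : Set V).ncard :=
              Set.ncard_le_ncard Set.inter_subset_left (Set.toFinite _)
          _ ≤ 2 := by
              calc ({x, y} : Set V).ncard ≤ ({y} : Set V).ncard + 1 := Set.ncard_insert_le _ _
                _ = 2 := by rw [Set.ncard_singleton]
      have hchain : 3 ≤ C.ncard + (({x, y} : Set V) ∩ K.verts).ncard := by
        calc (3 : ℕ) ≤ ((A ∪ {z | z ∈ p.support}) ∩ K.verts).ncard := hcard
          _ ≤ (C ∪ (({x, y} : Set V) ∩ K.verts)).ncard :=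
              Set.ncard_le_ncard hsub (Set.toFinite _)
          _ ≤ C.ncard + (({x, y} : Set V) ∩ K.verts).ncard := Set.ncard_union_le _ _
      by_cases h2C : 2 ≤ C.ncard
      · obtain ⟨c₁, c₂, hc₁C, hc₂C, hne⟩ := (Set.one_lt_ncard_iff (Set.toFinite C)).1 (by omega)
        have hside : x ∈ K.verts ∨ y ∈ K.verts := by
          by_contra hcon
          push_neg at hcon
          have hempty : (({x, y} : Set V) ∩ K.verts) = ∅ := by
            ext e
            simp only [Set.mem_inter_iff, Set.mem_empty_iff_false, iff_false, not_and]
            rintro (rfl | rfl)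
            · exact hcon.1
            · exact hcon.2
          have hsub2 : (A ∪ {z | z ∈ p.support}) ∩ K.verts ⊆ A ∩ K.verts := by
            intro e he
            rcases hsub he with h' | h'
            · exact hCA h'
            · rw [hempty] at h'
              exact absurd h' (Set.notMem_empty e)
          exact hA2card (le_trans hcard (Set.ncard_le_ncard hsub2 (Set.toFinite _)))
        obtain ⟨hc₁A, hc₁K, hc₁s⟩ := hCprops c₁ hc₁C
        obtain ⟨hc₂A, hc₂K, hc₂s⟩ := hCprops c₂ hc₂C
        exact case3a hvtx hbr hasupp hax hay haK hc₁K hc₂K hc₁s hc₂s hne hside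
          (hkeyfun c₁ hc₁A hc₁s) (hkeyfun c₂ hc₂A hc₂s)
      · have h1C : C.ncard = 1 := by omega
        have hxyK2 : x ∈ K.verts ∧ y ∈ K.verts := by
          by_contra hcon
          have h1 : (({x, y} : Set V) ∩ K.verts).ncard ≤ 1 := by
            rcases not_and_or.1 hcon with hx | hy
            · have : (({x, y} : Set V) ∩ K.verts) ⊆ {y} := by
                rintro e ⟨he, heK⟩
                rcases he with rfl | rfl
                · exact absurd heK hx
                · rfl
              calc _ ≤ ({y} : Set V).ncard := Set.ncard_le_ncard this (Set.toFinite _)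
                _ = 1 := Set.ncard_singleton _
            · have : (({x, y} : Set V) ∩ K.verts) ⊆ {x} := by
                rintro e ⟨he, heK⟩
                rcases he with rfl | rfl
                · rfl
                · exact absurd heK hy
              calc _ ≤ ({x} : Set V).ncard := Set.ncard_le_ncard this (Set.toFinite _)
                _ = 1 := Set.ncard_singleton _
          omega
        obtain ⟨c, hcC⟩ : ∃ c, c ∈ C :=
          Set.nonempty_def.1 (Set.nonempty_of_ncard_ne_zero (by omega))
        obtain ⟨hcA, hcK, hcs⟩ := hCprops c hcC
        exact case3b hbr hasupp hax hay hxyK2.1 hxyK2.2 haK hcs (hkeyfun c hcA hcs)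

end Final
end CAB

/-- If `A` satisfies (A1)–(A3) with `⟨A⟩` infinite and contains an
interior vertex of a branch `β` of `Γ`, then `A` contains every vertex of `β`,
including its essential endpoints. -/
theorem condA_contains_branch (G : SimpleGraph V) [Fintype V]
    (hconn : G.Connected) (htf : G.CliqueFree 3)
    (hvtx : NoSepVertex G) (hedge : NoSepEdge G)
    (hcyc : ¬ IsLongCycleGraph G) (hcut : ∃ a b : V, CutPair G a b)
    (A : Set V) (hAinf : InfiniteSpecial G A)
    (hA1 : CondA1 G A) (hA2 : CondA2 G A) (hA3 : CondA3 G A)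
    (x y : V) (p : G.Walk x y) (hbr : IsBranch G p)
    (a : V) (haA : a ∈ A) (hasupp : a ∈ p.support) (hax : a ≠ x) (hay : a ≠ y) :
    ∀ v ∈ p.support, v ∈ A := by
  classical
  intro v hv
  have hA' := hA3 (A ∪ {z | z ∈ p.support}) Set.subset_union_left
    (CAB.condA1' hvtx hbr hasupp hax hay hA1 haA)
    (CAB.condA2' hvtx hbr hasupp hax hay hA1 haA hA2)
  rw [← hA']
  exact Or.inr hv
end

section
/- Let Γ be a finite simplicial connected triangle-free graph with no separating vertices or edges, and let B be a set of essential vertices with |B| ≥ 2 satisfying (B1) and (B2). Let z be any vertex of Γ not in B. Then at least one of the following holds: (1) there exist a pair {c₁,c₂} of essential vertices and b ∈ B such that z and b lie in different components of Γ∖{c₁,c₂}; or (2) z has valence 2 and lies on a branch between two vertices b₁,b₂ ∈ B. -/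
open SimpleGraph

variable {V : Type}

section Aux

open SimpleGraph Walk

variable {G : SimpleGraph V}

lemma avoid_refl {S : Set V} {x : V} (hx : x ∉ S) : AvoidReach G S x x :=
  ⟨Walk.nil, by simpa using hx⟩

lemma avoid_symm {S : Set V} {x y : V} (h : AvoidReach G S x y) : AvoidReach G S y x := by
  obtain ⟨p, hp⟩ := h
  exact ⟨p.reverse, by simpa [Walk.support_reverse] using hp⟩

lemma avoid_trans {S : Set V} {x y w : V} (h : AvoidReach G S x y) (h' : AvoidReach G S y w) :
    AvoidReach G S x w := by
  obtain ⟨p, hp⟩ := h; obtain ⟨q, hq⟩ := h'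
  refine ⟨p.append q, fun v hv => ?_⟩
  rcases (Walk.mem_support_append_iff _ _).1 hv with h | h
  · exact hp v h
  · exact hq v h

lemma getVert_mem_support' {u v : V} (p : G.Walk u v) {i : ℕ} (hi : i ≤ p.length) :
    p.getVert i ∈ p.support :=
  Walk.mem_support_iff_exists_getVert.2 ⟨i, rfl, hi⟩

lemma path_getVert_inj : ∀ {u v : V} {p : G.Walk u v}, p.IsPath →
    ∀ i, i ≤ p.length → ∀ j, j ≤ p.length → p.getVert i = p.getVert j → i = j
  | u, _, .nil, _, i, hi, j, hj, _ => by simp at hi hj; omega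
  | u, v, .cons h q, hp, 0, _, 0, _, _ => rfl
  | u, v, .cons h q, hp, 0, _, (j+1), hj, hij => by
      exfalso
      have ha : u ∉ q.support := by
        have := hp.support_nodup
        rw [Walk.support_cons, List.nodup_cons] at this
        exact this.1
      apply ha
      rw [Walk.getVert_zero, Walk.getVert_cons_succ] at hij
      rw [hij]
      exact getVert_mem_support' q (by simpa using hj)
  | u, v, .cons h q, hp, (i+1), hi, 0, hj, hij => by
      exfalso
      have ha : u ∉ q.support := by
        have := hp.support_nodup
        rw [Walk.support_cons, List.nodup_cons] at this
        exact this.1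
      apply ha
      rw [Walk.getVert_zero, Walk.getVert_cons_succ] at hij
      rw [← hij]
      exact getVert_mem_support' q (by simpa using hi)
  | u, v, .cons h q, hp, (i+1), hi, (j+1), hj, hij => by
      rw [Walk.getVert_cons_succ, Walk.getVert_cons_succ] at hij
      have := path_getVert_inj hp.of_cons i (by simpa using hi) j (by simpa using hj) hij
      omega

/-- If the neighbor set of `x` is a pair and `s ≠ t` are neighbors, every neighbor is `s` or `t`. -/
lemma adj_pair {x a c s t : V} (h : G.neighborSet x = {a, c}) (hs : G.Adj x s)
    (ht : G.Adj x t) (hst : s ≠ t) : ∀ e, G.Adj x e → e = s ∨ e = t := by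
  intro e he
  have hs' : s ∈ ({a, c} : Set V) := h ▸ hs
  have ht' : t ∈ ({a, c} : Set V) := h ▸ ht
  have he' : e ∈ ({a, c} : Set V) := h ▸ he
  simp only [Set.mem_insert_iff, Set.mem_singleton_iff] at hs' ht' he'
  rcases hs' with rfl | rfl <;> rcases ht' with rfl | rfl <;> rcases he' with rfl | rfl <;> tauto

/-- Interior vertices of a path which are non-essential have as neighbours exactly
the previous and next vertices of the path. -/
lemma interior_adj {s t : V} {p : G.Walk s t} (hp : p.IsPath)
    (hdeg : ∀ v, ¬ Essential G v → ∃ a c, a ≠ c ∧ G.neighborSet v = {a, c})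
    {i : ℕ} (h0 : 0 < i) (hl : i < p.length) (hne : ¬ Essential G (p.getVert i)) :
    ∀ e, G.Adj (p.getVert i) e → e = p.getVert (i - 1) ∨ e = p.getVert (i + 1) := by
  obtain ⟨a, c, hac, hset⟩ := hdeg _ hne
  have h1 : G.Adj (p.getVert i) (p.getVert (i - 1)) := by
    have := p.adj_getVert_succ (i := i - 1) (by omega)
    rw [show i - 1 + 1 = i by omega] at this
    exact this.symm
  have h2 : G.Adj (p.getVert i) (p.getVert (i + 1)) := p.adj_getVert_succ hl
  have hne' : p.getVert (i - 1) ≠ p.getVert (i + 1) := by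
    intro hcl
    have := path_getVert_inj hp (i - 1) (by omega) (i + 1) (by omega) hcl
    omega
  exact adj_pair hset h1 h2 hne'

/-- Walks avoiding `T` starting in a set `S` closed under adjacency off `T` stay in `S`. -/
lemma walk_closed_avoid {S T : Set V}
    (hS : ∀ v ∈ S, v ∉ T → ∀ c, G.Adj v c → c ∈ S) :
    ∀ {x y : V} (q : G.Walk x y), x ∈ S → (∀ v ∈ q.support, v ∉ T) → y ∈ S
  | x, _, .nil, hx, _ => hx
  | x, y, .cons h q, hx, hav => by
      refine walk_closed_avoid hS q (hS x hx (hav x (by simp)) _ h) ?_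
      intro v hv
      exact hav v (by simp [hv])

end Aux
section Aux2

open SimpleGraph Walk

variable {G : SimpleGraph V}

lemma ext_lemma [Fintype V] (hconn : G.Preconnected)
    (hdeg : ∀ v, ¬ Essential G v → ∃ a c, a ≠ c ∧ G.neighborSet v = {a, c})
    (hEss : ∃ e, Essential G e) :
    ∀ (n : ℕ) {y x : V} (p : G.Walk y x), p.IsPath → 1 ≤ p.length →
    (∀ v ∈ p.support, v ≠ x → ¬ Essential G v) →
    Fintype.card V ≤ p.length + n →
    ∃ (b : V) (r : G.Walk x b), (p.append r).IsPath ∧ Essential G b ∧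
      ∀ v ∈ r.support, v ≠ b → ¬ Essential G v := by
  intro n
  induction n with
  | zero =>
    intro y x p hp _ _ hcard
    exfalso
    have := hp.support_nodup.length_le_card
    rw [p.length_support] at this
    omega
  | succ n ih =>
    intro y x p hp hlen hint hcard
    by_cases hx : Essential G x
    · exact ⟨x, Walk.nil, by rwa [Walk.append_nil], hx, by simp⟩
    obtain ⟨a, c, hac, hset⟩ := hdeg x hx
    have hadjux : G.Adj (p.getVert (p.length - 1)) x := by
      have := p.adj_getVert_succ (i := p.length - 1) (by omega)
      rwa [show p.length - 1 + 1 = p.length by omega, p.getVert_length] at this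
    set u := p.getVert (p.length - 1) with hu
    obtain ⟨w, hadjxw, hwu⟩ : ∃ w, G.Adj x w ∧ w ≠ u := by
      have hu' : u ∈ ({a, c} : Set V) := hset ▸ hadjux.symm
      simp only [Set.mem_insert_iff, Set.mem_singleton_iff] at hu'
      rcases hu' with h1 | h1
      · refine ⟨c, ?_, by rw [h1]; exact hac.symm⟩
        have : c ∈ G.neighborSet x := by rw [hset]; simp
        exact this
      · refine ⟨a, ?_, by rw [h1]; exact hac⟩
        have : a ∈ G.neighborSet x := by rw [hset]; simp
        exact this
    by_cases hwp : w ∈ p.support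
    · exfalso
      obtain ⟨i, hgi, hile⟩ := Walk.mem_support_iff_exists_getVert.1 hwp
      have hwx : w ≠ x := fun h => G.irrefl (h ▸ hadjxw)
      have hilt : i < p.length := by
        rcases lt_or_eq_of_le hile with h | h
        · exact h
        · exact absurd (by rw [← hgi, h, p.getVert_length] : w = x) hwx
      by_cases hi0 : i = 0
      · -- w = y : the non-essential vertices form a closed cycle, contradiction
        have hwy : w = y := by rw [← hgi, hi0, p.getVert_zero]
        have hlen2 : 2 ≤ p.length := by
          rcases Nat.lt_or_ge p.length 2 with h | h
          · exfalso
            have : p.length = 1 := by omega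
            apply hwu
            rw [hwy, hu, this]
            simp [p.getVert_zero]
          · exact h
        have hSclosed : ∀ v ∈ p.support, ∀ e, G.Adj v e → e ∈ p.support := by
          intro v hv e he
          obtain ⟨k, hgk, hkle⟩ := Walk.mem_support_iff_exists_getVert.1 hv
          subst hgk
          rcases Nat.eq_zero_or_pos k with rfl | hk0
          · -- v = y
            rw [p.getVert_zero] at he
            have hyne : ¬ Essential G y := by
              refine hint y p.start_mem_support ?_
              intro h
              have := path_getVert_inj hp 0 (by omega) p.length (by omega)
                (by rw [p.getVert_zero, p.getVert_length, h])
              omega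
            obtain ⟨a', c', ha'c', hset'⟩ := hdeg y hyne
            have h1 : G.Adj y (p.getVert 1) := by
              have := p.adj_getVert_succ (i := 0) (by omega)
              rwa [p.getVert_zero] at this
            have h2 : G.Adj y x := hwy ▸ hadjxw.symm
            have hne12 : p.getVert 1 ≠ x := by
              intro h
              have := path_getVert_inj hp 1 (by omega) p.length (by omega)
                (by rw [p.getVert_length, h])
              omega
            rcases adj_pair hset' h1 h2 hne12 e he with rfl | rfl
            · exact getVert_mem_support' p (by omega)
            · exact p.end_mem_support
          rcases Nat.lt_or_ge k p.length with hklt | hkge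
          · rcases interior_adj hp hdeg hk0 hklt
              (hint _ (getVert_mem_support' p hkle) (fun h => by
                have := path_getVert_inj hp k hkle p.length (by omega)
                  (by rw [p.getVert_length, h])
                omega)) e he with rfl | rfl
            · exact getVert_mem_support' p (by omega)
            · exact getVert_mem_support' p (by omega)
          · -- k = p.length, v = x
            have hk : k = p.length := by omega
            subst hk
            rw [p.getVert_length] at he
            have h2 : G.Adj x u := hadjux.symm
            rcases adj_pair hset hadjxw h2 hwu e he with rfl | rfl
            · rw [hwy]; exact p.start_mem_support
            · exact getVert_mem_support' p (by omega)
        obtain ⟨e₀, he₀⟩ := hEss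
        obtain ⟨q⟩ := hconn y e₀
        have he₀S : e₀ ∈ p.support :=
          walk_closed_avoid (T := (∅ : Set V)) (S := {v | v ∈ p.support})
            (fun v hv _ e he => hSclosed v hv e he) q p.start_mem_support (by simp)
        by_cases hex : e₀ = x
        · exact hx (hex ▸ he₀)
        · exact hint e₀ he₀S hex he₀
      · -- 0 < i < p.length : forces w = u
        have hi0' : 0 < i := Nat.pos_of_ne_zero hi0
        have hwne : ¬ Essential G w := hint w hwp hwx
        rcases interior_adj hp hdeg hi0' hilt (hgi ▸ hwne) x (hgi ▸ hadjxw.symm) with h | h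
        · have := path_getVert_inj hp p.length (le_refl _) (i - 1) (by omega)
            (by rw [p.getVert_length, ← h])
          omega
        · have hlen' := path_getVert_inj hp p.length (le_refl _) (i + 1) (by omega)
            (by rw [p.getVert_length, ← h])
          exact hwu (by rw [← hgi, hu]; congr 1; omega)
    · -- extend the path by w
      have hp' : (p.concat hadjxw).IsPath := by
        rw [Walk.isPath_def, Walk.support_concat, List.nodup_append]
        exact ⟨hp.support_nodup, List.nodup_singleton w, by
          intro v hv v' hv' hvv
          simp only [List.mem_singleton] at hv'
          exact hwp (by rw [← hv', ← hvv]; exact hv)⟩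
      obtain ⟨b, r', hpath', hb, hint''⟩ := ih (p.concat hadjxw) hp'
        (by rw [Walk.length_concat]; omega)
        (by
          intro v hv hvw
          rw [Walk.support_concat, List.mem_append] at hv
          rcases hv with hv | hv
          · by_cases hvx : v = x
            · exact hvx ▸ hx
            · exact hint v hv hvx
          · simp only [List.mem_singleton] at hv
            exact absurd hv hvw)
        (by rw [Walk.length_concat]; omega)
      refine ⟨b, Walk.cons hadjxw r', ?_, hb, ?_⟩
      · rw [← Walk.concat_append]
        exact hpath'
      · intro v hv hvb
        rw [Walk.support_cons, List.mem_cons] at hv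
        rcases hv with rfl | hv
        · exact hx
        · exact hint'' v hv hvb

end Aux2
section Aux3

open SimpleGraph Walk

variable {G : SimpleGraph V}

lemma meet_lemma
    (hdeg : ∀ v, ¬ Essential G v → ∃ a c, a ≠ c ∧ G.neighborSet v = {a, c})
    {z b₁ b₂ : V} {q₁ : G.Walk z b₁} {q₂ : G.Walk z b₂}
    (hp₁ : q₁.IsPath) (hp₂ : q₂.IsPath)
    (hi₁ : ∀ v ∈ q₁.support, v ≠ b₁ → ¬ Essential G v)
    (hi₂ : ∀ v ∈ q₂.support, v ≠ b₂ → ¬ Essential G v)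
    (hE₁ : Essential G b₁) (hE₂ : Essential G b₂)
    (hsec : q₁.getVert 1 ≠ q₂.getVert 1) :
    ∀ v, v ∈ q₁.support → v ∈ q₂.support → v = z ∨ (v = b₁ ∧ v = b₂) := by
  intro v hv1 hv2
  by_cases hvb1 : v = b₁
  · subst hvb1
    by_cases hvb2 : v = b₂
    · exact Or.inr ⟨rfl, hvb2⟩
    · exact absurd hE₁ (hi₂ _ hv2 hvb2)
  by_cases hvb2 : v = b₂
  · exact absurd (hvb2 ▸ hE₂) (hi₁ _ hv1 hvb1)
  by_cases hvz : v = z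
  · exact Or.inl hvz
  exfalso
  obtain ⟨j₀, hj₀, hj₀le⟩ := Walk.mem_support_iff_exists_getVert.1 hv2
  have hj₀0 : 0 < j₀ := by
    rcases Nat.eq_zero_or_pos j₀ with rfl | h
    · exact absurd (by rw [← hj₀, q₂.getVert_zero]) hvz
    · exact h
  have hj₀lt : j₀ < q₂.length := by
    rcases lt_or_eq_of_le hj₀le with h | h
    · exact h
    · exact absurd (by rw [← hj₀, h, q₂.getVert_length]) hvb2
  set M := {j : ℕ | 0 < j ∧ j ≤ q₂.length ∧ q₂.getVert j ∈ q₁.support} with hM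
  have hj₀M : j₀ ∈ M := ⟨hj₀0, hj₀le, by rw [hj₀]; exact hv1⟩
  obtain ⟨j, hjM, hjmin⟩ : ∃ j, j ∈ M ∧ ∀ m, m < j → m ∉ M :=
    ⟨sInf M, Nat.sInf_mem ⟨j₀, hj₀M⟩, fun m hm => Nat.notMem_of_lt_sInf hm⟩
  have hjle : j ≤ j₀ := not_lt.1 fun h => hjmin j₀ h hj₀M
  obtain ⟨hj0, hjlen, hjsup⟩ := hjM
  have hjlt : j < q₂.length := lt_of_le_of_lt hjle hj₀lt
  have hv'b2 : q₂.getVert j ≠ b₂ := by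
    intro h
    have := path_getVert_inj hp₂ j hjlen q₂.length le_rfl (by rw [q₂.getVert_length]; exact h)
    omega
  have hv'z : q₂.getVert j ≠ z := by
    intro h
    have := path_getVert_inj hp₂ j hjlen 0 (by omega) (by rw [q₂.getVert_zero]; exact h)
    omega
  have hv'b1 : q₂.getVert j ≠ b₁ := by
    intro h
    exact hi₂ _ (getVert_mem_support' q₂ hjlen) hv'b2 (h ▸ hE₁)
  obtain ⟨i, hgi, hile⟩ := Walk.mem_support_iff_exists_getVert.1 hjsup
  have hi0 : 0 < i := by
    rcases Nat.eq_zero_or_pos i with rfl | h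
    · exact absurd (by rw [← hgi, q₁.getVert_zero]) (Ne.symm hv'z)
    · exact h
  have hilt : i < q₁.length := by
    rcases lt_or_eq_of_le hile with h | h
    · exact h
    · exact absurd (by rw [← hgi, h, q₁.getVert_length]) (Ne.symm hv'b1)
  have hne : ¬ Essential G (q₂.getVert j) := hi₂ _ (getVert_mem_support' q₂ hjlen) hv'b2
  have hprevadj : G.Adj (q₂.getVert j) (q₂.getVert (j - 1)) := by
    have := q₂.adj_getVert_succ (i := j - 1) (by omega)
    rw [show j - 1 + 1 = j by omega] at this
    exact this.symm
  have hprev := interior_adj hp₁ hdeg hi0 hilt (hgi ▸ hne) _ (hgi ▸ hprevadj)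
  by_cases hj1 : j = 1
  · have hzprev : q₂.getVert (j - 1) = z := by rw [hj1]; exact q₂.getVert_zero
    rcases hprev with h | h
    · have h0 : (0 : ℕ) = i - 1 := path_getVert_inj hp₁ 0 (by omega) (i - 1) (by omega)
        (by rw [q₁.getVert_zero, ← h, hzprev])
      have hi1 : i = 1 := by omega
      rw [hi1] at hgi
      rw [hj1] at hgi
      exact hsec hgi
    · have h0 : (0 : ℕ) = i + 1 := path_getVert_inj hp₁ 0 (by omega) (i + 1) (by omega)
        (by rw [q₁.getVert_zero, ← h, hzprev])
      omega
  · have hmem : j - 1 ∈ M := by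
      refine ⟨by omega, by omega, ?_⟩
      rcases hprev with h | h
      · rw [h]; exact getVert_mem_support' q₁ (by omega)
      · rw [h]; exact getVert_mem_support' q₁ (by omega)
    exact hjmin (j - 1) (by omega) hmem

lemma not_in_B_case {B : Set V}
    (hBess : ∀ b ∈ B, Essential G b) (hB1 : CondB1 G B) (hB2 : CondB2 G B)
    {z t : V} (ht : Essential G t) (htB : t ∉ B) (W : G.Walk z t)
    (hW : ∀ v ∈ W.support, v ≠ t → ¬ Essential G v) :
    ∃ c₁ c₂ : V, c₁ ≠ c₂ ∧ Essential G c₁ ∧ Essential G c₂ ∧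
      ∃ b ∈ B, z ∉ ({c₁, c₂} : Set V) ∧ b ∉ ({c₁, c₂} : Set V) ∧
        ¬ AvoidReach G {c₁, c₂} z b := by
  have hne : B ∪ {t} ≠ B := fun h => htB (h ▸ Set.mem_union_right _ rfl)
  have hnB1 : ¬ CondB1 G (B ∪ {t}) := by
    intro hB1'
    exact hne (hB2 _ Set.subset_union_left
      (by rintro b (hb | rfl); exacts [hBess b hb, ht]) hB1')
  unfold CondB1 at hnB1
  push_neg at hnB1
  obtain ⟨c₁, c₂, hc, hE1, hE2, x, hx, y, hy, hxc, hyc, hnav⟩ := hnB1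
  have hARzt : t ∉ ({c₁, c₂} : Set V) → AvoidReach G {c₁, c₂} z t := by
    intro htc
    refine ⟨W, fun v hv => ?_⟩
    by_cases hvt : v = t
    · exact hvt ▸ htc
    · intro hvS
      have hvE : ¬ Essential G v := hW v hv hvt
      rcases hvS with rfl | hvS
      · exact hvE hE1
      · exact hvE ((Set.mem_singleton_iff.1 hvS) ▸ hE2)
  rcases hx with hxB | hxt
  · rcases hy with hyB | hyt
    · exact absurd (hB1 c₁ c₂ hc hE1 hE2 x hxB y hyB hxc hyc) hnav
    · have hyt' : y = t := hyt
      rw [hyt'] at hnav hyc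
      have hAR := hARzt hyc
      have hzn : z ∉ ({c₁, c₂} : Set V) := by
        obtain ⟨p, hp⟩ := hAR
        exact hp z p.start_mem_support
      refine ⟨c₁, c₂, hc, hE1, hE2, x, hxB, hzn, hxc, fun h => hnav ?_⟩
      exact avoid_trans (avoid_symm h) hAR
  · have hxt' : x = t := hxt
    rw [hxt'] at hnav hxc
    rcases hy with hyB | hyt
    · have hAR := hARzt hxc
      have hzn : z ∉ ({c₁, c₂} : Set V) := by
        obtain ⟨p, hp⟩ := hAR
        exact hp z p.start_mem_support
      refine ⟨c₁, c₂, hc, hE1, hE2, y, hyB, hzn, hyc, fun h => hnav ?_⟩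
      exact avoid_trans (avoid_symm hAR) h
    · have hyt' : y = t := hyt
      rw [hyt'] at hnav
      exact absurd (avoid_refl hxc) hnav

end Aux3
/-- For `B` satisfying (B1), (B2) with `|B| ≥ 2` and a vertex `z ∉ B`:
either some pair of essential vertices separates `z` from some `b ∈ B`, or `z` has
valence `2` and lies in the interior of a branch between two vertices of `B`. -/
theorem vertex_outside_condB (G : SimpleGraph V) [Fintype V]
    (hconn : G.Connected) (htf : G.CliqueFree 3)
    (hvtx : NoSepVertex G) (hedge : NoSepEdge G)
    (B : Set V) (hBess : ∀ b ∈ B, Essential G b)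
    (hB1 : CondB1 G B) (hB2 : CondB2 G B) (hcard : 2 ≤ B.ncard)
    (z : V) (hz : z ∉ B) :
    (∃ c₁ c₂ : V, c₁ ≠ c₂ ∧ Essential G c₁ ∧ Essential G c₂ ∧
      ∃ b ∈ B, z ∉ ({c₁, c₂} : Set V) ∧ b ∉ ({c₁, c₂} : Set V) ∧
        ¬ AvoidReach G {c₁, c₂} z b) ∨
    ((G.neighborSet z).ncard = 2 ∧ ∃ b₁ ∈ B, ∃ b₂ ∈ B, ∃ p : G.Walk b₁ b₂,
      IsBranch G p ∧ z ∈ p.support ∧ z ≠ b₁ ∧ z ≠ b₂) := by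
  classical
  obtain ⟨b₀, b₀', hb₀, hb₀', hbne⟩ :=
    (Set.one_lt_ncard_iff (Set.toFinite B)).1 (by omega)
  have hEss : ∃ e, Essential G e := ⟨b₀, hBess b₀ hb₀⟩
  have hpre : G.Preconnected := hconn.preconnected
  have hadj_of_ne : ∀ v u : V, v ≠ u → ∃ c, G.Adj v c := by
    intro v u hvu
    obtain ⟨p⟩ := hpre v u
    cases p with
    | nil => exact absurd rfl hvu
    | cons h q => exact ⟨_, h⟩
  have hdeg : ∀ v, ¬ Essential G v → ∃ a c, a ≠ c ∧ G.neighborSet v = {a, c} := by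
    intro v hv
    have hfin : (G.neighborSet v).Finite := Set.toFinite _
    have hle : (G.neighborSet v).ncard ≤ 2 := by
      unfold Essential at hv; omega
    have hex : ∃ c, G.Adj v c := by
      rcases eq_or_ne v b₀ with rfl | h
      · exact hadj_of_ne v b₀' (fun h' => hbne h')
      · exact hadj_of_ne v b₀ h
    obtain ⟨c₀, hc₀⟩ := hex
    have h1 : 1 ≤ (G.neighborSet v).ncard := by
      rw [Nat.one_le_iff_ne_zero]
      intro h0
      have hemp := (Set.ncard_eq_zero hfin).1 h0
      exact absurd (hemp ▸ ((G.mem_neighborSet v c₀).2 hc₀)) (Set.notMem_empty c₀)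
    rcases Nat.lt_or_ge (G.neighborSet v).ncard 2 with h | h
    · exfalso
      obtain ⟨c, hc⟩ := Set.ncard_eq_one.1 (by omega : (G.neighborSet v).ncard = 1)
      have hvc : G.Adj v c := (G.mem_neighborSet v c).1 (by rw [hc]; rfl)
      obtain ⟨yB, hyB, hyc⟩ : ∃ y ∈ B, y ≠ c := by
        rcases eq_or_ne b₀ c with rfl | h'
        · exact ⟨b₀', hb₀', fun h'' => hbne h''.symm⟩
        · exact ⟨b₀, hb₀, h'⟩
      have hyv : yB ≠ v := fun h => hv (h ▸ hBess yB hyB)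
      have hvc' : v ≠ c := G.ne_of_adj hvc
      obtain ⟨q, hq⟩ := hvtx c v yB hvc' hyc
      cases q with
      | nil => exact hyv rfl
      | cons hadj r =>
        rename_i wv
        have hwc : wv = c := by
          have : wv ∈ G.neighborSet v := (G.mem_neighborSet v wv).2 hadj
          rw [hc] at this
          exact this
        exact hq wv (by rw [Walk.support_cons]; exact List.mem_cons_of_mem _ r.start_mem_support)
          (by rw [hwc]; rfl)
    · exact Set.ncard_eq_two.1 (by omega)
  by_cases hzE : Essential G z
  · left
    exact not_in_B_case hBess hB1 hB2 hzE hz Walk.nil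
      (by intro v hv hvz; simp only [Walk.support_nil, List.mem_singleton] at hv
          exact absurd hv hvz)
  -- z is non-essential, hence has exactly two neighbours
  obtain ⟨y₁, y₂, hy12, hnbr⟩ := hdeg z hzE
  have hadj1 : G.Adj z y₁ := (G.mem_neighborSet z y₁).1 (by rw [hnbr]; exact Or.inl rfl)
  have hadj2 : G.Adj z y₂ := (G.mem_neighborSet z y₂).1 (by rw [hnbr]; exact Or.inr rfl)
  have hncard : (G.neighborSet z).ncard = 2 := by rw [hnbr]; exact Set.ncard_pair hy12
  have build : ∀ (y : V), G.Adj z y → ∃ (b : V) (q : G.Walk z b), q.IsPath ∧ Essential G b ∧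
      (∀ v ∈ q.support, v ≠ b → ¬ Essential G v) ∧ 1 ≤ q.length ∧ q.getVert 1 = y := by
    intro y hadj
    have hp : (Walk.cons hadj Walk.nil).IsPath := by
      rw [Walk.isPath_def]
      simp [G.ne_of_adj hadj]
    obtain ⟨b, r, hpath, hb, hintr⟩ := ext_lemma hpre hdeg hEss (Fintype.card V)
      (Walk.cons hadj Walk.nil) hp (by simp)
      (by
        intro v hv hvy
        rw [Walk.support_cons] at hv
        rcases List.mem_cons.1 hv with rfl | hv'
        · exact hzE
        · exact absurd (by simpa using hv') hvy)
      (by simp)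
    rw [show (Walk.cons hadj Walk.nil).append r = Walk.cons hadj r by
      rw [Walk.cons_append, Walk.nil_append]] at hpath
    refine ⟨b, Walk.cons hadj r, hpath, hb, ?_, by simp, ?_⟩
    · intro v hv hvb
      rw [Walk.support_cons, List.mem_cons] at hv
      rcases hv with rfl | hv
      · exact hzE
      · exact hintr v hv hvb
    · rw [Walk.getVert_cons_succ, r.getVert_zero]
  obtain ⟨b₁, q₁, hq₁, hEb₁, hint₁, hlen₁, hgv₁⟩ := build y₁ hadj1
  obtain ⟨b₂, q₂, hq₂, hEb₂, hint₂, hlen₂, hgv₂⟩ := build y₂ hadj2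
  have hsec : q₁.getVert 1 ≠ q₂.getVert 1 := by rw [hgv₁, hgv₂]; exact hy12
  have hmeet := meet_lemma hdeg hq₁ hq₂ hint₁ hint₂ hEb₁ hEb₂ hsec
  have hzb₁ : z ≠ b₁ := fun h => hzE (h ▸ hEb₁)
  have hzb₂ : z ≠ b₂ := fun h => hzE (h ▸ hEb₂)
  have hbb : b₁ ≠ b₂ := by
    intro heq
    subst heq
    -- second vertex of a branch returning to b₁ at length 1
    have hsnd : ∀ (q : G.Walk z b₁), q.IsPath → 1 ≤ q.length → b₁ = q.getVert 1 →
        q.getVert (q.length - 1) = z := by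
      intro q hq hl h
      have h1 : q.length = 1 := path_getVert_inj hq q.length le_rfl 1 (by omega)
        (by rw [q.getVert_length]; exact h)
      rw [h1]
      exact q.getVert_zero
    have hu1adj : G.Adj (q₁.getVert (q₁.length - 1)) b₁ := by
      have := q₁.adj_getVert_succ (i := q₁.length - 1) (by omega)
      rwa [show q₁.length - 1 + 1 = q₁.length by omega, q₁.getVert_length] at this
    have hu2adj : G.Adj (q₂.getVert (q₂.length - 1)) b₁ := by
      have := q₂.adj_getVert_succ (i := q₂.length - 1) (by omega)
      rwa [show q₂.length - 1 + 1 = q₂.length by omega, q₂.getVert_length] at this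
    have hu12 : q₁.getVert (q₁.length - 1) ≠ q₂.getVert (q₂.length - 1) := by
      intro h
      by_cases h1 : q₁.getVert (q₁.length - 1) = z
      · -- both sides have length one, so y₁ = b₁ = y₂
        have hL1 : q₁.length = 1 := by
          have := path_getVert_inj hq₁ (q₁.length - 1) (by omega) 0 (by omega)
            (by rw [q₁.getVert_zero]; exact h1)
          omega
        have h11 : q₁.getVert 1 = b₁ := by rw [← hL1]; exact q₁.getVert_length
        have hy1b : y₁ = b₁ := by rw [← hgv₁]; exact h11
        have h2 : q₂.getVert (q₂.length - 1) = z := by rw [← h]; exact h1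
        have hL2 : q₂.length = 1 := by
          have := path_getVert_inj hq₂ (q₂.length - 1) (by omega) 0 (by omega)
            (by rw [q₂.getVert_zero]; exact h2)
          omega
        have h22 : q₂.getVert 1 = b₁ := by rw [← hL2]; exact q₂.getVert_length
        have hy2b : y₂ = b₁ := by rw [← hgv₂]; exact h22
        exact hy12 (by rw [hy1b, hy2b])
      · have hmem1 : q₁.getVert (q₁.length - 1) ∈ q₁.support :=
          getVert_mem_support' q₁ (by omega)
        have hmem2 : q₁.getVert (q₁.length - 1) ∈ q₂.support := by
          rw [h]; exact getVert_mem_support' q₂ (by omega)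
        rcases hmeet _ hmem1 hmem2 with h' | ⟨h', _⟩
        · exact h1 h'
        · have := path_getVert_inj hq₁ (q₁.length - 1) (by omega) q₁.length le_rfl
            (by rw [q₁.getVert_length]; exact h')
          omega
    obtain ⟨w, hwnb, hwu1, hwu2⟩ : ∃ w ∈ G.neighborSet b₁,
        w ≠ q₁.getVert (q₁.length - 1) ∧ w ≠ q₂.getVert (q₂.length - 1) := by
      by_contra hcon
      push_neg at hcon
      have hsub : G.neighborSet b₁ ⊆ {q₁.getVert (q₁.length - 1), q₂.getVert (q₂.length - 1)} := by
        intro w hw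
        by_cases h : w = q₁.getVert (q₁.length - 1)
        · exact Or.inl h
        · exact Or.inr (hcon w hw h)
      have hle := Set.ncard_le_ncard hsub (Set.toFinite _)
      have h2 : ({q₁.getVert (q₁.length - 1), q₂.getVert (q₂.length - 1)} : Set V).ncard ≤ 2 := by
        apply le_trans (Set.ncard_insert_le _ _)
        simp
      have h3 := hEb₁
      unfold Essential at h3
      omega
    have hwb : w ≠ b₁ := fun h => G.irrefl (h ▸ ((G.mem_neighborSet b₁ w).1 hwnb))
    -- the union of the two sides is closed under adjacency off b₁
    have hKcl : ∀ v ∈ {v | v ∈ q₁.support ∨ v ∈ q₂.support}, v ∉ ({b₁} : Set V) →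
        ∀ e, G.Adj v e → e ∈ {v | v ∈ q₁.support ∨ v ∈ q₂.support} := by
      intro v hv hvb e he
      have hvb' : v ≠ b₁ := fun h => hvb (h ▸ rfl)
      have hside : ∀ (q : G.Walk z b₁), q.IsPath →
          (∀ x ∈ q.support, x ≠ b₁ → ¬ Essential G x) → v ∈ q.support → v ≠ z →
          e ∈ q.support := by
        intro q hq hint hvq hvz
        obtain ⟨k, hk, hkle⟩ := Walk.mem_support_iff_exists_getVert.1 hvq
        have hk0 : 0 < k := by
          rcases Nat.eq_zero_or_pos k with rfl | h
          · exact absurd (by rw [← hk, q.getVert_zero]) (Ne.symm hvz)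
          · exact h
        have hklt : k < q.length := by
          rcases lt_or_eq_of_le hkle with h | h
          · exact h
          · exact absurd (by rw [← hk, h, q.getVert_length]) (Ne.symm hvb')
        rcases interior_adj hq hdeg hk0 hklt
            (hk ▸ hint v hvq hvb' : ¬ Essential G (q.getVert k)) e (hk ▸ he) with h | h
        · rw [h]; exact getVert_mem_support' q (by omega)
        · rw [h]; exact getVert_mem_support' q (by omega)
      by_cases hvz : v = z
      · subst hvz
        rcases adj_pair hnbr hadj1 hadj2 hy12 e he with rfl | rfl
        · exact Or.inl (by rw [← hgv₁]; exact getVert_mem_support' q₁ (by omega))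
        · exact Or.inr (by rw [← hgv₂]; exact getVert_mem_support' q₂ (by omega))
      · rcases hv with hv | hv
        · exact Or.inl (hside q₁ hq₁ hint₁ hv hvz)
        · exact Or.inr (hside q₂ hq₂ hint₂ hv hvz)
    obtain ⟨qw, hqw⟩ := hvtx b₁ z w hzb₁ hwb
    have hwK : w ∈ {v | v ∈ q₁.support ∨ v ∈ q₂.support} :=
      walk_closed_avoid (T := ({b₁} : Set V)) hKcl qw (Or.inl q₁.start_mem_support) hqw
    by_cases hwz : w = z
    · subst hwz
      have hbz : G.Adj w b₁ := ((G.mem_neighborSet b₁ w).1 hwnb).symm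
      rcases adj_pair hnbr hadj1 hadj2 hy12 b₁ hbz with h | h
      · exact hwu1 ((hsnd q₁ hq₁ hlen₁ (by rw [← hgv₁] at h; exact h)).symm)
      · exact hwu2 ((hsnd q₂ hq₂ hlen₂ (by rw [← hgv₂] at h; exact h)).symm)
    · have hsideC : ∀ (q : G.Walk z b₁), q.IsPath →
          (∀ x ∈ q.support, x ≠ b₁ → ¬ Essential G x) →
          w ≠ q.getVert (q.length - 1) → w ∈ q.support → False := by
        intro q hq hint hwu hw
        obtain ⟨k, hk, hkle⟩ := Walk.mem_support_iff_exists_getVert.1 hw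
        have hk0 : 0 < k := by
          rcases Nat.eq_zero_or_pos k with rfl | h
          · exact absurd (by rw [← hk, q.getVert_zero]) (Ne.symm hwz)
          · exact h
        have hklt : k < q.length := by
          rcases lt_or_eq_of_le hkle with h | h
          · exact h
          · exact absurd (by rw [← hk, h, q.getVert_length]) (Ne.symm hwb)
        have hadjwb : G.Adj (q.getVert k) b₁ := by
          rw [hk]; exact ((G.mem_neighborSet b₁ w).1 hwnb).symm
        rcases interior_adj hq hdeg hk0 hklt
            (hk ▸ hint w hw hwb : ¬ Essential G (q.getVert k)) b₁ hadjwb with h | h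
        · have := path_getVert_inj hq q.length le_rfl (k - 1) (by omega)
            (by rw [q.getVert_length]; exact h)
          omega
        · have hL := path_getVert_inj hq q.length le_rfl (k + 1) (by omega)
            (by rw [q.getVert_length]; exact h)
          exact hwu (by rw [← hk]; congr 1; omega)
      rcases hwK with hw | hw
      · exact hsideC q₁ hq₁ hint₁ hwu1 hw
      · exact hsideC q₂ hq₂ hint₂ hwu2 hw
  -- the two sides meet only at z
  have hdisj : ∀ v, v ∈ q₁.support → v ∈ q₂.support → v = z := by
    intro v h1 h2
    rcases hmeet v h1 h2 with h | ⟨h1', h2'⟩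
    · exact h
    · exact absurd (h1' ▸ h2' : b₁ = b₂) hbb
  -- assemble the branch
  have hP : (q₁.reverse.append q₂).IsPath := by
    rw [Walk.isPath_def, Walk.support_append, List.nodup_append]
    refine ⟨by rw [Walk.support_reverse]; exact List.nodup_reverse.2 hq₁.support_nodup,
      hq₂.support_nodup.tail, ?_⟩
    intro a ha a' ha' haa'
    subst haa'
    have ha1 : a ∈ q₁.support := by
      rw [Walk.support_reverse, List.mem_reverse] at ha; exact ha
    have ha2 : a ∈ q₂.support := List.mem_of_mem_tail ha'
    have haz : a = z := hdisj a ha1 ha2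
    subst haz
    have := hq₂.support_nodup
    rw [q₂.support_eq_cons, List.nodup_cons] at this
    exact this.1 ha'
  have hbranch : IsBranch G (q₁.reverse.append q₂) := by
    refine ⟨hP, hEb₁, hEb₂, ?_⟩
    intro v hv hv1 hv2
    rcases (Walk.mem_support_append_iff _ _).1 hv with h | h
    · rw [Walk.support_reverse, List.mem_reverse] at h
      exact hint₁ v h hv1
    · exact hint₂ v h hv2
  have hzP : z ∈ (q₁.reverse.append q₂).support :=
    (Walk.mem_support_append_iff _ _).2 (Or.inr q₂.start_mem_support)
  by_cases hb₁B : b₁ ∈ B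
  · by_cases hb₂B : b₂ ∈ B
    · right
      exact ⟨hncard, b₁, hb₁B, b₂, hb₂B, q₁.reverse.append q₂, hbranch, hzP, hzb₁, hzb₂⟩
    · left
      exact not_in_B_case hBess hB1 hB2 hEb₂ hb₂B q₂ hint₂
  · left
    exact not_in_B_case hBess hB1 hB2 hEb₁ hb₁B q₁ hint₁
end
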